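/- arXiv:2410.17568 — 5 statements merged into one kernel-verified Lean document; each statement's English description precedes it below -/
import Mathlib

section
/- For each parity class ∗ ∈ {odd, even}, the trace of the product Ê_{−1}(1)·Ê_{−2}(1)⋯Ê_{−r}(1)·D̂·Ê_1(c_1)·Ê_2(c_2)⋯Ê_r(c_r) of matrices indexed by 𝒞_∗ equals ∑_{J∈𝒞_∗} t_J · ∏_{k∈R_J^+} (1 + c_k). (Equation (5.84): the Coxeter–Toda Hamiltonians of the two half-spin representations of SO_{2r}.) -/
open Classical

noncomputable section

/-- `𝒞`: the collection of `r`-element subsets `I` of `{1,…,2r}` with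
`|I ∩ {k, 2r+1-k}| = 1` for every `k ∈ {1,…,r}`. -/
def CsetD (r : ℕ) : Finset (Finset ℕ) :=
  (Finset.Icc 1 (2 * r)).powerset.filter fun I =>
    I.card = r ∧ ∀ k ∈ Finset.Icc 1 r, (I ∩ {k, 2 * r + 1 - k}).card = 1

/-- `𝒞_odd`: the `I ∈ 𝒞` with `|I ∩ {r+1,…,2r}|` odd. -/
def CsetDodd (r : ℕ) : Finset (Finset ℕ) :=
  (CsetD r).filter fun I => Odd (I ∩ Finset.Icc (r + 1) (2 * r)).card

/-- `𝒞_even`: the `I ∈ 𝒞` with `|I ∩ {r+1,…,2r}|` even. -/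
def CsetDeven (r : ℕ) : Finset (Finset ℕ) :=
  (CsetD r).filter fun I => Even (I ∩ Finset.Icc (r + 1) (2 * r)).card

/-- `I ∈ I_k^+`. -/
def IkpD (r k : ℕ) (I : Finset ℕ) : Prop :=
  if k = r then r - 1 ∈ I ∧ r ∈ I else k ∈ I ∧ 2 * r - k ∈ I

/-- `I ∈ I_k^-`. -/
def IkmD (r k : ℕ) (I : Finset ℕ) : Prop :=
  if k = r then r + 1 ∈ I ∧ r + 2 ∈ I else k + 1 ∈ I ∧ 2 * r + 1 - k ∈ I

/-- The bijection `φ_k : I_k^+ → I_k^-`. -/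
def phiD (r k : ℕ) (I : Finset ℕ) : Finset ℕ :=
  if k = r then insert (r + 1) (insert (r + 2) ((I.erase (r - 1)).erase r))
  else insert (k + 1) (insert (2 * r + 1 - k) ((I.erase k).erase (2 * r - k)))

/-- `R_I^+ = {k ∈ {1,…,r} : I ∈ I_k^+}`. -/
def RIpD (r : ℕ) (I : Finset ℕ) : Finset ℕ := (Finset.Icc 1 r).filter fun k => IkpD r k I

/-- `R_I^- = {k ∈ {1,…,r} : I ∈ I_k^-}`. -/
def RImD (r : ℕ) (I : Finset ℕ) : Finset ℕ := (Finset.Icc 1 r).filter fun k => IkmD r k I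

/-- `t_I = (∏_{i∈R_I^+} t_i)/(∏_{i∈R_I^-} t_i)`. -/
def tID (r : ℕ) (t : ℕ → ℂ) (I : Finset ℕ) : ℂ :=
  (∏ i ∈ RIpD r I, t i) / ∏ i ∈ RImD r I, t i

/-- `Ê_k(a) = Id + a·∑_{J∈I_k^+∩𝒞_∗} e_{J,φ_k(J)}`, a matrix indexed by `𝒞_∗ = S`. -/
def EhatUpD (r : ℕ) (S : Finset (Finset ℕ)) (k : ℕ) (a : ℂ) :
    Matrix {I // I ∈ S} {I // I ∈ S} ℂ :=
  Matrix.of fun P Q : {I // I ∈ S} =>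
    (if P = Q then (1 : ℂ) else 0) +
      (if IkpD r k P.1 ∧ Q.1 = phiD r k P.1 then a else 0)

/-- `Ê_{-k}(b) = Id + b·∑_{J∈I_k^+∩𝒞_∗} e_{φ_k(J),J}`, a matrix indexed by `𝒞_∗ = S`. -/
def EhatLowD (r : ℕ) (S : Finset (Finset ℕ)) (k : ℕ) (b : ℂ) :
    Matrix {I // I ∈ S} {I // I ∈ S} ℂ :=
  Matrix.of fun P Q : {I // I ∈ S} =>
    (if P = Q then (1 : ℂ) else 0) +
      (if IkpD r k Q.1 ∧ P.1 = phiD r k Q.1 then b else 0)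

/-- `D̂`, the diagonal matrix with `D̂_{I,I} = t_I`, indexed by `𝒞_∗ = S`. -/
def DhatD (r : ℕ) (S : Finset (Finset ℕ)) (t : ℕ → ℂ) : Matrix {I // I ∈ S} {I // I ∈ S} ℂ :=
  Matrix.diagonal fun P => tID r t P.1

def phiInvD (r k : ℕ) (Q : Finset ℕ) : Finset ℕ :=
  if k = r then insert (r - 1) (insert r ((Q.erase (r + 1)).erase (r + 2)))
  else insert k (insert (2 * r - k) ((Q.erase (k + 1)).erase (2 * r + 1 - k)))

def suppD (r k : ℕ) : Finset ℕ := if k = r then {r - 1, r} else {k, k + 1}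

section PartA

variable {r : ℕ} (hr : 4 ≤ r)

lemma pair_card (X : Finset ℕ) (a b : ℕ) (hab : a ≠ b) :
    (X ∩ {a, b}).card = 1 ↔ (a ∈ X ↔ ¬ b ∈ X) := by
  by_cases ha : a ∈ X <;> by_cases hb : b ∈ X
  · have : X ∩ {a, b} = {a, b} := by
      ext x; simp only [Finset.mem_inter, Finset.mem_insert, Finset.mem_singleton]
      constructor
      · tauto
      · rintro (rfl | rfl) <;> tauto
    rw [this]; simp [Finset.card_insert_of_notMem, hab]; tauto
  · have : X ∩ {a, b} = {a} := by
      ext x; simp only [Finset.mem_inter, Finset.mem_insert, Finset.mem_singleton]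
      constructor
      · rintro ⟨hx, rfl | rfl⟩ <;> tauto
      · rintro rfl; tauto
    rw [this]; simp; tauto
  · have : X ∩ {a, b} = {b} := by
      ext x; simp only [Finset.mem_inter, Finset.mem_insert, Finset.mem_singleton]
      constructor
      · rintro ⟨hx, rfl | rfl⟩ <;> tauto
      · rintro rfl; tauto
    rw [this]; simp; tauto
  · have : X ∩ {a, b} = ∅ := by
      ext x; simp only [Finset.mem_inter, Finset.mem_insert, Finset.mem_singleton,
        Finset.notMem_empty, iff_false, not_and]
      rintro hx (rfl | rfl) <;> tauto
    rw [this]; simp; tauto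

lemma mem_CsetD {X : Finset ℕ} :
    X ∈ CsetD r ↔ X ⊆ Finset.Icc 1 (2 * r) ∧ X.card = r ∧
      ∀ k, 1 ≤ k → k ≤ r → (k ∈ X ↔ ¬ (2 * r + 1 - k ∈ X)) := by
  constructor
  · rintro h
    simp only [CsetD, Finset.mem_filter, Finset.mem_powerset, Finset.mem_Icc] at h
    refine ⟨h.1, h.2.1, fun k hk1 hk2 => ?_⟩
    have := h.2.2 k ⟨hk1, hk2⟩
    rw [pair_card X k (2 * r + 1 - k) (by omega)] at this
    exact this
  · rintro ⟨h1, h2, h3⟩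
    simp only [CsetD, Finset.mem_filter, Finset.mem_powerset, Finset.mem_Icc]
    refine ⟨h1, h2, fun k hk => ?_⟩
    rw [pair_card X k (2 * r + 1 - k) (by omega)]
    exact h3 k hk.1 hk.2

lemma CsetD_subset {X : Finset ℕ} (hX : X ∈ CsetD r) : X ⊆ Finset.Icc 1 (2 * r) :=
  (mem_CsetD.1 hX).1

lemma CsetD_pair {X : Finset ℕ} (hX : X ∈ CsetD r) {k : ℕ} (h1 : 1 ≤ k) (h2 : k ≤ r) :
    k ∈ X ↔ ¬ (2 * r + 1 - k ∈ X) := (mem_CsetD.1 hX).2.2 k h1 h2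

lemma CsetD_pair' {X : Finset ℕ} (hX : X ∈ CsetD r) {a : ℕ} (h1 : r + 1 ≤ a) (h2 : a ≤ 2 * r) :
    a ∈ X ↔ ¬ (2 * r + 1 - a ∈ X) := by
  have h := (mem_CsetD.1 hX).2.2 (2 * r + 1 - a) (by omega) (by omega)
  rw [show 2 * r + 1 - (2 * r + 1 - a) = a by omega] at h
  tauto

/-- build a member of `CsetD` from subset + pairing, card is automatic -/
lemma mem_CsetD_of {Y : Finset ℕ} (hr : 1 ≤ r) (hsub : Y ⊆ Finset.Icc 1 (2 * r))
    (hpair : ∀ k, 1 ≤ k → k ≤ r → (k ∈ Y ↔ ¬ (2 * r + 1 - k ∈ Y))) : Y ∈ CsetD r := by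
  rw [mem_CsetD]
  refine ⟨hsub, ?_, hpair⟩
  have hY : Y = (Finset.Icc 1 r).biUnion (fun k => Y ∩ {k, 2 * r + 1 - k}) := by
    ext a
    simp only [Finset.mem_biUnion, Finset.mem_inter, Finset.mem_insert, Finset.mem_singleton,
      Finset.mem_Icc]
    constructor
    · intro ha
      have := hsub ha
      simp only [Finset.mem_Icc] at this
      by_cases hle : a ≤ r
      · exact ⟨a, ⟨by omega, hle⟩, ha, Or.inl rfl⟩
      · exact ⟨2 * r + 1 - a, ⟨by omega, by omega⟩, ha, Or.inr (by omega)⟩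
    · rintro ⟨k, _, ha, _⟩; exact ha
  have hdisj : ∀ x ∈ Finset.Icc 1 r, ∀ y ∈ Finset.Icc 1 r, x ≠ y →
      Disjoint (Y ∩ {x, 2 * r + 1 - x}) (Y ∩ {y, 2 * r + 1 - y}) := by
    intro x hx y hy hxy
    simp only [Finset.mem_Icc] at hx hy
    apply Finset.disjoint_left.2
    intro a ha ha'
    simp only [Finset.mem_inter, Finset.mem_insert, Finset.mem_singleton] at ha ha'
    rcases ha.2 with rfl | rfl <;> rcases ha'.2 with h | h <;> omega
  have hcard : Y.card = ∑ k ∈ Finset.Icc 1 r, (Y ∩ {k, 2 * r + 1 - k}).card := by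
    conv_lhs => rw [hY]
    exact Finset.card_biUnion hdisj
  rw [hcard]
  have : ∀ k ∈ Finset.Icc 1 r, (Y ∩ {k, 2 * r + 1 - k}).card = 1 := by
    intro k hk
    simp only [Finset.mem_Icc] at hk
    rw [pair_card Y k (2 * r + 1 - k) (by omega)]
    exact hpair k hk.1 hk.2
  rw [Finset.sum_congr rfl this]
  simp

lemma mem_suppD {m k : ℕ} : m ∈ suppD r k ↔ (if k = r then m = r - 1 ∨ m = r else m = k ∨ m = k + 1) := by
  unfold suppD
  split <;> simp

lemma charIkp (hr : 4 ≤ r) {X : Finset ℕ} (hX : X ∈ CsetD r) {k : ℕ} (h1 : 1 ≤ k) (h2 : k ≤ r) :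
    IkpD r k X ↔ (if k = r then (r - 1 ∈ X ∧ r ∈ X) else (k ∈ X ∧ ¬ (k + 1 ∈ X))) := by
  unfold IkpD
  split
  · rfl
  · rename_i hk
    have h3 : k ≤ r - 1 := by omega
    have := CsetD_pair hX (k := k + 1) (by omega) (by omega)
    rw [show 2 * r + 1 - (k + 1) = 2 * r - k by omega] at this
    tauto

lemma charIkm (hr : 4 ≤ r) {X : Finset ℕ} (hX : X ∈ CsetD r) {k : ℕ} (h1 : 1 ≤ k) (h2 : k ≤ r) :
    IkmD r k X ↔ (if k = r then (¬ (r - 1 ∈ X) ∧ ¬ (r ∈ X)) else (¬ (k ∈ X) ∧ k + 1 ∈ X)) := by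
  unfold IkmD
  split
  · rename_i hk
    have e1 := CsetD_pair hX (k := r) (by omega) (by omega)
    rw [show 2 * r + 1 - r = r + 1 by omega] at e1
    have e2 := CsetD_pair hX (k := r - 1) (by omega) (by omega)
    rw [show 2 * r + 1 - (r - 1) = r + 2 by omega] at e2
    tauto
  · rename_i hk
    have := CsetD_pair hX (k := k) (by omega) (by omega)
    tauto

lemma mem_phi (hr : 4 ≤ r) {k : ℕ} (h1 : 1 ≤ k) (h2 : k ≤ r) (X : Finset ℕ) (a : ℕ) :
    a ∈ phiD r k X ↔ (if k = r then (a = r + 1 ∨ a = r + 2 ∨ (a ∈ X ∧ a ≠ r - 1 ∧ a ≠ r))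
      else (a = k + 1 ∨ a = 2 * r + 1 - k ∨ (a ∈ X ∧ a ≠ k ∧ a ≠ 2 * r - k))) := by
  unfold phiD
  split <;> simp [Finset.mem_insert, Finset.mem_erase] <;> tauto

lemma mem_phiInv (hr : 4 ≤ r) {k : ℕ} (h1 : 1 ≤ k) (h2 : k ≤ r) (Q : Finset ℕ) (a : ℕ) :
    a ∈ phiInvD r k Q ↔ (if k = r then (a = r - 1 ∨ a = r ∨ (a ∈ Q ∧ a ≠ r + 1 ∧ a ≠ r + 2))
      else (a = k ∨ a = 2 * r - k ∨ (a ∈ Q ∧ a ≠ k + 1 ∧ a ≠ 2 * r + 1 - k))) := by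
  unfold phiInvD
  split <;> simp [Finset.mem_insert, Finset.mem_erase] <;> tauto

lemma phi_closure (hr : 4 ≤ r) {X : Finset ℕ} (hX : X ∈ CsetD r) {k : ℕ} (h1 : 1 ≤ k)
    (h2 : k ≤ r) (hk : IkpD r k X) : phiD r k X ∈ CsetD r := by
  have hsub := CsetD_subset hX
  apply mem_CsetD_of (by omega)
  · intro a ha
    rw [mem_phi hr h1 h2] at ha
    simp only [Finset.mem_Icc]
    split at ha
    · rcases ha with rfl | rfl | ⟨h, _⟩
      · omega
      · omega
      · have := hsub h; simp only [Finset.mem_Icc] at this; omega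
    · rcases ha with rfl | rfl | ⟨h, _⟩
      · omega
      · omega
      · have := hsub h; simp only [Finset.mem_Icc] at this; omega
  · intro j hj1 hj2
    rw [mem_phi hr h1 h2, mem_phi hr h1 h2]
    have hpj := CsetD_pair hX hj1 hj2
    unfold IkpD at hk
    split at hk
    · rename_i hkr
      have h5 := CsetD_pair hX (k := r) (by omega) (by omega)
      have h6 := CsetD_pair hX (k := r - 1) (by omega) (by omega)
      simp only [if_pos hkr]
      by_cases hj : j = r
      · rw [hj]
        rw [show 2 * r + 1 - r = r + 1 by omega]
        constructor
        · intro h; omega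
        · intro h; omega
      · by_cases hj' : j = r - 1
        · rw [hj']
          rw [show 2 * r + 1 - (r - 1) = r + 2 by omega]
          constructor
          · intro h; omega
          · intro h; omega
        · constructor
          · rintro (h | h | ⟨h, h3, h4⟩)
            · omega
            · omega
            · rw [hpj] at h
              rintro (h5 | h6 | ⟨h7, _, _⟩)
              · omega
              · omega
              · exact h h7
          · intro h
            have : ¬ (2 * r + 1 - j ∈ X ∧ 2 * r + 1 - j ≠ r - 1 ∧ 2 * r + 1 - j ≠ r) := by
              intro hc; apply h; right; right; exact hc
            right; right
            refine ⟨?_, by omega, by omega⟩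
            rw [hpj]
            intro hc
            apply this
            refine ⟨hc, by omega, by omega⟩
    · rename_i hkr
      simp only [if_neg hkr]
      have hk3 : k ≤ r - 1 := by omega
      have h5 := CsetD_pair hX (k := k) (by omega) (by omega)
      have h6 := CsetD_pair hX (k := k + 1) (by omega) (by omega)
      rw [show 2 * r + 1 - (k + 1) = 2 * r - k by omega] at h6
      by_cases hj : j = k
      · rw [hj]
        constructor
        · intro h; omega
        · intro h
          exfalso
          apply h
          right; left; omega
      · by_cases hj' : j = k + 1
        · rw [hj']
          rw [show 2 * r + 1 - (k + 1) = 2 * r - k by omega]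
          constructor
          · intro _ hc
            rcases hc with h | h | ⟨h, h3, h4⟩
            · omega
            · omega
            · exact h4 rfl
          · intro _; left; rfl
        · constructor
          · rintro (h | h | ⟨h, h3, h4⟩)
            · omega
            · omega
            · rw [hpj] at h
              rintro (h5' | h6' | ⟨h7, _, _⟩)
              · omega
              · omega
              · exact h h7
          · intro h
            have : ¬ (2 * r + 1 - j ∈ X ∧ 2 * r + 1 - j ≠ k ∧ 2 * r + 1 - j ≠ 2 * r - k) := by
              intro hc; apply h; right; right; exact hc
            right; right
            refine ⟨?_, by omega, by omega⟩
            rw [hpj]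
            intro hc
            apply this
            refine ⟨hc, by omega, by omega⟩
lemma phiInv_closure (hr : 4 ≤ r) {Q : Finset ℕ} (hQ : Q ∈ CsetD r) {k : ℕ} (h1 : 1 ≤ k)
    (h2 : k ≤ r) (hk : IkmD r k Q) : phiInvD r k Q ∈ CsetD r := by
  have hsub := CsetD_subset hQ
  rw [charIkm hr hQ h1 h2] at hk
  apply mem_CsetD_of (by omega)
  · intro a ha
    rw [mem_phiInv hr h1 h2] at ha
    simp only [Finset.mem_Icc]
    split at ha
    · rcases ha with rfl | rfl | ⟨h, _⟩
      · omega
      · omega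
      · have := hsub h; simp only [Finset.mem_Icc] at this; omega
    · rcases ha with rfl | rfl | ⟨h, _⟩
      · omega
      · omega
      · have := hsub h; simp only [Finset.mem_Icc] at this; omega
  · intro j hj1 hj2
    rw [mem_phiInv hr h1 h2, mem_phiInv hr h1 h2]
    have hpj := CsetD_pair hQ hj1 hj2
    split at hk
    · rename_i hkr
      simp only [if_pos hkr]
      by_cases hj : j = r
      · rw [hj, show 2 * r + 1 - r = r + 1 by omega]
        constructor
        · intro _
          rintro (h | h | ⟨h, hc, _⟩)
          · omega
          · omega
          · exact hc rfl
        · intro _; right; left; rfl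
      · by_cases hj' : j = r - 1
        · rw [hj', show 2 * r + 1 - (r - 1) = r + 2 by omega]
          constructor
          · intro _
            rintro (h | h | ⟨h, _, hc⟩)
            · omega
            · omega
            · exact hc rfl
          · intro _; left; rfl
        · constructor
          · rintro (h | h | ⟨h, h3, h4⟩)
            · omega
            · omega
            · rw [hpj] at h
              rintro (h5 | h6 | ⟨h7, _, _⟩)
              · omega
              · omega
              · exact h h7
          · intro h
            have : ¬ (2 * r + 1 - j ∈ Q ∧ 2 * r + 1 - j ≠ r + 1 ∧ 2 * r + 1 - j ≠ r + 2) := by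
              intro hc; apply h; right; right; exact hc
            right; right
            refine ⟨?_, by omega, by omega⟩
            rw [hpj]
            intro hc
            exact this ⟨hc, by omega, by omega⟩
    · rename_i hkr
      simp only [if_neg hkr]
      have hk3 : k ≤ r - 1 := by omega
      by_cases hj : j = k
      · rw [hj]
        constructor
        · intro _
          rintro (h | h | ⟨h, _, hc⟩)
          · omega
          · omega
          · apply hc; omega
        · intro _; left; rfl
      · by_cases hj' : j = k + 1
        · rw [hj', show 2 * r + 1 - (k + 1) = 2 * r - k by omega]
          constructor
          · rintro (h | h | ⟨h, hc, _⟩)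
            · omega
            · omega
            · exact absurd rfl hc
          · intro h
            exfalso
            apply h
            right; left; rfl
        · constructor
          · rintro (h | h | ⟨h, h3, h4⟩)
            · omega
            · omega
            · rw [hpj] at h
              rintro (h5 | h6 | ⟨h7, _, _⟩)
              · omega
              · omega
              · exact h h7
          · intro h
            have : ¬ (2 * r + 1 - j ∈ Q ∧ 2 * r + 1 - j ≠ k + 1 ∧ 2 * r + 1 - j ≠ 2 * r + 1 - k) := by
              intro hc; apply h; right; right; exact hc
            right; right
            refine ⟨?_, by omega, by omega⟩
            rw [hpj]
            intro hc
            exact this ⟨hc, by omega, by omega⟩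

lemma Ikm_phi {k : ℕ} (h2 : k ≤ r) (X : Finset ℕ) : IkmD r k (phiD r k X) := by
  unfold IkmD phiD
  split <;> simp

lemma Ikp_phiInv {k : ℕ} (h2 : k ≤ r) (Q : Finset ℕ) : IkpD r k (phiInvD r k Q) := by
  unfold IkpD phiInvD
  split <;> simp

lemma phi_phiInv (hr : 4 ≤ r) {Q : Finset ℕ} (hQ : Q ∈ CsetD r) {k : ℕ} (h1 : 1 ≤ k)
    (h2 : k ≤ r) (hk : IkmD r k Q) : phiD r k (phiInvD r k Q) = Q := by
  rw [charIkm hr hQ h1 h2] at hk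
  ext a
  rw [mem_phi hr h1 h2, mem_phiInv hr h1 h2]
  split at hk
  · rename_i hkr
    simp only [if_pos hkr]
    obtain ⟨hq1, hq2⟩ := hk
    have e1 := CsetD_pair hQ (k := r) (by omega) (by omega)
    have e2 := CsetD_pair hQ (k := r - 1) (by omega) (by omega)
    rw [show 2 * r + 1 - r = r + 1 by omega] at e1
    rw [show 2 * r + 1 - (r - 1) = r + 2 by omega] at e2
    have hq3 : r + 1 ∈ Q := by tauto
    have hq4 : r + 2 ∈ Q := by tauto
    constructor
    · rintro (rfl | rfl | ⟨(rfl | rfl | ⟨h, _, _⟩), h3, h4⟩)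
      · exact hq3
      · exact hq4
      · exact absurd rfl h3
      · exact absurd rfl h4
      · exact h
    · intro ha
      by_cases h : a = r + 1
      · left; exact h
      · by_cases h' : a = r + 2
        · right; left; exact h'
        · right; right
          refine ⟨Or.inr (Or.inr ⟨ha, h, h'⟩), ?_, ?_⟩
          · rintro rfl; exact hq1 ha
          · rintro rfl; exact hq2 ha
  · rename_i hkr
    simp only [if_neg hkr]
    obtain ⟨hq1, hq2⟩ := hk
    have hq3 : ¬ (2 * r - k ∈ Q) := by
      have e := CsetD_pair hQ (k := k + 1) (by omega) (by omega)
      rw [show 2 * r + 1 - (k + 1) = 2 * r - k by omega] at e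
      tauto
    have hq4 : 2 * r + 1 - k ∈ Q := by
      have e := CsetD_pair hQ (k := k) (by omega) (by omega)
      tauto
    constructor
    · rintro (rfl | rfl | ⟨(rfl | rfl | ⟨h, _, _⟩), h3, h4⟩)
      · exact hq2
      · exact hq4
      · exact absurd rfl h3
      · exact absurd rfl h4
      · exact h
    · intro ha
      by_cases h : a = k + 1
      · left; exact h
      · by_cases h' : a = 2 * r + 1 - k
        · right; left; exact h'
        · right; right
          refine ⟨Or.inr (Or.inr ⟨ha, h, h'⟩), ?_, ?_⟩
          · rintro rfl; exact hq1 ha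
          · rintro rfl; exact hq3 ha

lemma phiInv_phi (hr : 4 ≤ r) {X : Finset ℕ} (hX : X ∈ CsetD r) {k : ℕ} (h1 : 1 ≤ k)
    (h2 : k ≤ r) (hk : IkpD r k X) : phiInvD r k (phiD r k X) = X := by
  rw [charIkp hr hX h1 h2] at hk
  ext a
  rw [mem_phiInv hr h1 h2, mem_phi hr h1 h2]
  split at hk
  · rename_i hkr
    simp only [if_pos hkr]
    obtain ⟨hq1, hq2⟩ := hk
    have e1 := CsetD_pair hX (k := r) (by omega) (by omega)
    have e2 := CsetD_pair hX (k := r - 1) (by omega) (by omega)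
    rw [show 2 * r + 1 - r = r + 1 by omega] at e1
    rw [show 2 * r + 1 - (r - 1) = r + 2 by omega] at e2
    have hq3 : ¬ (r + 1 ∈ X) := by tauto
    have hq4 : ¬ (r + 2 ∈ X) := by tauto
    constructor
    · rintro (rfl | rfl | ⟨(rfl | rfl | ⟨h, _, _⟩), h3, h4⟩)
      · exact hq1
      · exact hq2
      · exact absurd rfl h3
      · exact absurd rfl h4
      · exact h
    · intro ha
      by_cases h : a = r - 1
      · left; exact h
      · by_cases h' : a = r
        · right; left; exact h'
        · right; right
          refine ⟨Or.inr (Or.inr ⟨ha, h, h'⟩), ?_, ?_⟩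
          · rintro rfl; exact hq3 ha
          · rintro rfl; exact hq4 ha
  · rename_i hkr
    simp only [if_neg hkr]
    obtain ⟨hq1, hq2⟩ := hk
    have hq4 : ¬ (2 * r + 1 - k ∈ X) := by
      have e := CsetD_pair hX (k := k) (by omega) (by omega)
      tauto
    have hq3 : 2 * r - k ∈ X := by
      have e := CsetD_pair hX (k := k + 1) (by omega) (by omega)
      rw [show 2 * r + 1 - (k + 1) = 2 * r - k by omega] at e
      tauto
    constructor
    · rintro (rfl | rfl | ⟨(rfl | rfl | ⟨h, _, _⟩), h3, h4⟩)
      · exact hq1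
      · exact hq3
      · exact absurd rfl h3
      · exact absurd rfl h4
      · exact h
    · intro ha
      by_cases h : a = k
      · left; exact h
      · by_cases h' : a = 2 * r - k
        · right; left; exact h'
        · right; right
          refine ⟨Or.inr (Or.inr ⟨ha, h, h'⟩), ?_, ?_⟩
          · rintro rfl; exact hq2 ha
          · rintro rfl; exact hq4 ha

lemma phi_small (hr : 4 ≤ r) {X : Finset ℕ} (hX : X ∈ CsetD r) {k : ℕ} (h1 : 1 ≤ k)
    (h2 : k ≤ r) (hk : IkpD r k X) {m : ℕ} (hm1 : 1 ≤ m) (hm2 : m ≤ r) :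
    m ∈ phiD r k X ↔ ¬ (m ∈ X ↔ m ∈ suppD r k) := by
  rw [charIkp hr hX h1 h2] at hk
  rw [mem_phi hr h1 h2, mem_suppD]
  split at hk
  · rename_i hkr
    simp only [if_pos hkr]
    obtain ⟨hq1, hq2⟩ := hk
    by_cases h : m = r - 1
    · rw [h]
      constructor
      · rintro (h' | h' | ⟨_, hc, _⟩)
        · omega
        · omega
        · exact absurd rfl hc
      · intro hc; exfalso; apply hc; constructor
        · intro _; left; rfl
        · intro _; exact hq1
    · by_cases h' : m = r
      · rw [h']
        constructor
        · rintro (h'' | h'' | ⟨_, _, hc⟩)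
          · omega
          · omega
          · exact absurd rfl hc
        · intro hc; exfalso; apply hc; constructor
          · intro _; right; rfl
          · intro _; exact hq2
      · constructor
        · rintro (h'' | h'' | ⟨hm, _, _⟩)
          · omega
          · omega
          · intro hc
            rcases hc.1 hm with h3 | h3 <;> tauto
        · intro hc
          right; right
          refine ⟨?_, h, h'⟩
          by_contra hnm
          apply hc
          constructor
          · intro hm; exact absurd hm hnm
          · rintro (h3 | h3) <;> tauto
  · rename_i hkr
    simp only [if_neg hkr]
    obtain ⟨hq1, hq2⟩ := hk
    by_cases h : m = k
    · rw [h]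
      constructor
      · rintro (h' | h' | ⟨_, hc, _⟩)
        · omega
        · omega
        · exact absurd rfl hc
      · intro hc; exfalso; apply hc; constructor
        · intro _; left; rfl
        · intro _; exact hq1
    · by_cases h' : m = k + 1
      · rw [h']
        constructor
        · intro _
          intro hc
          exact hq2 (hc.2 (Or.inr rfl))
        · intro _; left; rfl
      · constructor
        · rintro (h'' | h'' | ⟨hm, _, _⟩)
          · omega
          · omega
          · intro hc
            rcases hc.1 hm with h3 | h3 <;> tauto
        · intro hc
          right; right
          refine ⟨?_, h, by omega⟩
          by_contra hnm
          apply hc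
          constructor
          · intro hm; exact absurd hm hnm
          · rintro (h3 | h3) <;> tauto

lemma eq_of_small {X Y : Finset ℕ} (hX : X ∈ CsetD r) (hY : Y ∈ CsetD r)
    (h : ∀ m, 1 ≤ m → m ≤ r → (m ∈ X ↔ m ∈ Y)) : X = Y := by
  ext a
  by_cases ha : 1 ≤ a ∧ a ≤ r
  · exact h a ha.1 ha.2
  · by_cases ha' : r + 1 ≤ a ∧ a ≤ 2 * r
    · rw [CsetD_pair' hX ha'.1 ha'.2, CsetD_pair' hY ha'.1 ha'.2]
      rw [h (2 * r + 1 - a) (by omega) (by omega)]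
    · constructor
      · intro hc
        have := CsetD_subset hX hc
        simp only [Finset.mem_Icc] at this
        omega
      · intro hc
        have := CsetD_subset hY hc
        simp only [Finset.mem_Icc] at this
        omega

lemma supp_disjoint (hr : 4 ≤ r) {X : Finset ℕ} (hX : X ∈ CsetD r) {j k : ℕ}
    (hj1 : 1 ≤ j) (hj2 : j ≤ r) (hk1 : 1 ≤ k) (hk2 : k ≤ r)
    (hIj : IkpD r j X) (hIk : IkpD r k X) {m : ℕ}
    (hmj : m ∈ suppD r j) (hmk : m ∈ suppD r k) : j = k := by
  rw [charIkp hr hX hj1 hj2] at hIj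
  rw [charIkp hr hX hk1 hk2] at hIk
  rw [mem_suppD] at hmj hmk
  by_cases hjr : j = r <;> by_cases hkr : k = r
  · omega
  · rw [if_pos hjr] at hmj
    rw [if_neg hkr] at hmk
    rw [if_pos hjr] at hIj
    rw [if_neg hkr] at hIk
    exfalso
    have hk3 : k + 1 ≤ r := by omega
    rcases hmk with h0 | h0
    · have : k + 1 = r := by omega
      apply hIk.2
      rw [this]
      exact hIj.2
    · rcases hmj with h' | h'
      · have : k + 1 = r - 1 := by omega
        apply hIk.2
        rw [this]
        exact hIj.1
      · have : k + 1 = r := by omega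
        apply hIk.2
        rw [this]
        exact hIj.2
  · rw [if_neg hjr] at hmj
    rw [if_pos hkr] at hmk
    rw [if_neg hjr] at hIj
    rw [if_pos hkr] at hIk
    exfalso
    have hj3 : j + 1 ≤ r := by omega
    rcases hmj with h0 | h0
    · have : j + 1 = r := by omega
      apply hIj.2
      rw [this]
      exact hIk.2
    · rcases hmk with h' | h'
      · have : j + 1 = r - 1 := by omega
        apply hIj.2
        rw [this]
        exact hIk.1
      · have : j + 1 = r := by omega
        apply hIj.2
        rw [this]
        exact hIk.2
  · rw [if_neg hjr] at hmj hIj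
    rw [if_neg hkr] at hmk hIk
    by_cases hjk : j = k
    · exact hjk
    · exfalso
      by_cases h1' : j = k + 1
      · apply hIk.2
        rw [← h1']
        exact hIj.1
      · by_cases h2' : k = j + 1
        · apply hIj.2
          rw [← h2']
          exact hIk.1
        · omega

lemma Ikp_congr_small (hr : 4 ≤ r) {X Y : Finset ℕ} (hX : X ∈ CsetD r) (hY : Y ∈ CsetD r)
    {k : ℕ} (h1 : 1 ≤ k) (h2 : k ≤ r)
    (hagree : ∀ m, m ∈ suppD r k → (m ∈ X ↔ m ∈ Y)) (h : IkpD r k X) : IkpD r k Y := by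
  rw [charIkp hr hX h1 h2] at h
  rw [charIkp hr hY h1 h2]
  split at h <;> rename_i hkr
  · rw [if_pos hkr]
    have e1 := hagree (r - 1) (by rw [mem_suppD, if_pos hkr]; left; rfl)
    have e2 := hagree r (by rw [mem_suppD, if_pos hkr]; right; rfl)
    tauto
  · rw [if_neg hkr]
    have e1 := hagree k (by rw [mem_suppD, if_neg hkr]; left; rfl)
    have e2 := hagree (k + 1) (by rw [mem_suppD, if_neg hkr]; right; rfl)
    tauto

lemma phi_upper_card (hr : 4 ≤ r) {X : Finset ℕ} (hX : X ∈ CsetD r) {k : ℕ} (h1 : 1 ≤ k)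
    (h2 : k ≤ r) (hk : IkpD r k X) :
    (phiD r k X ∩ Finset.Icc (r + 1) (2 * r)).card = (X ∩ Finset.Icc (r + 1) (2 * r)).card ∨
    (phiD r k X ∩ Finset.Icc (r + 1) (2 * r)).card = (X ∩ Finset.Icc (r + 1) (2 * r)).card + 2 := by
  rw [charIkp hr hX h1 h2] at hk
  split at hk <;> rename_i hkr
  · right
    obtain ⟨hq1, hq2⟩ := hk
    have e1 := CsetD_pair hX (k := r) (by omega) (by omega)
    have e2 := CsetD_pair hX (k := r - 1) (by omega) (by omega)
    rw [show 2 * r + 1 - r = r + 1 by omega] at e1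
    rw [show 2 * r + 1 - (r - 1) = r + 2 by omega] at e2
    have hq3 : ¬ (r + 1 ∈ X) := by tauto
    have hq4 : ¬ (r + 2 ∈ X) := by tauto
    have hset : phiD r k X ∩ Finset.Icc (r + 1) (2 * r) =
        insert (r + 1) (insert (r + 2) (X ∩ Finset.Icc (r + 1) (2 * r))) := by
      ext a
      simp only [Finset.mem_inter, Finset.mem_Icc, Finset.mem_insert]
      rw [mem_phi hr h1 h2, if_pos hkr]
      constructor
      · rintro ⟨(rfl | rfl | ⟨h, _, _⟩), hb⟩
        · left; rfl
        · right; left; rfl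
        · right; right; exact ⟨h, hb⟩
      · rintro (rfl | rfl | ⟨h, hb⟩)
        · exact ⟨Or.inl rfl, by omega, by omega⟩
        · exact ⟨Or.inr (Or.inl rfl), by omega, by omega⟩
        · exact ⟨Or.inr (Or.inr ⟨h, by omega, by omega⟩), hb⟩
    have hn1 : r + 2 ∉ X ∩ Finset.Icc (r + 1) (2 * r) := by
      simp only [Finset.mem_inter]
      tauto
    have hn2 : r + 1 ∉ insert (r + 2) (X ∩ Finset.Icc (r + 1) (2 * r)) := by
      simp only [Finset.mem_insert, Finset.mem_inter]
      push_neg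
      exact ⟨by omega, fun hc => absurd hc hq3⟩
    rw [hset, Finset.card_insert_of_notMem hn2, Finset.card_insert_of_notMem hn1]
  · left
    obtain ⟨hq1, hq2⟩ := hk
    have hq4 : ¬ (2 * r + 1 - k ∈ X) := by
      have e := CsetD_pair hX (k := k) (by omega) (by omega)
      tauto
    have hq3 : 2 * r - k ∈ X := by
      have e := CsetD_pair hX (k := k + 1) (by omega) (by omega)
      rw [show 2 * r + 1 - (k + 1) = 2 * r - k by omega] at e
      tauto
    have hset : phiD r k X ∩ Finset.Icc (r + 1) (2 * r) =
        insert (2 * r + 1 - k) ((X ∩ Finset.Icc (r + 1) (2 * r)).erase (2 * r - k)) := by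
      ext a
      simp only [Finset.mem_inter, Finset.mem_Icc, Finset.mem_insert, Finset.mem_erase]
      rw [mem_phi hr h1 h2, if_neg hkr]
      constructor
      · rintro ⟨(rfl | rfl | ⟨h, h3, h4⟩), hb⟩
        · omega
        · left; rfl
        · right; exact ⟨h4, h, hb⟩
      · rintro (rfl | ⟨h4, h, hb⟩)
        · exact ⟨Or.inr (Or.inl rfl), by omega, by omega⟩
        · exact ⟨Or.inr (Or.inr ⟨h, by omega, h4⟩), hb⟩
    have hmem : 2 * r - k ∈ X ∩ Finset.Icc (r + 1) (2 * r) := by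
      simp only [Finset.mem_inter, Finset.mem_Icc]
      exact ⟨hq3, by omega, by omega⟩
    have hn : 2 * r + 1 - k ∉ (X ∩ Finset.Icc (r + 1) (2 * r)).erase (2 * r - k) := by
      simp only [Finset.mem_erase, Finset.mem_inter]
      rintro ⟨_, hc, _⟩
      exact hq4 hc
    have hpos : 0 < (X ∩ Finset.Icc (r + 1) (2 * r)).card :=
      Finset.card_pos.2 ⟨2 * r - k, hmem⟩
    rw [hset, Finset.card_insert_of_notMem hn, Finset.card_erase_of_mem hmem]
    omega

end PartA

def IncP (r : ℕ) : ℕ → Finset ℕ → Finset ℕ → Finset ℕ → Prop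
  | 0, B, P, Q => B = ∅ ∧ P = Q
  | n + 1, B, P, Q => (n + 1 ∉ B ∧ IncP r n B P Q) ∨
      (n + 1 ∈ B ∧ IkmD r (n + 1) Q ∧ IncP r n (B.erase (n + 1)) P (phiInvD r (n + 1) Q))

def DecP (r : ℕ) : ℕ → Finset ℕ → Finset ℕ → Finset ℕ → Prop
  | 0, A, P, Q => A = ∅ ∧ P = Q
  | n + 1, A, P, Q => (n + 1 ∉ A ∧ DecP r n A P Q) ∨
      (n + 1 ∈ A ∧ IkpD r (n + 1) P ∧ DecP r n (A.erase (n + 1)) (phiD r (n + 1) P) Q)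

section PartB

variable {r : ℕ}

lemma suppD_bounds (hr : 4 ≤ r) {k m : ℕ} (h1 : 1 ≤ k) (h2 : k ≤ r)
    (hm : m ∈ suppD r k) : 1 ≤ m ∧ m ≤ r := by
  rw [mem_suppD] at hm
  split at hm <;> omega

lemma IncP_subset : ∀ {n B P Q}, IncP r n B P Q → B ⊆ Finset.Icc 1 n := by
  intro n
  induction n with
  | zero => intro B P Q h; rw [h.1]; intro x hx; simp at hx
  | succ n ih =>
    intro B P Q h
    rcases h with ⟨h1, h2⟩ | ⟨h1, _, h3⟩
    · exact (ih h2).trans (Finset.Icc_subset_Icc_right (by omega))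
    · intro x hx
      by_cases hx' : x = n + 1
      · simp [Finset.mem_Icc]; omega
      · have := ih h3 (Finset.mem_erase.2 ⟨hx', hx⟩)
        simp only [Finset.mem_Icc] at this ⊢
        omega

lemma DecP_subset : ∀ {n A P Q}, DecP r n A P Q → A ⊆ Finset.Icc 1 n := by
  intro n
  induction n with
  | zero => intro A P Q h; rw [h.1]; intro x hx; simp at hx
  | succ n ih =>
    intro A P Q h
    rcases h with ⟨h1, h2⟩ | ⟨h1, _, h3⟩
    · exact (ih h2).trans (Finset.Icc_subset_Icc_right (by omega))
    · intro x hx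
      by_cases hx' : x = n + 1
      · simp [Finset.mem_Icc]; omega
      · have := ih h3 (Finset.mem_erase.2 ⟨hx', hx⟩)
        simp only [Finset.mem_Icc] at this ⊢
        omega

lemma DecP_CsetD (hr : 4 ≤ r) : ∀ {n A P Q}, n ≤ r → P ∈ CsetD r → DecP r n A P Q →
    Q ∈ CsetD r := by
  intro n
  induction n with
  | zero => intro A P Q _ hP h; rw [← h.2]; exact hP
  | succ n ih =>
    intro A P Q hn hP h
    rcases h with ⟨_, h2⟩ | ⟨_, hIkp, h3⟩
    · exact ih (by omega) hP h2
    · exact ih (by omega) (phi_closure hr hP (by omega) (by omega) hIkp) h3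

lemma DecP_det : ∀ {n A P Q Q'}, DecP r n A P Q → DecP r n A P Q' → Q = Q' := by
  intro n
  induction n with
  | zero => intro A P Q Q' h h'; rw [← h.2, ← h'.2]
  | succ n ih =>
    intro A P Q Q' h h'
    rcases h with ⟨h1, h2⟩ | ⟨h1, _, h3⟩ <;> rcases h' with ⟨h1', h2'⟩ | ⟨h1', _, h3'⟩
    · exact ih h2 h2'
    · exact absurd h1' h1
    · exact absurd h1 h1'
    · exact ih h3 h3'

lemma iff_aux1 {a b q e s : Prop} (h1 : a ↔ ¬ (q ↔ s)) (h2 : (q ↔ b) ↔ e) (hs : s) :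
    (a ↔ b) ↔ ¬ e := by tauto

lemma iff_aux2 {a b q e s : Prop} (h1 : a ↔ ¬ (q ↔ s)) (h2 : (q ↔ b) ↔ e) (hns : ¬ s) :
    (a ↔ b) ↔ e := by tauto

lemma iff_aux3 {q p c e s : Prop} (h1 : c ↔ ¬ (p ↔ s)) (h2 : (q ↔ c) ↔ e) (hs : s) :
    (q ↔ p) ↔ ¬ e := by tauto

lemma iff_aux4 {q p c e s : Prop} (h1 : c ↔ ¬ (p ↔ s)) (h2 : (q ↔ c) ↔ e) (hns : ¬ s) :
    (q ↔ p) ↔ e := by tauto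

lemma T_inc (hr : 4 ≤ r) : ∀ {n B P Q}, n ≤ r → P ∈ CsetD r → Q ∈ CsetD r →
    IncP r n B P Q → ∀ m, 1 ≤ m → m ≤ r →
    ((m ∈ Q ↔ m ∈ P) ↔ Even ((B.filter (fun j => m ∈ suppD r j)).card)) := by
  intro n
  induction n with
  | zero =>
    intro B P Q _ _ _ h m _ _
    rw [h.1, ← h.2]
    simp
  | succ n ih =>
    intro B P Q hn hP hQ h m hm1 hm2
    rcases h with ⟨h1, h2⟩ | ⟨h1, hIkm, h3⟩
    · exact ih (by omega) hP hQ h2 m hm1 hm2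
    · have hQ' : phiInvD r (n + 1) Q ∈ CsetD r :=
        phiInv_closure hr hQ (by omega) (by omega) hIkm
      have hih := ih (by omega) hP hQ' h3 m hm1 hm2
      have hQQ : phiD r (n + 1) (phiInvD r (n + 1) Q) = Q :=
        phi_phiInv hr hQ (by omega) (by omega) hIkm
      have hmem : m ∈ Q ↔ ¬ (m ∈ phiInvD r (n + 1) Q ↔ m ∈ suppD r (n + 1)) := by
        conv_lhs => rw [← hQQ]
        exact phi_small hr hQ' (by omega) (by omega) (Ikp_phiInv (by omega) Q) hm1 hm2
      have hBi : B = insert (n + 1) (B.erase (n + 1)) := (Finset.insert_erase h1).symm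
      have hfilt : (B.filter (fun j => m ∈ suppD r j)) =
          if m ∈ suppD r (n + 1) then
            insert (n + 1) ((B.erase (n + 1)).filter (fun j => m ∈ suppD r j))
          else (B.erase (n + 1)).filter (fun j => m ∈ suppD r j) := by
        conv_lhs => rw [hBi]
        exact Finset.filter_insert _ _ _
      by_cases hs : m ∈ suppD r (n + 1)
      · rw [hfilt, if_pos hs]
        rw [Finset.card_insert_of_notMem (by
          simp only [Finset.mem_filter]
          rintro ⟨hc, _⟩
          exact (Finset.notMem_erase _ _) hc)]
        rw [Nat.even_add_one]
        exact iff_aux1 hmem hih hs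
      · rw [hfilt, if_neg hs]
        exact iff_aux2 hmem hih hs

lemma T_dec (hr : 4 ≤ r) : ∀ {n A P Q}, n ≤ r → P ∈ CsetD r →
    DecP r n A P Q → ∀ m, 1 ≤ m → m ≤ r →
    ((m ∈ Q ↔ m ∈ P) ↔ Even ((A.filter (fun j => m ∈ suppD r j)).card)) := by
  intro n
  induction n with
  | zero =>
    intro A P Q _ _ h m _ _
    rw [h.1, ← h.2]
    simp
  | succ n ih =>
    intro A P Q hn hP h m hm1 hm2
    rcases h with ⟨h1, h2⟩ | ⟨h1, hIkp, h3⟩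
    · exact ih (by omega) hP h2 m hm1 hm2
    · have hP' : phiD r (n + 1) P ∈ CsetD r :=
        phi_closure hr hP (by omega) (by omega) hIkp
      have hih := ih (by omega) hP' h3 m hm1 hm2
      have hmem : m ∈ phiD r (n + 1) P ↔ ¬ (m ∈ P ↔ m ∈ suppD r (n + 1)) :=
        phi_small hr hP (by omega) (by omega) hIkp hm1 hm2
      have hBi : A = insert (n + 1) (A.erase (n + 1)) := (Finset.insert_erase h1).symm
      have hfilt : (A.filter (fun j => m ∈ suppD r j)) =
          if m ∈ suppD r (n + 1) then
            insert (n + 1) ((A.erase (n + 1)).filter (fun j => m ∈ suppD r j))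
          else (A.erase (n + 1)).filter (fun j => m ∈ suppD r j) := by
        conv_lhs => rw [hBi]
        exact Finset.filter_insert _ _ _
      by_cases hs : m ∈ suppD r (n + 1)
      · rw [hfilt, if_pos hs]
        rw [Finset.card_insert_of_notMem (by
          simp only [Finset.mem_filter]
          rintro ⟨hc, _⟩
          exact (Finset.notMem_erase _ _) hc)]
        rw [Nat.even_add_one]
        exact iff_aux3 hmem hih hs
      · rw [hfilt, if_neg hs]
        exact iff_aux4 hmem hih hs

end PartB
section PartB2

variable {r : ℕ}

lemma IncFact (hr : 4 ≤ r) : ∀ {n B P Q k}, n ≤ r → P ∈ CsetD r → Q ∈ CsetD r →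
    IncP r n B P Q → k ∈ B → ∃ X, X ∈ CsetD r ∧ IkpD r k X ∧
      ∀ m, 1 ≤ m → m ≤ r → ((m ∈ X ↔ m ∈ P) ↔
        Even (((B.filter (fun j => j < k)).filter (fun j => m ∈ suppD r j)).card)) := by
  intro n
  induction n with
  | zero => intro B P Q k _ _ _ h hk; rw [h.1] at hk; simp at hk
  | succ n ih =>
    intro B P Q k hn hP hQ h hk
    rcases h with ⟨h1, h2⟩ | ⟨h1, hIkm, h3⟩
    · exact ih (by omega) hP hQ h2 hk
    · have hQ' : phiInvD r (n + 1) Q ∈ CsetD r :=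
        phiInv_closure hr hQ (by omega) (by omega) hIkm
      have hBsub := IncP_subset h3
      by_cases hkn : k = n + 1
      · refine ⟨phiInvD r (n + 1) Q, hQ', by rw [hkn]; exact Ikp_phiInv (by omega) Q, ?_⟩
        have hBf : B.filter (fun j => j < k) = B.erase (n + 1) := by
          ext j
          simp only [Finset.mem_filter, Finset.mem_erase]
          constructor
          · intro ⟨hj, hj2⟩; exact ⟨by omega, hj⟩
          · intro ⟨hj, hj2⟩
            refine ⟨hj2, ?_⟩
            have := hBsub (Finset.mem_erase.2 ⟨hj, hj2⟩)
            simp only [Finset.mem_Icc] at this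
            omega
        rw [hBf]
        exact T_inc hr (by omega) hP hQ' h3
      · have hk' : k ∈ B.erase (n + 1) := Finset.mem_erase.2 ⟨hkn, hk⟩
        obtain ⟨X, hX1, hX2, hX3⟩ := ih (by omega) hP hQ' h3 hk'
        refine ⟨X, hX1, hX2, ?_⟩
        have hkb : k ≤ n := by
          have := hBsub hk'
          simp only [Finset.mem_Icc] at this
          omega
        have : (B.erase (n + 1)).filter (fun j => j < k) = B.filter (fun j => j < k) := by
          ext j
          simp only [Finset.mem_filter, Finset.mem_erase]
          constructor
          · intro ⟨⟨_, hj⟩, hj2⟩; exact ⟨hj, hj2⟩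
          · intro ⟨hj, hj2⟩; exact ⟨⟨by omega, hj⟩, hj2⟩
        rw [← this]
        exact hX3

lemma DecFact (hr : 4 ≤ r) : ∀ {n A P Q k}, n ≤ r → P ∈ CsetD r →
    DecP r n A P Q → k ∈ A → ∃ Y, Y ∈ CsetD r ∧ IkpD r k Y ∧
      ∀ m, 1 ≤ m → m ≤ r → ((m ∈ Y ↔ m ∈ P) ↔
        Even (((A.filter (fun j => k < j)).filter (fun j => m ∈ suppD r j)).card)) := by
  intro n
  induction n with
  | zero => intro A P Q k _ _ h hk; rw [h.1] at hk; simp at hk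
  | succ n ih =>
    intro A P Q k hn hP h hk
    rcases h with ⟨h1, h2⟩ | ⟨h1, hIkp, h3⟩
    · exact ih (by omega) hP h2 hk
    · have hP' : phiD r (n + 1) P ∈ CsetD r :=
        phi_closure hr hP (by omega) (by omega) hIkp
      have hAsub := DecP_subset h3
      by_cases hkn : k = n + 1
      · refine ⟨P, hP, by rw [hkn]; exact hIkp, ?_⟩
        intro m hm1 hm2
        have : A.filter (fun j => k < j) = ∅ := by
          rw [Finset.filter_eq_empty_iff]
          intro j hj
          by_cases hj' : j = n + 1
          · omega
          · have := hAsub (Finset.mem_erase.2 ⟨hj', hj⟩)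
            simp only [Finset.mem_Icc] at this
            omega
        rw [this]
        simp
      · have hk' : k ∈ A.erase (n + 1) := Finset.mem_erase.2 ⟨hkn, hk⟩
        obtain ⟨Y, hY1, hY2, hY3⟩ := ih (by omega) hP' h3 hk'
        refine ⟨Y, hY1, hY2, ?_⟩
        intro m hm1 hm2
        have hkb : k < n + 1 := by
          have := hAsub hk'
          simp only [Finset.mem_Icc] at this
          omega
        have hmem : m ∈ phiD r (n + 1) P ↔ ¬ (m ∈ P ↔ m ∈ suppD r (n + 1)) :=
          phi_small hr hP (by omega) (by omega) hIkp hm1 hm2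
        have hsplit : A.filter (fun j => k < j) =
            insert (n + 1) ((A.erase (n + 1)).filter (fun j => k < j)) := by
          conv_lhs => rw [(Finset.insert_erase h1).symm]
          rw [Finset.filter_insert, if_pos hkb]
        have hfilt : (A.filter (fun j => k < j)).filter (fun j => m ∈ suppD r j) =
            if m ∈ suppD r (n + 1) then
              insert (n + 1) (((A.erase (n + 1)).filter (fun j => k < j)).filter
                (fun j => m ∈ suppD r j))
            else ((A.erase (n + 1)).filter (fun j => k < j)).filter (fun j => m ∈ suppD r j) := by
          rw [hsplit]
          exact Finset.filter_insert _ _ _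
        have hih := hY3 m hm1 hm2
        by_cases hs : m ∈ suppD r (n + 1)
        · rw [hfilt, if_pos hs]
          rw [Finset.card_insert_of_notMem (by
            simp only [Finset.mem_filter, Finset.mem_erase]
            rintro ⟨⟨⟨hne, _⟩, _⟩, _⟩
            exact hne rfl)]
          rw [Nat.even_add_one]
          exact iff_aux3 (c := m ∈ phiD r (n+1) P) hmem hih hs
        · rw [hfilt, if_neg hs]
          exact iff_aux4 (c := m ∈ phiD r (n+1) P) hmem hih hs

lemma iff_aux5 {x c p s e q y : Prop} (e1 : (x ↔ c) ↔ e) (e3 : c ↔ ¬ (p ↔ s))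
    (e2 : (q ↔ p) ↔ e) (e4 : y ↔ ¬ (q ↔ s)) : x ↔ y := by tauto

lemma ExistsQ (hr : 4 ≤ r) : ∀ {n B P}, n ≤ r → P ∈ CsetD r → B ⊆ Finset.Icc 1 n →
    (∀ k ∈ B, IkpD r k P) → ∃ Q, Q ∈ CsetD r ∧ IncP r n B P Q ∧ DecP r n B P Q ∧
      ∀ m, 1 ≤ m → m ≤ r → ((m ∈ Q ↔ m ∈ P) ↔
        Even ((B.filter (fun j => m ∈ suppD r j)).card)) := by
  intro n
  induction n with
  | zero =>
    intro B P _ hP hB _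
    have hBe : B = ∅ := by
      rwa [Finset.Icc_eq_empty (by omega : ¬ (1:ℕ) ≤ 0), Finset.subset_empty] at hB
    refine ⟨P, hP, ⟨hBe, rfl⟩, ⟨hBe, rfl⟩, ?_⟩
    intro m _ _
    rw [hBe]
    simp
  | succ n ih =>
    intro B P hn hP hB hIkp
    by_cases hnb : n + 1 ∈ B
    · set B' := B.erase (n + 1) with hB'
      have hB'sub : B' ⊆ Finset.Icc 1 n := by
        intro j hj
        rw [Finset.mem_erase] at hj
        have := hB hj.2
        simp only [Finset.mem_Icc] at this ⊢
        have := hj.1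
        omega
      have hB'Ikp : ∀ k ∈ B', IkpD r k P := fun k hk => hIkp k (Finset.mem_erase.1 hk).2
      obtain ⟨Q', hQ'C, hInc', hDec', htrk'⟩ := ih (by omega) hP hB'sub hB'Ikp
      have hIkpk : IkpD r (n + 1) P := hIkp _ hnb
      have hbound : ∀ j ∈ B', 1 ≤ j ∧ j ≤ r := by
        intro j hj
        have := hB'sub hj
        simp only [Finset.mem_Icc] at this
        omega
      have hdisj : ∀ j ∈ B', ∀ m, m ∈ suppD r (n + 1) → ¬ (m ∈ suppD r j) := by
        intro j hj m hm hmj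
        have hbj := hbound j hj
        have := supp_disjoint hr hP hbj.1 hbj.2 (by omega) (by omega)
          (hIkp j (Finset.mem_erase.1 hj).2) hIkpk hmj hm
        exact (Finset.mem_erase.1 hj).1 this
      have hagree : ∀ m, m ∈ suppD r (n + 1) → (m ∈ P ↔ m ∈ Q') := by
        intro m hm
        have hmb := suppD_bounds hr (by omega) (by omega) hm
        have := htrk' m hmb.1 hmb.2
        have hempty : B'.filter (fun j => m ∈ suppD r j) = ∅ := by
          rw [Finset.filter_eq_empty_iff]
          intro j hj
          exact hdisj j hj m hm
        rw [hempty] at this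
        simp at this
        tauto
      have hIkpQ' : IkpD r (n + 1) Q' :=
        Ikp_congr_small hr hP hQ'C (by omega) (by omega) hagree hIkpk
      set Q := phiD r (n + 1) Q' with hQdef
      have hQC : Q ∈ CsetD r := phi_closure hr hQ'C (by omega) (by omega) hIkpQ'
      have hPhiP : phiD r (n + 1) P ∈ CsetD r := phi_closure hr hP (by omega) (by omega) hIkpk
      -- IncP
      have hInc : IncP r (n + 1) B P Q := by
        refine Or.inr ⟨hnb, Ikm_phi (by omega) Q', ?_⟩
        rw [phiInv_phi hr hQ'C (by omega) (by omega) hIkpQ']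
        exact hInc'
      -- second application of ih from phi P
      have hB'IkpPhi : ∀ k ∈ B', IkpD r k (phiD r (n + 1) P) := by
        intro j hj
        have hbj := hbound j hj
        apply Ikp_congr_small hr hP hPhiP hbj.1 hbj.2 _ (hB'Ikp j hj)
        intro m hm
        have hmb := suppD_bounds hr hbj.1 hbj.2 hm
        rw [phi_small hr hP (by omega) (by omega) hIkpk hmb.1 hmb.2]
        have : ¬ (m ∈ suppD r (n + 1)) := fun hc => hdisj j hj m hc hm
        tauto
      obtain ⟨Q'', hQ''C, hInc'', hDec'', htrk''⟩ := ih (by omega) hPhiP hB'sub hB'IkpPhi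
      have hQ''eq : Q'' = Q := by
        apply eq_of_small hQ''C hQC
        intro m hm1 hm2
        have e1 := htrk'' m hm1 hm2
        have e2 := htrk' m hm1 hm2
        have e3 : m ∈ phiD r (n + 1) P ↔ ¬ (m ∈ P ↔ m ∈ suppD r (n + 1)) :=
          phi_small hr hP (by omega) (by omega) hIkpk hm1 hm2
        have e4 : m ∈ Q ↔ ¬ (m ∈ Q' ↔ m ∈ suppD r (n + 1)) :=
          phi_small hr hQ'C (by omega) (by omega) hIkpQ' hm1 hm2
        exact iff_aux5 e1 e3 e2 e4
      have hDec : DecP r (n + 1) B P Q := by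
        refine Or.inr ⟨hnb, hIkpk, ?_⟩
        rw [← hQ''eq]
        exact hDec''
      refine ⟨Q, hQC, hInc, hDec, ?_⟩
      intro m hm1 hm2
      have e2 := htrk' m hm1 hm2
      have e4 : m ∈ Q ↔ ¬ (m ∈ Q' ↔ m ∈ suppD r (n + 1)) :=
        phi_small hr hQ'C (by omega) (by omega) hIkpQ' hm1 hm2
      have hfilt : (B.filter (fun j => m ∈ suppD r j)) =
          if m ∈ suppD r (n + 1) then
            insert (n + 1) (B'.filter (fun j => m ∈ suppD r j))
          else B'.filter (fun j => m ∈ suppD r j) := by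
        conv_lhs => rw [(Finset.insert_erase hnb).symm]
        exact Finset.filter_insert _ _ _
      by_cases hs : m ∈ suppD r (n + 1)
      · rw [hfilt, if_pos hs]
        rw [Finset.card_insert_of_notMem (by
          simp only [Finset.mem_filter]
          rintro ⟨hc, _⟩
          exact (Finset.notMem_erase _ _) hc)]
        rw [Nat.even_add_one]
        exact iff_aux1 e4 e2 hs
      · rw [hfilt, if_neg hs]
        exact iff_aux2 e4 e2 hs
    · have hBsub : B ⊆ Finset.Icc 1 n := by
        intro j hj
        have := hB hj
        simp only [Finset.mem_Icc] at this ⊢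
        have : j ≠ n + 1 := fun hc => hnb (hc ▸ hj)
        omega
      obtain ⟨Q, h1, h2, h3, h4⟩ := ih (by omega) hP hBsub hIkp
      exact ⟨Q, h1, Or.inl ⟨hnb, h2⟩, Or.inl ⟨hnb, h3⟩, h4⟩

end PartB2
section PartC

variable {r : ℕ}

lemma card_pair_split (C : Finset ℕ) (a b : ℕ) (hab : a ≠ b) :
    (C ∩ {a, b}).card = (if a ∈ C then 1 else 0) + (if b ∈ C then 1 else 0) := by
  rw [Finset.inter_comm, ← Finset.filter_mem_eq_inter]
  rw [show ({a, b} : Finset ℕ) = insert a {b} from rfl]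
  rw [Finset.filter_insert, Finset.filter_singleton]
  by_cases ha : a ∈ C <;> by_cases hb : b ∈ C <;>
    simp [ha, hb, Finset.card_insert_of_notMem, hab]

lemma card_triple_split (C : Finset ℕ) (a b c : ℕ) (hab : a ≠ b) (hac : a ≠ c) (hbc : b ≠ c) :
    (C ∩ {a, b, c}).card =
      (if a ∈ C then 1 else 0) + (if b ∈ C then 1 else 0) + (if c ∈ C then 1 else 0) := by
  rw [Finset.inter_comm, ← Finset.filter_mem_eq_inter]
  rw [show ({a, b, c} : Finset ℕ) = insert a (insert b {c}) from rfl]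
  rw [Finset.filter_insert, Finset.filter_insert, Finset.filter_singleton]
  by_cases ha : a ∈ C <;> by_cases hb : b ∈ C <;> by_cases hc : c ∈ C <;>
    simp [ha, hb, hc, Finset.card_insert_of_notMem, hab, hac, hbc] <;> omega

lemma even_card_pair (C : Finset ℕ) (a b : ℕ) (hab : a ≠ b) :
    Even ((C ∩ {a, b}).card) ↔ ((a ∈ C) ↔ (b ∈ C)) := by
  rw [card_pair_split C a b hab]
  by_cases ha : a ∈ C <;> by_cases hb : b ∈ C <;> simp [ha, hb] <;> decide

lemma even_card_triple (C : Finset ℕ) (a b c : ℕ) (hab : a ≠ b) (hac : a ≠ c) (hbc : b ≠ c) :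
    Even ((C ∩ {a, b, c}).card) ↔ (((a ∈ C) ↔ (b ∈ C)) ↔ ¬ (c ∈ C)) := by
  rw [card_triple_split C a b c hab hac hbc]
  by_cases ha : a ∈ C <;> by_cases hb : b ∈ C <;> by_cases hc : c ∈ C <;>
    simp [ha, hb, hc] <;> decide

lemma even_filter_supp (hr : 4 ≤ r) {C : Finset ℕ} (hC : C ⊆ Finset.Icc 1 r) {m : ℕ}
    (hm1 : 1 ≤ m) (hm2 : m ≤ r) :
    Even ((C.filter (fun j => m ∈ suppD r j)).card) ↔
      (if m = r then ((r - 1 ∈ C) ↔ (r ∈ C))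
       else if m = r - 1 then (((r - 2 ∈ C) ↔ (r - 1 ∈ C)) ↔ ¬ (r ∈ C))
       else ((m - 1 ∈ C) ↔ (m ∈ C))) := by
  have hset : C.filter (fun j => m ∈ suppD r j) =
      if m = r then C ∩ {r - 1, r}
      else if m = r - 1 then C ∩ {r - 2, r - 1, r}
      else C ∩ {m - 1, m} := by
    split_ifs with h1 h2
    · ext j
      simp only [Finset.mem_filter, mem_suppD, Finset.mem_inter, Finset.mem_insert,
        Finset.mem_singleton]
      constructor
      · rintro ⟨h, hc⟩
        refine ⟨h, ?_⟩
        have := Finset.mem_Icc.1 (hC h)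
        by_cases hj : j = r
        · omega
        · rw [if_neg hj] at hc; omega
      · rintro ⟨h, hc⟩
        refine ⟨h, ?_⟩
        have := Finset.mem_Icc.1 (hC h)
        by_cases hj : j = r
        · rw [if_pos hj]; omega
        · rw [if_neg hj]; omega
    · ext j
      simp only [Finset.mem_filter, mem_suppD, Finset.mem_inter, Finset.mem_insert,
        Finset.mem_singleton]
      constructor
      · rintro ⟨h, hc⟩
        refine ⟨h, ?_⟩
        have := Finset.mem_Icc.1 (hC h)
        by_cases hj : j = r
        · omega
        · rw [if_neg hj] at hc; omega
      · rintro ⟨h, hc⟩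
        refine ⟨h, ?_⟩
        have := Finset.mem_Icc.1 (hC h)
        by_cases hj : j = r
        · rw [if_pos hj]; omega
        · rw [if_neg hj]; omega
    · ext j
      simp only [Finset.mem_filter, mem_suppD, Finset.mem_inter, Finset.mem_insert,
        Finset.mem_singleton]
      constructor
      · rintro ⟨h, hc⟩
        refine ⟨h, ?_⟩
        have := Finset.mem_Icc.1 (hC h)
        by_cases hj : j = r
        · rw [if_pos hj] at hc; omega
        · rw [if_neg hj] at hc; omega
      · rintro ⟨h, hc⟩
        refine ⟨h, ?_⟩
        have := Finset.mem_Icc.1 (hC h)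
        by_cases hj : j = r
        · rw [if_pos hj]; omega
        · rw [if_neg hj]; omega
  rw [hset]
  split_ifs with h1 h2
  · exact even_card_pair C (r - 1) r (by omega)
  · exact even_card_triple C (r - 2) (r - 1) r (by omega) (by omega) (by omega)
  · exact even_card_pair C (m - 1) m (by omega)

end PartC
section PartC2

variable {r : ℕ}

lemma IncB_facts (hr : 4 ≤ r) {B P Q : Finset ℕ} (hP : P ∈ CsetD r) (hQ : Q ∈ CsetD r)
    (hInc : IncP r r B P Q) :
    (∀ k ∈ B, k ≤ r - 1 → ((k ∈ P ↔ (k - 1) ∉ B) ∧ (k + 1) ∉ P)) ∧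
    (r ∈ B → ((r - 1 ∈ P ↔ ((r - 2 ∈ B) ↔ (r - 1 ∈ B))) ∧ (r ∈ P ↔ (r - 1) ∉ B))) := by
  have hBsub := IncP_subset hInc
  constructor
  · intro k hk hkr
    have hk1 : 1 ≤ k := by
      have := Finset.mem_Icc.1 (hBsub hk); omega
    obtain ⟨X, hXC, hXIkp, htrk⟩ := IncFact hr le_rfl hP hQ hInc hk
    rw [charIkp hr hXC hk1 (by omega), if_neg (by omega : ¬ k = r)] at hXIkp
    set C := B.filter (fun j => j < k) with hC
    have hCsub : C ⊆ Finset.Icc 1 r := (Finset.filter_subset _ _).trans hBsub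
    have hkC : k ∉ C := by simp [hC, Finset.mem_filter]
    have hrC : r ∉ C := by
      simp only [hC, Finset.mem_filter]
      rintro ⟨_, hc⟩; omega
    have hr1C : r - 1 ∉ C := by
      simp only [hC, Finset.mem_filter]
      rintro ⟨_, hc⟩; omega
    have hkm1C : (k - 1 ∈ C) = (k - 1 ∈ B) := by
      simp only [hC, Finset.mem_filter]
      refine propext ⟨fun h => h.1, fun h => ⟨h, by omega⟩⟩
    constructor
    · have e := htrk k hk1 (by omega)
      rw [even_filter_supp hr hCsub hk1 (by omega)] at e
      rw [if_neg (by omega : ¬ k = r)] at e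
      by_cases hkr1 : k = r - 1
      · rw [if_pos hkr1, show r - 2 = k - 1 by omega] at e
        rw [eq_true hXIkp.1, eq_false hrC, eq_false hr1C, hkm1C] at e
        simpa using e
      · rw [if_neg hkr1] at e
        rw [eq_true hXIkp.1, eq_false hkC, hkm1C] at e
        simpa using e
    · have e := htrk (k + 1) (by omega) (by omega)
      rw [even_filter_supp hr hCsub (by omega) (by omega)] at e
      have hkp1C : k + 1 ∉ C := by
        simp only [hC, Finset.mem_filter]
        rintro ⟨_, hc⟩; omega
      have hr2C : k + 1 = r - 1 → r - 2 ∉ C := by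
        intro h
        simp only [hC, Finset.mem_filter]
        rintro ⟨_, hc⟩; omega
      rw [eq_false hXIkp.2] at e
      split_ifs at e with h1 h2
      · rw [eq_false hr1C, eq_false hrC] at e
        simpa using e
      · rw [eq_false (hr2C h2), eq_false hr1C, eq_false hrC] at e
        simpa using e
      · rw [show k + 1 - 1 = k by omega, eq_false hkC, eq_false hkp1C] at e
        simpa using e
  · intro hrB
    obtain ⟨X, hXC, hXIkp, htrk⟩ := IncFact hr le_rfl hP hQ hInc hrB
    rw [charIkp hr hXC (by omega) le_rfl, if_pos rfl] at hXIkp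
    set C := B.filter (fun j => j < r) with hC
    have hCsub : C ⊆ Finset.Icc 1 r := (Finset.filter_subset _ _).trans hBsub
    have hrC : r ∉ C := by simp [hC, Finset.mem_filter]
    have hr1C : (r - 1 ∈ C) = (r - 1 ∈ B) := by
      simp only [hC, Finset.mem_filter]
      refine propext ⟨fun h => h.1, fun h => ⟨h, by omega⟩⟩
    have hr2C : (r - 2 ∈ C) = (r - 2 ∈ B) := by
      simp only [hC, Finset.mem_filter]
      refine propext ⟨fun h => h.1, fun h => ⟨h, by omega⟩⟩
    constructor
    · have e := htrk (r - 1) (by omega) (by omega)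
      rw [even_filter_supp hr hCsub (by omega) (by omega), if_neg (by omega : ¬ r - 1 = r),
        if_pos rfl] at e
      rw [eq_true hXIkp.1, eq_false hrC, hr1C, hr2C] at e
      simp only [true_iff, iff_false, not_false_eq_true, iff_true, not_not] at e
      tauto
    · have e := htrk r (by omega) le_rfl
      rw [even_filter_supp hr hCsub (by omega) le_rfl, if_pos rfl] at e
      rw [eq_true hXIkp.2, eq_false hrC, hr1C] at e
      simpa using e

lemma DecA_facts (hr : 4 ≤ r) {A P Q : Finset ℕ} (hP : P ∈ CsetD r)
    (hDec : DecP r r A P Q) :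
    (∀ k ∈ A, k ≤ r - 3 → (k ∈ P ∧ ((k + 1) ∈ P ↔ (k + 1) ∈ A))) ∧
    (r - 2 ∈ A → ((r - 2) ∈ P ∧ ((r - 1) ∈ P ↔ ¬ ((r - 1) ∈ A ↔ r ∈ A)))) ∧
    ((r - 1) ∈ A → (((r - 1) ∈ P ↔ ¬ (r ∈ A)) ∧ (r ∈ P ↔ r ∈ A))) ∧
    (r ∈ A → ((r - 1) ∈ P ∧ r ∈ P)) := by
  have hAsub := DecP_subset hDec
  refine ⟨?_, ?_, ?_, ?_⟩
  · intro k hk hkr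
    have hk1 : 1 ≤ k := by
      have := Finset.mem_Icc.1 (hAsub hk); omega
    obtain ⟨Y, hYC, hYIkp, htrk⟩ := DecFact hr le_rfl hP hDec hk
    rw [charIkp hr hYC hk1 (by omega), if_neg (by omega : ¬ k = r)] at hYIkp
    set C := A.filter (fun j => k < j) with hC
    have hCsub : C ⊆ Finset.Icc 1 r := (Finset.filter_subset _ _).trans hAsub
    have hlow : ∀ x, x ≤ k → x ∉ C := by
      intro x hx
      simp only [hC, Finset.mem_filter]
      rintro ⟨_, hc⟩; omega
    have hkp1C : (k + 1 ∈ C) = (k + 1 ∈ A) := by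
      simp only [hC, Finset.mem_filter]
      refine propext ⟨fun h => h.1, fun h => ⟨h, by omega⟩⟩
    constructor
    · have e := htrk k hk1 (by omega)
      rw [even_filter_supp hr hCsub hk1 (by omega), if_neg (by omega : ¬ k = r),
        if_neg (by omega : ¬ k = r - 1)] at e
      rw [eq_true hYIkp.1, eq_false (hlow (k - 1) (by omega)), eq_false (hlow k le_rfl)] at e
      simpa using e
    · have e := htrk (k + 1) (by omega) (by omega)
      rw [even_filter_supp hr hCsub (by omega) (by omega), if_neg (by omega : ¬ k + 1 = r),
        if_neg (by omega : ¬ k + 1 = r - 1), show k + 1 - 1 = k by omega] at e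
      rw [eq_false hYIkp.2, eq_false (hlow k le_rfl), hkp1C] at e
      simp only [iff_false, false_iff, not_not] at e
      tauto
  · intro hk
    obtain ⟨Y, hYC, hYIkp, htrk⟩ := DecFact hr le_rfl hP hDec hk
    rw [charIkp hr hYC (by omega) (by omega), if_neg (by omega : ¬ r - 2 = r),
      show r - 2 + 1 = r - 1 by omega] at hYIkp
    set C := A.filter (fun j => r - 2 < j) with hC
    have hCsub : C ⊆ Finset.Icc 1 r := (Finset.filter_subset _ _).trans hAsub
    have hlow : ∀ x, x ≤ r - 2 → x ∉ C := by
      intro x hx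
      simp only [hC, Finset.mem_filter]
      rintro ⟨_, hc⟩; omega
    have hr1C : (r - 1 ∈ C) = (r - 1 ∈ A) := by
      simp only [hC, Finset.mem_filter]
      refine propext ⟨fun h => h.1, fun h => ⟨h, by omega⟩⟩
    have hrC : (r ∈ C) = (r ∈ A) := by
      simp only [hC, Finset.mem_filter]
      refine propext ⟨fun h => h.1, fun h => ⟨h, by omega⟩⟩
    constructor
    · have e := htrk (r - 2) (by omega) (by omega)
      rw [even_filter_supp hr hCsub (by omega) (by omega), if_neg (by omega : ¬ r - 2 = r),
        if_neg (by omega : ¬ r - 2 = r - 1)] at e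
      rw [eq_true hYIkp.1, eq_false (hlow (r - 2 - 1) (by omega)),
        eq_false (hlow (r - 2) le_rfl)] at e
      simpa using e
    · have e := htrk (r - 1) (by omega) (by omega)
      rw [even_filter_supp hr hCsub (by omega) (by omega), if_neg (by omega : ¬ r - 1 = r),
        if_pos rfl] at e
      rw [eq_false hYIkp.2, eq_false (hlow (r - 2) le_rfl), hr1C, hrC] at e
      simp only [iff_false, false_iff, not_not] at e
      tauto
  · intro hk
    obtain ⟨Y, hYC, hYIkp, htrk⟩ := DecFact hr le_rfl hP hDec hk
    rw [charIkp hr hYC (by omega) (by omega), if_neg (by omega : ¬ r - 1 = r),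
      show r - 1 + 1 = r by omega] at hYIkp
    set C := A.filter (fun j => r - 1 < j) with hC
    have hCsub : C ⊆ Finset.Icc 1 r := (Finset.filter_subset _ _).trans hAsub
    have hlow : ∀ x, x ≤ r - 1 → x ∉ C := by
      intro x hx
      simp only [hC, Finset.mem_filter]
      rintro ⟨_, hc⟩; omega
    have hrC : (r ∈ C) = (r ∈ A) := by
      simp only [hC, Finset.mem_filter]
      refine propext ⟨fun h => h.1, fun h => ⟨h, by omega⟩⟩
    constructor
    · have e := htrk (r - 1) (by omega) (by omega)
      rw [even_filter_supp hr hCsub (by omega) (by omega), if_neg (by omega : ¬ r - 1 = r),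
        if_pos rfl] at e
      rw [eq_true hYIkp.1, eq_false (hlow (r - 2) (by omega)),
        eq_false (hlow (r - 1) le_rfl), hrC] at e
      simpa using e
    · have e := htrk r (by omega) le_rfl
      rw [even_filter_supp hr hCsub (by omega) le_rfl, if_pos rfl] at e
      rw [eq_false hYIkp.2, eq_false (hlow (r - 1) le_rfl), hrC] at e
      simp only [iff_false, false_iff, not_not] at e
      tauto
  · intro hk
    obtain ⟨Y, hYC, hYIkp, htrk⟩ := DecFact hr le_rfl hP hDec hk
    rw [charIkp hr hYC (by omega) le_rfl, if_pos rfl] at hYIkp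
    set C := A.filter (fun j => r < j) with hC
    have hCsub : C ⊆ Finset.Icc 1 r := (Finset.filter_subset _ _).trans hAsub
    have hlow : ∀ x, x ∉ C := by
      intro x
      simp only [hC, Finset.mem_filter]
      rintro ⟨hxa, hc⟩
      have := Finset.mem_Icc.1 (hAsub hxa)
      omega
    constructor
    · have e := htrk (r - 1) (by omega) (by omega)
      rw [even_filter_supp hr hCsub (by omega) (by omega), if_neg (by omega : ¬ r - 1 = r),
        if_pos rfl] at e
      rw [eq_true hYIkp.1, eq_false (hlow (r - 2)), eq_false (hlow (r - 1)),
        eq_false (hlow r)] at e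
      simpa using e
    · have e := htrk r (by omega) le_rfl
      rw [even_filter_supp hr hCsub (by omega) le_rfl, if_pos rfl] at e
      rw [eq_true hYIkp.2, eq_false (hlow (r - 1)), eq_false (hlow r)] at e
      simpa using e

end PartC2
section PartC3

variable {r : ℕ}

lemma iff_aux6 {a b a' b' : Prop} (e : (a ↔ a') ↔ (b ↔ b')) (h : a ↔ b) : a' ↔ b' := by
  tauto

lemma iff_aux7 {p c b1 : Prop} (h1 : p ↔ ¬ c) (h2 : p ↔ (c ↔ b1)) (hb : b1) : False := by
  tauto

lemma iff_aux8 {a1 a2 b1 b2 : Prop} (hx : (a1 ↔ a2) ↔ (b1 ↔ b2)) (n1 : ¬ (a1 ∧ a2))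
    (n2 : ¬ (b1 ∧ b2)) (e1 : ¬ (a2 ∧ b1)) (e2 : ¬ (a1 ∧ b2)) :
    (a1 ↔ b1) ∧ (a2 ↔ b2) := by tauto

lemma F3 (hr : 4 ≤ r) {P Q A B : Finset ℕ} (hP : P ∈ CsetD r) (hQ : Q ∈ CsetD r)
    (hInc : IncP r r B P Q) (hDec : DecP r r A P Q) :
    A = B ∧ ∀ k ∈ B, IkpD r k P := by
  have hAsub := DecP_subset hDec
  have hBsub := IncP_subset hInc
  have hPA : ∀ m, 1 ≤ m → m ≤ r →
      (Even ((A.filter (fun j => m ∈ suppD r j)).card) ↔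
        Even ((B.filter (fun j => m ∈ suppD r j)).card)) := by
    intro m h1 h2
    rw [← T_dec hr le_rfl hP hDec m h1 h2, ← T_inc hr le_rfl hP hQ hInc m h1 h2]
  have h0A : (0 : ℕ) ∉ A := fun hc => by
    have := Finset.mem_Icc.1 (hAsub hc); omega
  have h0B : (0 : ℕ) ∉ B := fun hc => by
    have := Finset.mem_Icc.1 (hBsub hc); omega
  obtain ⟨hIncG, hIncR⟩ := IncB_facts hr hP hQ hInc
  obtain ⟨hDecG, hDecR2, hDecR1, hDecR⟩ := DecA_facts hr hP hDec
  clear hInc hDec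
  have H1 : ∀ m, m ≤ r - 2 → (m ∈ A ↔ m ∈ B) := by
    intro m
    induction m using Nat.strong_induction_on with
    | _ m ih =>
      intro hm
      by_cases hm0 : m = 0
      · rw [hm0]; exact iff_of_false h0A h0B
      · have e := hPA m (by omega) (by omega)
        rw [even_filter_supp hr hAsub (by omega) (by omega),
          even_filter_supp hr hBsub (by omega) (by omega),
          if_neg (by omega : ¬ m = r), if_neg (by omega : ¬ m = r - 1),
          if_neg (by omega : ¬ m = r), if_neg (by omega : ¬ m = r - 1)] at e
        have hprev : (m - 1 ∈ A) ↔ (m - 1 ∈ B) := by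
          by_cases h1 : m = 1
          · rw [h1]; exact iff_of_false h0A h0B
          · exact ih (m - 1) (by omega) (by omega)
        exact iff_aux6 e hprev
  have hPAr : ((r - 1 ∈ A) ↔ (r ∈ A)) ↔ ((r - 1 ∈ B) ↔ (r ∈ B)) := by
    have e := hPA r (by omega) le_rfl
    rwa [even_filter_supp hr hAsub (by omega) le_rfl,
      even_filter_supp hr hBsub (by omega) le_rfl, if_pos rfl, if_pos rfl] at e
  have Claim3B : ¬ ((r - 1) ∈ B ∧ r ∈ B) := by
    rintro ⟨hb1, hb2⟩
    have f1 := hIncG (r - 1) hb1 le_rfl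
    rw [show r - 1 - 1 = r - 2 by omega] at f1
    have f2 := hIncR hb2
    exact iff_aux7 f1.1 f2.1 hb1
  have Claim3A : ¬ ((r - 1) ∈ A ∧ r ∈ A) := by
    rintro ⟨ha1, ha2⟩
    have f1 := hDecR1 ha1
    have f2 := hDecR ha2
    exact (f1.1.1 f2.1) ha2
  have Excl1 : ¬ (r ∈ A ∧ (r - 1) ∈ B) := by
    rintro ⟨ha2, hb1⟩
    have f1 := hDecR ha2
    have f2 := hIncG (r - 1) hb1 le_rfl
    have : r ∉ P := by
      rw [show r = r - 1 + 1 by omega]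
      exact f2.2
    exact this f1.2
  have Excl2 : ¬ ((r - 1) ∈ A ∧ r ∈ B) := by
    rintro ⟨ha1, hb2⟩
    have hnb1 : (r - 1) ∉ B := fun hc => Claim3B ⟨hc, hb2⟩
    have f2 := hIncR hb2
    have hrP : r ∈ P := f2.2.2 hnb1
    have f1 := hDecR1 ha1
    exact Claim3A ⟨ha1, f1.2.1 hrP⟩
  have hiff1 : ((r - 1) ∈ A ↔ (r - 1) ∈ B) ∧ (r ∈ A ↔ r ∈ B) :=
    iff_aux8 hPAr Claim3A Claim3B Excl1 Excl2
  have hAB : A = B := by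
    ext j
    by_cases hjr : j ≤ r - 2
    · exact H1 j hjr
    · by_cases hj1 : j = r - 1
      · rw [hj1]; exact hiff1.1
      · by_cases hj2 : j = r
        · rw [hj2]; exact hiff1.2
        · have hjA : j ∉ A := fun hc => by
            have := Finset.mem_Icc.1 (hAsub hc); omega
          have hjB : j ∉ B := fun hc => by
            have := Finset.mem_Icc.1 (hBsub hc); omega
          exact iff_of_false hjA hjB
  refine ⟨hAB, ?_⟩
  intro k hk
  have hkA : k ∈ A := by rw [hAB]; exact hk
  have hkb := Finset.mem_Icc.1 (hBsub hk)
  by_cases hk3 : k ≤ r - 3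
  · have f := hDecG k hkA hk3
    have g := hIncG k hk (by omega)
    rw [charIkp hr hP (by omega) (by omega), if_neg (by omega : ¬ k = r)]
    exact ⟨f.1, g.2⟩
  · by_cases hk2 : k = r - 2
    · have hkA2 : r - 2 ∈ A := by rw [← hk2]; exact hkA
      have f := hDecR2 hkA2
      have g := hIncG k hk (by omega)
      rw [charIkp hr hP (by omega) (by omega), if_neg (by omega : ¬ k = r)]
      refine ⟨by rw [hk2]; exact f.1, g.2⟩
    · by_cases hk1 : k = r - 1
      · have hkA1 : r - 1 ∈ A := by rw [← hk1]; exact hkA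
        have f := hDecR1 hkA1
        have hnra : r ∉ A := fun hc => Claim3A ⟨hkA1, hc⟩
        rw [charIkp hr hP (by omega) (by omega), if_neg (by omega : ¬ k = r)]
        constructor
        · rw [hk1]; exact f.1.2 hnra
        · rw [hk1, show r - 1 + 1 = r by omega]
          intro hc
          exact hnra (f.2.1 hc)
      · have hkr : k = r := by omega
        have hkAr : r ∈ A := by rw [← hkr]; exact hkA
        have f := hDecR hkAr
        rw [charIkp hr hP (by omega) (by omega), hkr, if_pos rfl]
        exact f
end PartC3
section PartD

variable {r : ℕ} {S : Finset (Finset ℕ)} {c : ℕ → ℂ}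

lemma IncP_succ_notmem {n : ℕ} {B P Q : Finset ℕ} (h : n + 1 ∉ B) :
    IncP r (n + 1) B P Q ↔ IncP r n B P Q := by
  constructor
  · rintro (⟨_, h2⟩ | ⟨h1, _, _⟩)
    · exact h2
    · exact absurd h1 h
  · intro hh
    exact Or.inl ⟨h, hh⟩

lemma IncP_succ_insert {n : ℕ} {B P Q : Finset ℕ} (h : n + 1 ∉ B) :
    IncP r (n + 1) (insert (n + 1) B) P Q ↔
      (IkmD r (n + 1) Q ∧ IncP r n B P (phiInvD r (n + 1) Q)) := by
  constructor
  · rintro (⟨h1, _⟩ | ⟨_, hm, hrec⟩)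
    · exact absurd (Finset.mem_insert_self _ _) h1
    · rw [Finset.erase_insert h] at hrec
      exact ⟨hm, hrec⟩
  · rintro ⟨hm, hrec⟩
    exact Or.inr ⟨Finset.mem_insert_self _ _, hm, by rwa [Finset.erase_insert h]⟩

lemma DecP_succ_notmem {n : ℕ} {A P Q : Finset ℕ} (h : n + 1 ∉ A) :
    DecP r (n + 1) A P Q ↔ DecP r n A P Q := by
  constructor
  · rintro (⟨_, h2⟩ | ⟨h1, _, _⟩)
    · exact h2
    · exact absurd h1 h
  · intro hh
    exact Or.inl ⟨h, hh⟩

lemma DecP_succ_insert {n : ℕ} {A P Q : Finset ℕ} (h : n + 1 ∉ A) :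
    DecP r (n + 1) (insert (n + 1) A) P Q ↔
      (IkpD r (n + 1) P ∧ DecP r n A (phiD r (n + 1) P) Q) := by
  constructor
  · rintro (⟨h1, _⟩ | ⟨_, hm, hrec⟩)
    · exact absurd (Finset.mem_insert_self _ _) h1
    · rw [Finset.erase_insert h] at hrec
      exact ⟨hm, hrec⟩
  · rintro ⟨hm, hrec⟩
    exact Or.inr ⟨Finset.mem_insert_self _ _, hm, by rwa [Finset.erase_insert h]⟩

lemma DecP_S (hS2 : ∀ X ∈ S, ∀ k, 1 ≤ k → k ≤ r → IkpD r k X → phiD r k X ∈ S) :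
    ∀ {n A P Q}, n ≤ r → P ∈ S → DecP r n A P Q → Q ∈ S := by
  intro n
  induction n with
  | zero => intro A P Q _ hP h; rw [← h.2]; exact hP
  | succ n ih =>
    intro A P Q hn hP h
    rcases h with ⟨_, h2⟩ | ⟨_, hIkp, h3⟩
    · exact ih (by omega) hP h2
    · exact ih (by omega) (hS2 P hP (n + 1) (by omega) (by omega) hIkp) h3

lemma Icc_one_succ (n : ℕ) : Finset.Icc 1 (n + 1) = insert (n + 1) (Finset.Icc 1 n) := by
  ext x
  simp only [Finset.mem_Icc, Finset.mem_insert]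
  omega

lemma U_entry (hr : 4 ≤ r) (hS1 : ∀ X ∈ S, X ∈ CsetD r)
    (hS3 : ∀ Q ∈ S, ∀ k, 1 ≤ k → k ≤ r → IkmD r k Q → phiInvD r k Q ∈ S) :
    ∀ {n}, n ≤ r → ∀ P Q : {I // I ∈ S},
    (((List.range n).map fun m => EhatUpD r S (m + 1) (c (m + 1))).prod) P Q =
      ∑ B ∈ (Finset.Icc 1 n).powerset, (if IncP r n B P.1 Q.1 then ∏ k ∈ B, c k else 0) := by
  intro n
  induction n with
  | zero =>
    intro _ P Q
    simp only [List.range_zero, List.map_nil, List.prod_nil]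
    rw [show Finset.Icc 1 0 = (∅ : Finset ℕ) from Finset.Icc_eq_empty (by omega)]
    rw [Finset.powerset_empty, Finset.sum_singleton, Matrix.one_apply]
    have h : IncP r 0 (∅ : Finset ℕ) P.1 Q.1 ↔ P = Q := by
      constructor
      · intro hh; exact Subtype.ext hh.2
      · intro hh; exact ⟨rfl, congrArg Subtype.val hh⟩
    by_cases hPQ : P = Q
    · rw [if_pos hPQ, if_pos (h.2 hPQ), Finset.prod_empty]
    · rw [if_neg hPQ, if_neg (fun hc => hPQ (h.1 hc))]
  | succ n ih =>
    intro hn P Q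
    rw [List.range_succ, List.map_append, List.prod_append, List.map_singleton,
      List.prod_singleton, Matrix.mul_apply]
    set M := ((List.range n).map fun m => EhatUpD r S (m + 1) (c (m + 1))).prod with hM
    have hexp : ∀ X : {I // I ∈ S}, (EhatUpD r S (n + 1) (c (n + 1))) X Q =
        (if X = Q then (1 : ℂ) else 0) +
          (if IkpD r (n + 1) X.1 ∧ Q.1 = phiD r (n + 1) X.1 then c (n + 1) else 0) :=
      fun X => rfl
    have hsplit : ∑ X : {I // I ∈ S}, M P X * EhatUpD r S (n + 1) (c (n + 1)) X Q =
        (∑ X : {I // I ∈ S}, M P X * (if X = Q then (1 : ℂ) else 0)) +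
          ∑ X : {I // I ∈ S}, M P X *
            (if IkpD r (n + 1) X.1 ∧ Q.1 = phiD r (n + 1) X.1 then c (n + 1) else 0) := by
      rw [← Finset.sum_add_distrib]
      apply Finset.sum_congr rfl
      intro X _
      rw [hexp X, mul_add]
    rw [hsplit]
    have hfirst : (∑ X : {I // I ∈ S}, M P X * (if X = Q then (1 : ℂ) else 0)) = M P Q := by
      simp only [mul_ite, mul_one, mul_zero]
      rw [Finset.sum_ite_eq' Finset.univ Q (fun X => M P X)]
      simp
    rw [hfirst]
    have hIcc := Icc_one_succ n
    rw [hIcc, Finset.sum_powerset_insert (by simp [Finset.mem_Icc])]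
    have hRfirst : ∑ B ∈ (Finset.Icc 1 n).powerset,
        (if IncP r (n + 1) B P.1 Q.1 then ∏ k ∈ B, c k else 0) =
        ∑ B ∈ (Finset.Icc 1 n).powerset,
        (if IncP r n B P.1 Q.1 then ∏ k ∈ B, c k else 0) := by
      apply Finset.sum_congr rfl
      intro B hB
      have hnB : n + 1 ∉ B := fun hc => by
        have := Finset.mem_Icc.1 (Finset.mem_powerset.1 hB hc); omega
      rw [if_congr (IncP_succ_notmem hnB) rfl rfl]
    rw [hRfirst, ← ih (by omega) P Q]
    congr 1
    -- second parts
    by_cases hIkm : IkmD r (n + 1) Q.1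
    · have hQC : Q.1 ∈ CsetD r := hS1 Q.1 Q.2
      set X0 : {I // I ∈ S} :=
        ⟨phiInvD r (n + 1) Q.1, hS3 Q.1 Q.2 (n + 1) (by omega) (by omega) hIkm⟩ with hX0
      have hcond : ∀ X : {I // I ∈ S},
          (IkpD r (n + 1) X.1 ∧ Q.1 = phiD r (n + 1) X.1) ↔ X = X0 := by
        intro X
        constructor
        · rintro ⟨h1, h2⟩
          apply Subtype.ext
          have h3 := phiInv_phi hr (hS1 X.1 X.2) (by omega) (by omega) h1
          calc X.1 = phiInvD r (n + 1) (phiD r (n + 1) X.1) := h3.symm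
            _ = phiInvD r (n + 1) Q.1 := by rw [← h2]
        · rintro rfl
          exact ⟨Ikp_phiInv (by omega) Q.1,
            (phi_phiInv hr hQC (by omega) (by omega) hIkm).symm⟩
      have hsec : ∑ X : {I // I ∈ S}, M P X *
          (if IkpD r (n + 1) X.1 ∧ Q.1 = phiD r (n + 1) X.1 then c (n + 1) else 0) =
          M P X0 * c (n + 1) := by
        have : ∀ X : {I // I ∈ S}, M P X *
            (if IkpD r (n + 1) X.1 ∧ Q.1 = phiD r (n + 1) X.1 then c (n + 1) else 0) =
            (if X = X0 then M P X * c (n + 1) else 0) := by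
          intro X
          rw [if_congr (hcond X) rfl rfl]
          by_cases h : X = X0 <;> simp [h]
        rw [Finset.sum_congr rfl (fun X _ => this X)]
        rw [Finset.sum_ite_eq' Finset.univ X0 (fun X => M P X * c (n + 1))]
        simp
      rw [hsec]
      have hR : ∀ B ∈ (Finset.Icc 1 n).powerset,
          (if IncP r (n + 1) (insert (n + 1) B) P.1 Q.1 then ∏ k ∈ insert (n + 1) B, c k else 0)
          = (if IncP r n B P.1 X0.1 then c (n + 1) * ∏ k ∈ B, c k else 0) := by
        intro B hB
        have hnB : n + 1 ∉ B := fun hc => by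
          have := Finset.mem_Icc.1 (Finset.mem_powerset.1 hB hc); omega
        rw [if_congr (IncP_succ_insert hnB) (Finset.prod_insert hnB) rfl]
        have : (IkmD r (n + 1) Q.1 ∧ IncP r n B P.1 (phiInvD r (n + 1) Q.1)) ↔
            IncP r n B P.1 X0.1 := by
          simp only [hX0]
          tauto
        rw [if_congr this rfl rfl]
      rw [Finset.sum_congr rfl hR]
      have hpull : ∀ B ∈ (Finset.Icc 1 n).powerset,
          (if IncP r n B P.1 X0.1 then c (n + 1) * ∏ k ∈ B, c k else 0) =
          c (n + 1) * (if IncP r n B P.1 X0.1 then ∏ k ∈ B, c k else 0) := by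
        intro B _
        by_cases h : IncP r n B P.1 X0.1 <;> simp [h]
      rw [Finset.sum_congr rfl hpull, ← Finset.mul_sum, ← ih (by omega) P X0, mul_comm]
    · have hzero1 : ∑ X : {I // I ∈ S}, M P X *
          (if IkpD r (n + 1) X.1 ∧ Q.1 = phiD r (n + 1) X.1 then c (n + 1) else 0) = 0 := by
        apply Finset.sum_eq_zero
        intro X _
        rw [if_neg, mul_zero]
        rintro ⟨h1, h2⟩
        exact hIkm (h2 ▸ Ikm_phi (by omega) X.1)
      have hzero2 : ∑ B ∈ (Finset.Icc 1 n).powerset,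
          (if IncP r (n + 1) (insert (n + 1) B) P.1 Q.1 then ∏ k ∈ insert (n + 1) B, c k else 0)
          = 0 := by
        apply Finset.sum_eq_zero
        intro B hB
        have hnB : n + 1 ∉ B := fun hc => by
          have := Finset.mem_Icc.1 (Finset.mem_powerset.1 hB hc); omega
        rw [if_neg]
        intro hc
        exact hIkm ((IncP_succ_insert hnB).1 hc).1
      rw [hzero1, hzero2]

lemma L_entry (hr : 4 ≤ r) (hS1 : ∀ X ∈ S, X ∈ CsetD r)
    (hS2 : ∀ X ∈ S, ∀ k, 1 ≤ k → k ≤ r → IkpD r k X → phiD r k X ∈ S) :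
    ∀ {n}, n ≤ r → ∀ Jx P : {I // I ∈ S},
    (((List.range n).map fun m => EhatLowD r S (m + 1) 1).prod) Jx P =
      ∑ A ∈ (Finset.Icc 1 n).powerset, (if DecP r n A P.1 Jx.1 then (1 : ℂ) else 0) := by
  intro n
  induction n with
  | zero =>
    intro _ Jx P
    simp only [List.range_zero, List.map_nil, List.prod_nil]
    rw [show Finset.Icc 1 0 = (∅ : Finset ℕ) from Finset.Icc_eq_empty (by omega)]
    rw [Finset.powerset_empty, Finset.sum_singleton, Matrix.one_apply]
    have h : DecP r 0 (∅ : Finset ℕ) P.1 Jx.1 ↔ Jx = P := by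
      constructor
      · intro hh; exact (Subtype.ext hh.2).symm
      · intro hh; exact ⟨rfl, (congrArg Subtype.val hh).symm⟩
    by_cases hPQ : Jx = P
    · rw [if_pos hPQ, if_pos (h.2 hPQ)]
    · rw [if_neg hPQ, if_neg (fun hc => hPQ (h.1 hc))]
  | succ n ih =>
    intro hn Jx P
    rw [List.range_succ, List.map_append, List.prod_append, List.map_singleton,
      List.prod_singleton, Matrix.mul_apply]
    set M := ((List.range n).map fun m => EhatLowD r S (m + 1) 1).prod with hM
    have hexp : ∀ X : {I // I ∈ S}, (EhatLowD r S (n + 1) (1 : ℂ)) X P =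
        (if X = P then (1 : ℂ) else 0) +
          (if IkpD r (n + 1) P.1 ∧ X.1 = phiD r (n + 1) P.1 then (1 : ℂ) else 0) :=
      fun X => rfl
    have hsplit : ∑ X : {I // I ∈ S}, M Jx X * EhatLowD r S (n + 1) (1 : ℂ) X P =
        (∑ X : {I // I ∈ S}, M Jx X * (if X = P then (1 : ℂ) else 0)) +
          ∑ X : {I // I ∈ S}, M Jx X *
            (if IkpD r (n + 1) P.1 ∧ X.1 = phiD r (n + 1) P.1 then (1 : ℂ) else 0) := by
      rw [← Finset.sum_add_distrib]
      apply Finset.sum_congr rfl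
      intro X _
      rw [hexp X, mul_add]
    rw [hsplit]
    have hfirst : (∑ X : {I // I ∈ S}, M Jx X * (if X = P then (1 : ℂ) else 0)) = M Jx P := by
      simp only [mul_ite, mul_one, mul_zero]
      rw [Finset.sum_ite_eq' Finset.univ P (fun X => M Jx X)]
      simp
    rw [hfirst]
    have hIcc := Icc_one_succ n
    rw [hIcc, Finset.sum_powerset_insert (by simp [Finset.mem_Icc])]
    have hRfirst : ∑ A ∈ (Finset.Icc 1 n).powerset,
        (if DecP r (n + 1) A P.1 Jx.1 then (1 : ℂ) else 0) =
        ∑ A ∈ (Finset.Icc 1 n).powerset,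
        (if DecP r n A P.1 Jx.1 then (1 : ℂ) else 0) := by
      apply Finset.sum_congr rfl
      intro A hA
      have hnA : n + 1 ∉ A := fun hc => by
        have := Finset.mem_Icc.1 (Finset.mem_powerset.1 hA hc); omega
      rw [if_congr (DecP_succ_notmem hnA) rfl rfl]
    rw [hRfirst, ← ih (by omega) Jx P]
    congr 1
    by_cases hIkp : IkpD r (n + 1) P.1
    · set X0 : {I // I ∈ S} :=
        ⟨phiD r (n + 1) P.1, hS2 P.1 P.2 (n + 1) (by omega) (by omega) hIkp⟩ with hX0
      have hcond : ∀ X : {I // I ∈ S},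
          (IkpD r (n + 1) P.1 ∧ X.1 = phiD r (n + 1) P.1) ↔ X = X0 := by
        intro X
        constructor
        · rintro ⟨_, h2⟩
          exact Subtype.ext h2
        · rintro rfl
          exact ⟨hIkp, rfl⟩
      have hsec : ∑ X : {I // I ∈ S}, M Jx X *
          (if IkpD r (n + 1) P.1 ∧ X.1 = phiD r (n + 1) P.1 then (1 : ℂ) else 0) =
          M Jx X0 := by
        have : ∀ X : {I // I ∈ S}, M Jx X *
            (if IkpD r (n + 1) P.1 ∧ X.1 = phiD r (n + 1) P.1 then (1 : ℂ) else 0) =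
            (if X = X0 then M Jx X else 0) := by
          intro X
          rw [if_congr (hcond X) rfl rfl]
          by_cases h : X = X0 <;> simp [h]
        rw [Finset.sum_congr rfl (fun X _ => this X)]
        rw [Finset.sum_ite_eq' Finset.univ X0 (fun X => M Jx X)]
        simp
      rw [hsec]
      have hR : ∀ A ∈ (Finset.Icc 1 n).powerset,
          (if DecP r (n + 1) (insert (n + 1) A) P.1 Jx.1 then (1 : ℂ) else 0)
          = (if DecP r n A X0.1 Jx.1 then (1 : ℂ) else 0) := by
        intro A hA
        have hnA : n + 1 ∉ A := fun hc => by
          have := Finset.mem_Icc.1 (Finset.mem_powerset.1 hA hc); omega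
        rw [if_congr (DecP_succ_insert hnA) rfl rfl]
        have : (IkpD r (n + 1) P.1 ∧ DecP r n A (phiD r (n + 1) P.1) Jx.1) ↔
            DecP r n A X0.1 Jx.1 := by
          simp only [hX0]
          tauto
        rw [if_congr this rfl rfl]
      rw [Finset.sum_congr rfl hR, ← ih (by omega) Jx X0]
    · have hzero1 : ∑ X : {I // I ∈ S}, M Jx X *
          (if IkpD r (n + 1) P.1 ∧ X.1 = phiD r (n + 1) P.1 then (1 : ℂ) else 0) = 0 := by
        apply Finset.sum_eq_zero
        intro X _
        rw [if_neg, mul_zero]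
        rintro ⟨h1, _⟩
        exact hIkp h1
      have hzero2 : ∑ A ∈ (Finset.Icc 1 n).powerset,
          (if DecP r (n + 1) (insert (n + 1) A) P.1 Jx.1 then (1 : ℂ) else 0) = 0 := by
        apply Finset.sum_eq_zero
        intro A hA
        have hnA : n + 1 ∉ A := fun hc => by
          have := Finset.mem_Icc.1 (Finset.mem_powerset.1 hA hc); omega
        rw [if_neg]
        intro hc
        exact hIkp ((DecP_succ_insert hnA).1 hc).1
      rw [hzero1, hzero2]

end PartD
section PartE

variable {r : ℕ} {S : Finset (Finset ℕ)} {c : ℕ → ℂ}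

lemma core_mat (hr : 4 ≤ r) (hS1 : ∀ X ∈ S, X ∈ CsetD r)
    (hS2 : ∀ X ∈ S, ∀ k, 1 ≤ k → k ≤ r → IkpD r k X → phiD r k X ∈ S)
    (hS3 : ∀ Q ∈ S, ∀ k, 1 ≤ k → k ≤ r → IkmD r k Q → phiInvD r k Q ∈ S)
    (P : {I // I ∈ S}) :
    ∑ J : {I // I ∈ S}, (((List.range r).map fun m => EhatLowD r S (m + 1) 1).prod) J P *
      (((List.range r).map fun m => EhatUpD r S (m + 1) (c (m + 1))).prod) P J
    = ∏ k ∈ RIpD r P.1, (1 + c k) := by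
  have hPC : P.1 ∈ CsetD r := hS1 P.1 P.2
  have step0 : ∀ J : {I // I ∈ S},
      (((List.range r).map fun m => EhatLowD r S (m + 1) 1).prod) J P *
      (((List.range r).map fun m => EhatUpD r S (m + 1) (c (m + 1))).prod) P J =
      ∑ A ∈ (Finset.Icc 1 r).powerset, ∑ B ∈ (Finset.Icc 1 r).powerset,
        (if DecP r r A P.1 J.1 ∧ IncP r r B P.1 J.1 then ∏ k ∈ B, c k else 0) := by
    intro J
    rw [L_entry hr hS1 hS2 le_rfl J P, U_entry hr hS1 hS3 le_rfl P J, Finset.sum_mul_sum]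
    apply Finset.sum_congr rfl
    intro A _
    apply Finset.sum_congr rfl
    intro B _
    by_cases h1 : DecP r r A P.1 J.1 <;> by_cases h2 : IncP r r B P.1 J.1 <;>
      simp [h1, h2]
  rw [Finset.sum_congr rfl (fun J _ => step0 J), Finset.sum_comm]
  rw [Finset.sum_congr rfl (fun A _ => Finset.sum_comm)]
  -- now : ∑ A ∑ B ∑ J
  have hinner : ∀ A ∈ (Finset.Icc 1 r).powerset, ∀ B ∈ (Finset.Icc 1 r).powerset,
      (∑ J : {I // I ∈ S},
        if DecP r r A P.1 J.1 ∧ IncP r r B P.1 J.1 then ∏ k ∈ B, c k else 0)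
      = if A = B ∧ ∀ k ∈ B, IkpD r k P.1 then ∏ k ∈ B, c k else 0 := by
    intro A hA B hB
    by_cases hex : ∃ J : {I // I ∈ S}, DecP r r A P.1 J.1 ∧ IncP r r B P.1 J.1
    · obtain ⟨J0, hJ0d, hJ0i⟩ := hex
      have hF3 := F3 hr hPC (hS1 J0.1 J0.2) hJ0i hJ0d
      rw [Finset.sum_eq_single J0]
      · rw [if_pos ⟨hJ0d, hJ0i⟩, if_pos hF3]
      · intro J _ hne
        rw [if_neg]
        rintro ⟨hd, _⟩
        exact hne (Subtype.ext (DecP_det hd hJ0d))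
      · intro h
        exact absurd (Finset.mem_univ J0) h
    · rw [Finset.sum_eq_zero, if_neg]
      · rintro ⟨hAB, hIkp⟩
        have hBsub : B ⊆ Finset.Icc 1 r := Finset.mem_powerset.1 hB
        obtain ⟨Q, hQC, hQInc, hQDec, _⟩ := ExistsQ hr le_rfl hPC hBsub hIkp
        have hQS : Q ∈ S := DecP_S hS2 le_rfl P.2 hQDec
        exact hex ⟨⟨Q, hQS⟩, by rw [hAB]; exact hQDec, hQInc⟩
      · intro J _
        rw [if_neg]
        intro hc
        exact hex ⟨J, hc⟩
  rw [Finset.sum_congr rfl (fun A hA => Finset.sum_congr rfl (fun B hB => hinner A hA B hB))]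
  rw [Finset.sum_comm]
  have hcol : ∀ B ∈ (Finset.Icc 1 r).powerset,
      (∑ A ∈ (Finset.Icc 1 r).powerset,
        if A = B ∧ ∀ k ∈ B, IkpD r k P.1 then ∏ k ∈ B, c k else 0)
      = if ∀ k ∈ B, IkpD r k P.1 then ∏ k ∈ B, c k else 0 := by
    intro B hB
    rw [Finset.sum_eq_single B]
    · rw [if_congr (show (B = B ∧ ∀ k ∈ B, IkpD r k P.1) ↔ (∀ k ∈ B, IkpD r k P.1) by simp)
        rfl rfl]
    · intro A _ hne
      rw [if_neg]
      rintro ⟨rfl, _⟩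
      exact hne rfl
    · intro h
      exact absurd hB h
  rw [Finset.sum_congr rfl hcol]
  have hps : (RIpD r P.1).powerset ⊆ (Finset.Icc 1 r).powerset :=
    Finset.powerset_mono.2 (Finset.filter_subset _ _)
  have hvan : ∀ B ∈ (Finset.Icc 1 r).powerset, B ∉ (RIpD r P.1).powerset →
      (if ∀ k ∈ B, IkpD r k P.1 then ∏ k ∈ B, c k else 0) = 0 := by
    intro B hB hBn
    rw [if_neg]
    intro hc
    apply hBn
    rw [Finset.mem_powerset]
    intro k hk
    exact Finset.mem_filter.2 ⟨Finset.mem_powerset.1 hB hk, hc k hk⟩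
  rw [← Finset.sum_subset hps hvan]
  have hfinal : ∑ B ∈ (RIpD r P.1).powerset,
      (if ∀ k ∈ B, IkpD r k P.1 then ∏ k ∈ B, c k else 0) =
      ∑ B ∈ (RIpD r P.1).powerset, ∏ k ∈ B, c k :=
    Finset.sum_congr rfl (fun B hB => if_pos
      (fun k hk => (Finset.mem_filter.1 (Finset.mem_powerset.1 hB hk)).2))
  rw [hfinal]
  rw [show ∏ k ∈ RIpD r P.1, (1 + c k) = ∏ k ∈ RIpD r P.1, (c k + 1) from
    Finset.prod_congr rfl (fun _ _ => add_comm _ _)]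
  rw [Finset.prod_add]
  apply Finset.sum_congr rfl
  intro B _
  simp

theorem main_gen (hr : 4 ≤ r) (t : ℕ → ℂ) (hS1 : ∀ X ∈ S, X ∈ CsetD r)
    (hS2 : ∀ X ∈ S, ∀ k, 1 ≤ k → k ≤ r → IkpD r k X → phiD r k X ∈ S)
    (hS3 : ∀ Q ∈ S, ∀ k, 1 ≤ k → k ≤ r → IkmD r k Q → phiInvD r k Q ∈ S) :
    Matrix.trace (((List.range r).map fun m => EhatLowD r S (m + 1) 1).prod *
      DhatD r S t *
      ((List.range r).map fun m => EhatUpD r S (m + 1) (c (m + 1))).prod)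
    = ∑ J ∈ S, tID r t J * ∏ k ∈ RIpD r J, (1 + c k) := by
  set Lp := ((List.range r).map fun m => EhatLowD r S (m + 1) 1).prod with hLp
  set Up := ((List.range r).map fun m => EhatUpD r S (m + 1) (c (m + 1))).prod with hUp
  have htr : Matrix.trace (Lp * DhatD r S t * Up) =
      ∑ J : {I // I ∈ S}, (Lp * DhatD r S t * Up) J J := rfl
  rw [htr]
  have h1 : ∀ J : {I // I ∈ S}, (Lp * DhatD r S t * Up) J J =
      ∑ X : {I // I ∈ S}, tID r t X.1 * (Lp J X * Up X J) := by
    intro J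
    rw [Matrix.mul_apply]
    apply Finset.sum_congr rfl
    intro X _
    rw [show (Lp * DhatD r S t) J X = Lp J X * tID r t X.1 from by
      rw [show DhatD r S t = Matrix.diagonal (fun P : {I // I ∈ S} => tID r t P.1) from rfl,
        Matrix.mul_diagonal]]
    ring
  rw [Finset.sum_congr rfl (fun J _ => h1 J), Finset.sum_comm]
  have h2 : ∀ X : {I // I ∈ S},
      (∑ J : {I // I ∈ S}, tID r t X.1 * (Lp J X * Up X J)) =
      tID r t X.1 * ∏ k ∈ RIpD r X.1, (1 + c k) := by
    intro X
    rw [← Finset.mul_sum, core_mat hr hS1 hS2 hS3 X]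
  rw [Finset.sum_congr rfl (fun X _ => h2 X)]
  exact Finset.sum_coe_sort S (fun J => tID r t J * ∏ k ∈ RIpD r J, (1 + c k))

lemma hS1odd : ∀ X ∈ CsetDodd r, X ∈ CsetD r := fun X hX => (Finset.mem_filter.1 hX).1

lemma hS2odd (hr : 4 ≤ r) : ∀ X ∈ CsetDodd r, ∀ k, 1 ≤ k → k ≤ r → IkpD r k X →
    phiD r k X ∈ CsetDodd r := by
  intro X hX k h1 h2 hk
  obtain ⟨hXC, hodd⟩ := Finset.mem_filter.1 hX
  refine Finset.mem_filter.2 ⟨phi_closure hr hXC h1 h2 hk, ?_⟩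
  rcases phi_upper_card hr hXC h1 h2 hk with h | h <;> rw [h] <;>
    rw [Nat.odd_iff] at hodd ⊢ <;> omega

lemma hS3odd (hr : 4 ≤ r) : ∀ Q ∈ CsetDodd r, ∀ k, 1 ≤ k → k ≤ r → IkmD r k Q →
    phiInvD r k Q ∈ CsetDodd r := by
  intro Q hQ k h1 h2 hk
  obtain ⟨hQC, hodd⟩ := Finset.mem_filter.1 hQ
  have hC := phiInv_closure hr hQC h1 h2 hk
  refine Finset.mem_filter.2 ⟨hC, ?_⟩
  have hIkp := Ikp_phiInv h2 Q
  have hcard := phi_upper_card hr hC h1 h2 hIkp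
  rw [phi_phiInv hr hQC h1 h2 hk] at hcard
  rcases hcard with h | h <;> rw [Nat.odd_iff] at hodd ⊢ <;> omega

lemma hS1even : ∀ X ∈ CsetDeven r, X ∈ CsetD r := fun X hX => (Finset.mem_filter.1 hX).1

lemma hS2even (hr : 4 ≤ r) : ∀ X ∈ CsetDeven r, ∀ k, 1 ≤ k → k ≤ r → IkpD r k X →
    phiD r k X ∈ CsetDeven r := by
  intro X hX k h1 h2 hk
  obtain ⟨hXC, heven⟩ := Finset.mem_filter.1 hX
  refine Finset.mem_filter.2 ⟨phi_closure hr hXC h1 h2 hk, ?_⟩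
  rcases phi_upper_card hr hXC h1 h2 hk with h | h <;> rw [h] <;>
    rw [Nat.even_iff] at heven ⊢ <;> omega

lemma hS3even (hr : 4 ≤ r) : ∀ Q ∈ CsetDeven r, ∀ k, 1 ≤ k → k ≤ r → IkmD r k Q →
    phiInvD r k Q ∈ CsetDeven r := by
  intro Q hQ k h1 h2 hk
  obtain ⟨hQC, heven⟩ := Finset.mem_filter.1 hQ
  have hC := phiInv_closure hr hQC h1 h2 hk
  refine Finset.mem_filter.2 ⟨hC, ?_⟩
  have hIkp := Ikp_phiInv h2 Q
  have hcard := phi_upper_card hr hC h1 h2 hIkp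
  rw [phi_phiInv hr hQC h1 h2 hk] at hcard
  rcases hcard with h | h <;> rw [Nat.even_iff] at heven ⊢ <;> omega

end PartE

/-- Equation (5.84): the Coxeter–Toda Hamiltonians of the two half-spin representations
of `SO_{2r}` equal `∑_{J∈𝒞_∗} t_J · ∏_{k∈R_J^+} (1 + c_k)` for `∗ ∈ {odd, even}`. -/
theorem stmt_10 (r : ℕ) (hr : 4 ≤ r) (t c : ℕ → ℂ)
    (htne : ∀ i, 1 ≤ i → i ≤ r → t i ≠ 0)
    (hcne : ∀ i, 1 ≤ i → i ≤ r → c i ≠ 0) :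
    (Matrix.trace
        (((List.range r).map fun m => EhatLowD r (CsetDodd r) (m + 1) 1).prod *
          DhatD r (CsetDodd r) t *
          ((List.range r).map fun m => EhatUpD r (CsetDodd r) (m + 1) (c (m + 1))).prod)
      = ∑ J ∈ CsetDodd r, tID r t J * ∏ k ∈ RIpD r J, (1 + c k)) ∧
    (Matrix.trace
        (((List.range r).map fun m => EhatLowD r (CsetDeven r) (m + 1) 1).prod *
          DhatD r (CsetDeven r) t *
          ((List.range r).map fun m => EhatUpD r (CsetDeven r) (m + 1) (c (m + 1))).prod)
      = ∑ J ∈ CsetDeven r, tID r t J * ∏ k ∈ RIpD r J, (1 + c k)) := by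
  constructor
  · exact main_gen hr t hS1odd (hS2odd hr) (hS3odd hr)
  · exact main_gen hr t hS1even (hS2even hr) (hS3even hr)
end
end

section
/- Let 𝐢 and 𝐢′ be Coxeter double words that differ by swapping two adjacent entries at positions k and k+1 (i.e. i′_k = i_{k+1}, i′_{k+1} = i_k, and i′_m = i_m for m ≠ k, k+1), and suppose i_k = −i_{k+1}; set j = |i_k|. Then B̃_{𝐢′} = μ_{−j}(B̃_𝐢) (Proposition 3.6(1)). -/
open Classical

noncomputable section

/-- The indicator `δ_P` of a proposition, as a rational number. -/
def dd (P : Prop) : ℚ := if P then 1 else 0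

/-- The exchange matrix `B̃_𝐢`, as a function of `a b : ℤ` (the meaningful entries are
those with `a, b ∈ Ĩ = {-r,…,-1,1,…,r}`).  Here `C` is the (generalized Cartan) matrix,
`jm j = j₋`, `jp j = j₊` and `eps j = ε_j`. -/
def Btilde (C : ℕ → ℕ → ℤ) (jm jp : ℕ → ℕ) (eps : ℕ → ℚ) (a b : ℤ) : ℚ :=
  (C a.natAbs b.natAbs : ℚ) / 2 *
    (if a < 0 then
      (if b < 0 then
        eps b.natAbs * (dd (jm a.natAbs < jm b.natAbs ∧ jm b.natAbs < jp a.natAbs)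
            + dd (jm a.natAbs < jp b.natAbs ∧ jp b.natAbs < jp a.natAbs))
          - eps a.natAbs * (dd (jm b.natAbs < jm a.natAbs ∧ jm a.natAbs < jp b.natAbs)
            + dd (jm b.natAbs < jp a.natAbs ∧ jp a.natAbs < jp b.natAbs))
      else
        -(eps a.natAbs * (2 * dd (a.natAbs = b.natAbs) + dd (jm a.natAbs < jm b.natAbs)
            + dd (jp a.natAbs < jm b.natAbs) + dd (jp b.natAbs < jm a.natAbs)
            + dd (jp b.natAbs < jp a.natAbs))
          + eps b.natAbs * (dd (jm a.natAbs < jm b.natAbs ∧ jm b.natAbs < jp a.natAbs)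
            + dd (jm a.natAbs < jp b.natAbs ∧ jp b.natAbs < jp a.natAbs))))
    else
      (if b < 0 then
        eps b.natAbs * (2 * dd (a.natAbs = b.natAbs) + dd (jm b.natAbs < jm a.natAbs)
            + dd (jp b.natAbs < jm a.natAbs) + dd (jp a.natAbs < jm b.natAbs)
            + dd (jp a.natAbs < jp b.natAbs))
          + eps a.natAbs * (dd (jm b.natAbs < jm a.natAbs ∧ jm a.natAbs < jp b.natAbs)
            + dd (jm b.natAbs < jp a.natAbs ∧ jp a.natAbs < jp b.natAbs))
      else
        eps a.natAbs * (dd (jm a.natAbs < jm b.natAbs) + dd (jp a.natAbs < jm b.natAbs)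
            + dd (jp b.natAbs < jm a.natAbs) + dd (jp b.natAbs < jp a.natAbs))
          - eps b.natAbs * (dd (jm b.natAbs < jm a.natAbs) + dd (jp b.natAbs < jm a.natAbs)
            + dd (jp a.natAbs < jm b.natAbs) + dd (jp a.natAbs < jp b.natAbs))))

/-- `w` is a Coxeter double word: the positions `1,…,2r` are mapped bijectively onto
`Ĩ = {-r,…,-1,1,…,r}`. -/
def IsCoxWord (r : ℕ) (w : ℕ → ℤ) : Prop :=
  (∀ m, 1 ≤ m → m ≤ 2 * r → w m ≠ 0 ∧ (w m).natAbs ≤ r) ∧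
    ∀ a : ℤ, a ≠ 0 → a.natAbs ≤ r → ∃! m, 1 ≤ m ∧ m ≤ 2 * r ∧ w m = a

/-- `jm j = j₋ < j₊ = jp j` are the two positions of the word `w` carrying a letter of
absolute value `j`, and `eps j = ε_j = 1` if `w j₋ > 0` and `-1` otherwise. -/
def PosData (r : ℕ) (w : ℕ → ℤ) (jm jp : ℕ → ℕ) (eps : ℕ → ℚ) : Prop :=
  ∀ j, 1 ≤ j → j ≤ r →
    1 ≤ jm j ∧ jm j < jp j ∧ jp j ≤ 2 * r ∧
      (w (jm j)).natAbs = j ∧ (w (jp j)).natAbs = j ∧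
      eps j = (if 0 < w (jm j) then 1 else -1)

/-- `C` is an `r × r` generalized Cartan matrix (on the indices `1,…,r`). -/
def IsGCM (r : ℕ) (C : ℕ → ℕ → ℤ) : Prop :=
  (∀ j, 1 ≤ j → j ≤ r → C j j = 2) ∧
    (∀ j k, 1 ≤ j → j ≤ r → 1 ≤ k → k ≤ r → j ≠ k → C j k ≤ 0) ∧
    (∀ j k, 1 ≤ j → j ≤ r → 1 ≤ k → k ≤ r → (C j k = 0 ↔ C k j = 0))

/-- Matrix mutation at the index `m`:
`μ_m(B)_{a,b} = -B_{a,b}` if `a = m` or `b = m`, and otherwise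
`μ_m(B)_{a,b} = B_{a,b} + sgn(B_{a,m})·max(B_{a,m}·B_{m,b}, 0)`. -/
def mutB (m : ℤ) (B : ℤ → ℤ → ℚ) : ℤ → ℤ → ℚ := fun a b =>
  if a = m ∨ b = m then -B a b
  else B a b +
    (if 0 < B a m then (1 : ℚ) else if B a m < 0 then -1 else 0) * max (B a m * B m b) 0


/-! ### Auxiliary lemmas -/

lemma dd_nonneg (P : Prop) : 0 ≤ dd P := by unfold dd; split_ifs <;> norm_num

lemma dd_le_one (P : Prop) : dd P ≤ 1 := by unfold dd; split_ifs <;> norm_num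

lemma corr_zero {X Y : ℚ} (h : X * Y ≤ 0) :
    (if 0 < X then (1 : ℚ) else if X < 0 then -1 else 0) * max (X * Y) 0 = 0 := by
  rw [max_eq_right h, mul_zero]

lemma corr_eq {X Y e : ℚ} (hXY : 0 ≤ X * Y) (h : 0 ≤ e * X) (he : e = 1 ∨ e = -1) :
    (if 0 < X then (1 : ℚ) else if X < 0 then -1 else 0) * max (X * Y) 0 = e * (X * Y) := by
  rw [max_eq_left hXY]
  rcases he with rfl | rfl
  · rw [one_mul] at h
    rcases h.lt_or_eq with h1 | h1
    · rw [if_pos h1]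
    · rw [← h1]; norm_num
  · have h' : X ≤ 0 := by linarith
    rcases h'.lt_or_eq with h1 | h1
    · rw [if_neg (by linarith), if_pos h1]
    · rw [h1]; norm_num

lemma Btilde_congr {C : ℕ → ℕ → ℤ} {jm jp jm2 jp2 : ℕ → ℕ} {eps eps2 : ℕ → ℚ} {a b : ℤ}
    (h1 : jm a.natAbs = jm2 a.natAbs) (h2 : jp a.natAbs = jp2 a.natAbs)
    (h3 : eps a.natAbs = eps2 a.natAbs)
    (h4 : jm b.natAbs = jm2 b.natAbs) (h5 : jp b.natAbs = jp2 b.natAbs)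
    (h6 : eps b.natAbs = eps2 b.natAbs) :
    Btilde C jm jp eps a b = Btilde C jm2 jp2 eps2 a b := by
  unfold Btilde; rw [h1, h2, h3, h4, h5, h6]

section entries

variable {C : ℕ → ℕ → ℤ} {jm jp : ℕ → ℕ} {eps : ℕ → ℚ} {k j l : ℕ}

lemma E_nn (hj : 1 ≤ j) (hl : 1 ≤ l) (hlj : l ≠ j)
    (hjm : jm j = k) (hjp : jp j = k + 1)
    (h1 : jm l ≠ k) (h2 : jm l ≠ k + 1) (h3 : jp l ≠ k) (h4 : jp l ≠ k + 1)
    (h5 : jm l < jp l) :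
    Btilde C jm jp eps (-(j : ℤ)) (-(l : ℤ)) =
      (-(C j l : ℚ)) * eps j * dd (jm l < k ∧ k < jp l) := by
  simp only [Btilde, Int.natAbs_neg, Int.natAbs_natCast]
  rw [if_pos (show (-(j : ℤ)) < 0 by omega), if_pos (show (-(l : ℤ)) < 0 by omega), hjm, hjp]
  simp only [dd]
  split_ifs <;> first | ring1 | (exfalso; omega)

lemma E_np (hj : 1 ≤ j) (hl : 1 ≤ l) (hlj : l ≠ j)
    (hjm : jm j = k) (hjp : jp j = k + 1)
    (h1 : jm l ≠ k) (h2 : jm l ≠ k + 1) (h3 : jp l ≠ k) (h4 : jp l ≠ k + 1)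
    (h5 : jm l < jp l) :
    Btilde C jm jp eps (-(j : ℤ)) ((l : ℤ)) =
      (-(C j l : ℚ)) * eps j * (1 - dd (jm l < k ∧ k < jp l)) := by
  simp only [Btilde, Int.natAbs_neg, Int.natAbs_natCast]
  rw [if_pos (show (-(j : ℤ)) < 0 by omega), if_neg (show ¬((l : ℤ) < 0) by omega), hjm, hjp]
  simp only [dd]
  split_ifs <;> first | ring1 | (exfalso; omega)

lemma E_pn (hj : 1 ≤ j) (hl : 1 ≤ l) (hlj : l ≠ j)
    (hjm : jm j = k) (hjp : jp j = k + 1)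
    (h1 : jm l ≠ k) (h2 : jm l ≠ k + 1) (h3 : jp l ≠ k) (h4 : jp l ≠ k + 1)
    (h5 : jm l < jp l) :
    Btilde C jm jp eps ((l : ℤ)) (-(j : ℤ)) =
      ((C l j : ℚ)) * eps j * (1 - dd (jm l < k ∧ k < jp l)) := by
  simp only [Btilde, Int.natAbs_neg, Int.natAbs_natCast]
  rw [if_neg (show ¬((l : ℤ) < 0) by omega), if_pos (show (-(j : ℤ)) < 0 by omega), hjm, hjp]
  simp only [dd]
  split_ifs <;> first | ring1 | (exfalso; omega)

lemma E_nn2 (hj : 1 ≤ j) (hl : 1 ≤ l) (hlj : l ≠ j)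
    (hjm : jm j = k) (hjp : jp j = k + 1)
    (h1 : jm l ≠ k) (h2 : jm l ≠ k + 1) (h3 : jp l ≠ k) (h4 : jp l ≠ k + 1)
    (h5 : jm l < jp l) :
    Btilde C jm jp eps (-(l : ℤ)) (-(j : ℤ)) =
      ((C l j : ℚ)) * eps j * dd (jm l < k ∧ k < jp l) := by
  simp only [Btilde, Int.natAbs_neg, Int.natAbs_natCast]
  rw [if_pos (show (-(l : ℤ)) < 0 by omega), if_pos (show (-(j : ℤ)) < 0 by omega), hjm, hjp]
  simp only [dd]
  split_ifs <;> first | ring1 | (exfalso; omega)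

lemma E_jn (hj : 1 ≤ j) (hl : 1 ≤ l) (hlj : l ≠ j)
    (hjm : jm j = k) (hjp : jp j = k + 1)
    (h1 : jm l ≠ k) (h2 : jm l ≠ k + 1) (h3 : jp l ≠ k) (h4 : jp l ≠ k + 1)
    (h5 : jm l < jp l) :
    Btilde C jm jp eps ((j : ℤ)) (-(l : ℤ)) =
      ((C j l : ℚ)) * (eps l + eps j * dd (jm l < k ∧ k < jp l)) := by
  simp only [Btilde, Int.natAbs_neg, Int.natAbs_natCast]
  rw [if_neg (show ¬((j : ℤ) < 0) by omega), if_pos (show (-(l : ℤ)) < 0 by omega), hjm, hjp]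
  simp only [dd]
  split_ifs <;> first | ring1 | (exfalso; omega)

lemma E_jp (hj : 1 ≤ j) (hl : 1 ≤ l) (hlj : l ≠ j)
    (hjm : jm j = k) (hjp : jp j = k + 1)
    (h1 : jm l ≠ k) (h2 : jm l ≠ k + 1) (h3 : jp l ≠ k) (h4 : jp l ≠ k + 1)
    (h5 : jm l < jp l) :
    Btilde C jm jp eps ((j : ℤ)) ((l : ℤ)) =
      ((C j l : ℚ)) * (eps j * (1 - dd (jm l < k ∧ k < jp l)) - eps l) := by
  simp only [Btilde, Int.natAbs_neg, Int.natAbs_natCast]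
  rw [if_neg (show ¬((j : ℤ) < 0) by omega), if_neg (show ¬((l : ℤ) < 0) by omega), hjm, hjp]
  simp only [dd]
  split_ifs <;> first | ring1 | (exfalso; omega)

lemma E_nj (hj : 1 ≤ j) (hl : 1 ≤ l) (hlj : l ≠ j)
    (hjm : jm j = k) (hjp : jp j = k + 1)
    (h1 : jm l ≠ k) (h2 : jm l ≠ k + 1) (h3 : jp l ≠ k) (h4 : jp l ≠ k + 1)
    (h5 : jm l < jp l) :
    Btilde C jm jp eps (-(l : ℤ)) ((j : ℤ)) =
      (-(C l j : ℚ)) * (eps l + eps j * dd (jm l < k ∧ k < jp l)) := by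
  simp only [Btilde, Int.natAbs_neg, Int.natAbs_natCast]
  rw [if_pos (show (-(l : ℤ)) < 0 by omega), if_neg (show ¬((j : ℤ) < 0) by omega), hjm, hjp]
  simp only [dd]
  split_ifs <;> first | ring1 | (exfalso; omega)

lemma E_pj (hj : 1 ≤ j) (hl : 1 ≤ l) (hlj : l ≠ j)
    (hjm : jm j = k) (hjp : jp j = k + 1)
    (h1 : jm l ≠ k) (h2 : jm l ≠ k + 1) (h3 : jp l ≠ k) (h4 : jp l ≠ k + 1)
    (h5 : jm l < jp l) :
    Btilde C jm jp eps ((l : ℤ)) ((j : ℤ)) =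
      ((C l j : ℚ)) * (eps l - eps j * (1 - dd (jm l < k ∧ k < jp l))) := by
  simp only [Btilde, Int.natAbs_neg, Int.natAbs_natCast]
  rw [if_neg (show ¬((l : ℤ) < 0) by omega), if_neg (show ¬((j : ℤ) < 0) by omega), hjm, hjp]
  simp only [dd]
  split_ifs <;> first | ring1 | (exfalso; omega)

lemma E_njnj (hj : 1 ≤ j) :
    Btilde C jm jp eps (-(j : ℤ)) (-(j : ℤ)) = 0 := by
  simp only [Btilde, Int.natAbs_neg, Int.natAbs_natCast]
  rw [if_pos (show (-(j : ℤ)) < 0 by omega), if_pos (show (-(j : ℤ)) < 0 by omega)]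
  ring

lemma E_jj (hj : 1 ≤ j) :
    Btilde C jm jp eps ((j : ℤ)) ((j : ℤ)) = 0 := by
  simp only [Btilde, Int.natAbs_neg, Int.natAbs_natCast]
  rw [if_neg (show ¬((j : ℤ) < 0) by omega), if_neg (show ¬((j : ℤ) < 0) by omega)]
  ring

lemma E_njj (hj : 1 ≤ j) (hCjj : C j j = 2)
    (hjm : jm j = k) (hjp : jp j = k + 1) :
    Btilde C jm jp eps (-(j : ℤ)) ((j : ℤ)) = -2 * eps j := by
  simp only [Btilde, Int.natAbs_neg, Int.natAbs_natCast]
  rw [if_pos (show (-(j : ℤ)) < 0 by omega), if_neg (show ¬((j : ℤ) < 0) by omega), hjm, hjp,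
    hCjj]
  simp only [dd]
  split_ifs <;> first | (push_cast; ring1) | (exfalso; omega)

lemma E_jnj (hj : 1 ≤ j) (hCjj : C j j = 2)
    (hjm : jm j = k) (hjp : jp j = k + 1) :
    Btilde C jm jp eps ((j : ℤ)) (-(j : ℤ)) = 2 * eps j := by
  simp only [Btilde, Int.natAbs_neg, Int.natAbs_natCast]
  rw [if_neg (show ¬((j : ℤ) < 0) by omega), if_pos (show (-(j : ℤ)) < 0 by omega), hjm, hjp,
    hCjj]
  simp only [dd]
  split_ifs <;> first | (push_cast; ring1) | (exfalso; omega)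

end entries

set_option maxHeartbeats 2000000 in
/-- Proposition 3.6(1): if the Coxeter double words `𝐢` and `𝐢'` differ by swapping two
adjacent entries `i_k = -i_{k+1}`, then `B̃_{𝐢'} = μ_{-j}(B̃_𝐢)` where `j = |i_k|`. -/
theorem stmt_12 (r : ℕ) (hr : 1 ≤ r) (C : ℕ → ℕ → ℤ) (hC : IsGCM r C)
    (w w' : ℕ → ℤ) (hw : IsCoxWord r w) (hw' : IsCoxWord r w')
    (jm jp : ℕ → ℕ) (eps : ℕ → ℚ) (hpos : PosData r w jm jp eps)
    (jm' jp' : ℕ → ℕ) (eps' : ℕ → ℚ) (hpos' : PosData r w' jm' jp' eps')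
    (k : ℕ) (hk1 : 1 ≤ k) (hk2 : k + 1 ≤ 2 * r)
    (hswap1 : w' k = w (k + 1)) (hswap2 : w' (k + 1) = w k)
    (hswap3 : ∀ m, m ≠ k → m ≠ k + 1 → w' m = w m)
    (hopp : w k = -(w (k + 1))) :
    ∀ a b : ℤ, a ≠ 0 → a.natAbs ≤ r → b ≠ 0 → b.natAbs ≤ r →
      Btilde C jm' jp' eps' a b
        = mutB (-((w k).natAbs : ℤ)) (Btilde C jm jp eps) a b := by
  obtain ⟨hwdom, hwuniq⟩ := hw
  obtain ⟨g1, g2, g3⟩ := hC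
  have hk2r : k ≤ 2 * r := by omega
  obtain ⟨hwk0, hwkr⟩ := hwdom k hk1 hk2r
  set j := (w k).natAbs with hjdef
  have hj1 : 1 ≤ j := by
    have := Int.natAbs_pos.mpr hwk0; omega
  have hjr : j ≤ r := hwkr
  have hwk1 : w (k + 1) = -(w k) := by omega
  have hchar : ∀ m, 1 ≤ m → m ≤ 2 * r → (w m).natAbs = j → m = k ∨ m = k + 1 := by
    intro m hm1 hm2 hab
    have h1 : w m = w k ∨ w m = -(w k) :=
      Int.natAbs_eq_natAbs_iff.mp (hab.trans hjdef)
    rcases h1 with h1 | h1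
    · obtain ⟨p, _, hup⟩ := hwuniq (w k) hwk0 hwkr
      have e1 := hup m ⟨hm1, hm2, h1⟩
      have e2 := hup k ⟨hk1, hk2r, rfl⟩
      omega
    · obtain ⟨p, _, hup⟩ := hwuniq (-(w k)) (by omega) (by rwa [Int.natAbs_neg])
      have e1 := hup m ⟨hm1, hm2, h1⟩
      have e2 := hup (k + 1) ⟨by omega, hk2, hwk1⟩
      omega
  obtain ⟨pa1, pa2, pa3, pa4, pa5, pa6⟩ := hpos j hj1 hjr
  have hjmj : jm j = k ∧ jp j = k + 1 := by
    have c1 := hchar (jm j) pa1 (by omega) pa4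
    have c2 := hchar (jp j) (by omega) pa3 pa5
    omega
  have hjm : jm j = k := hjmj.1
  have hjp : jp j = k + 1 := hjmj.2
  have hAbs : ∀ m, (w' m).natAbs = (w m).natAbs := by
    intro m
    by_cases e1 : m = k
    · subst e1; rw [hswap1, hwk1, Int.natAbs_neg]
    · by_cases e2 : m = k + 1
      · subst e2; rw [hswap2, hwk1, Int.natAbs_neg]
      · rw [hswap3 m e1 e2]
  have hsame : ∀ l, 1 ≤ l → l ≤ r → jm' l = jm l ∧ jp' l = jp l := by
    intro l h1 h2
    obtain ⟨a1, a2, a3, a4, a5, _⟩ := hpos l h1 h2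
    obtain ⟨b1, b2, b3, b4, b5, _⟩ := hpos' l h1 h2
    obtain ⟨p, hp, hup⟩ := hwuniq (l : ℤ) (by omega) (by simp; omega)
    obtain ⟨q, hq, huq⟩ := hwuniq (-(l : ℤ)) (by omega) (by simp; omega)
    have hpq : p ≠ q := by
      have e1 := hp.2.2
      have e2 := hq.2.2
      intro h; subst h; omega
    have hmem : ∀ m, 1 ≤ m → m ≤ 2 * r → (w m).natAbs = l → m = p ∨ m = q := by
      intro m hm1 hm2 habs
      rcases Int.natAbs_eq (w m) with h | h <;> rw [habs] at h
      · exact Or.inl (hup m ⟨hm1, hm2, h⟩)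
      · exact Or.inr (huq m ⟨hm1, hm2, h⟩)
    have m1 := hmem (jm l) a1 (by omega) a4
    have m2 := hmem (jp l) (by omega) a3 a5
    have m3 := hmem (jm' l) b1 (by omega) (by rw [← hAbs]; exact b4)
    have m4 := hmem (jp' l) (by omega) b3 (by rw [← hAbs]; exact b5)
    omega
  have hjm' : jm' j = k := by rw [(hsame j hj1 hjr).1]; exact hjm
  have hjp' : jp' j = k + 1 := by rw [(hsame j hj1 hjr).2]; exact hjp
  obtain ⟨pb1, pb2, pb3, pb4, pb5, pb6⟩ := hpos' j hj1 hjr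
  have hE : eps' j = -eps j := by
    rw [pb6, pa6, hjm', hjm, hswap1, hwk1]
    by_cases h : 0 < w k
    · rw [if_pos h, if_neg (by omega)]
    · rw [if_neg h, if_pos (by omega)]; norm_num
  have hpm : eps j = 1 ∨ eps j = -1 := by
    rw [pa6]; split_ifs <;> simp
  have hCjj : C j j = 2 := g1 j hj1 hjr
  have HH : ∀ l, 1 ≤ l → l ≤ r → l ≠ j →
      jm l ≠ k ∧ jm l ≠ k + 1 ∧ jp l ≠ k ∧ jp l ≠ k + 1 ∧ jm l < jp l ∧
      jm' l ≠ k ∧ jm' l ≠ k + 1 ∧ jp' l ≠ k ∧ jp' l ≠ k + 1 ∧ jm' l < jp' l ∧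
      jm' l = jm l ∧ jp' l = jp l ∧ eps' l = eps l ∧
      ((C j l : ℚ) ≤ 0) ∧ ((C l j : ℚ) ≤ 0) := by
    intro l h1 h2 h3
    obtain ⟨a1, a2, a3, a4, a5, a6⟩ := hpos l h1 h2
    obtain ⟨s1, s2⟩ := hsame l h1 h2
    have q1 : jm l ≠ k := by intro h; rw [h] at a4; omega
    have q2 : jm l ≠ k + 1 := by
      intro h; rw [h, hwk1, Int.natAbs_neg] at a4; omega
    have q3 : jp l ≠ k := by intro h; rw [h] at a5; omega
    have q4 : jp l ≠ k + 1 := by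
      intro h; rw [h, hwk1, Int.natAbs_neg] at a5; omega
    obtain ⟨_, _, _, _, _, b6⟩ := hpos' l h1 h2
    have e1 : eps' l = eps l := by
      rw [b6, a6, s1, hswap3 (jm l) q1 q2]
    have c1 : ((C j l : ℚ) ≤ 0) := by
      exact_mod_cast g2 j l hj1 hjr h1 h2 (Ne.symm h3)
    have c2 : ((C l j : ℚ) ≤ 0) := by
      exact_mod_cast g2 l j h1 h2 hj1 hjr h3
    exact ⟨q1, q2, q3, q4, a2, by rw [s1]; exact q1, by rw [s1]; exact q2,
      by rw [s2]; exact q3, by rw [s2]; exact q4, by rw [s1, s2]; exact a2,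
      s1, s2, e1, c1, c2⟩
  intro a b ha0 har hb0 hbr
  obtain ⟨l, hl1, hlr, hav⟩ : ∃ l, 1 ≤ l ∧ l ≤ r ∧ (a = (l : ℤ) ∨ a = -(l : ℤ)) :=
    ⟨a.natAbs, Int.natAbs_pos.mpr ha0, har, Int.natAbs_eq a⟩
  obtain ⟨m, hm1, hmr, hbv⟩ : ∃ m, 1 ≤ m ∧ m ≤ r ∧ (b = (m : ℤ) ∨ b = -(m : ℤ)) :=
    ⟨b.natAbs, Int.natAbs_pos.mpr hb0, hbr, Int.natAbs_eq b⟩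
  simp only [mutB]
  rcases hav with rfl | rfl
  · -- a = l > 0
    by_cases hlj : l = j
    · subst hlj
      rcases hbv with rfl | rfl
      · by_cases hmj : m = j
        · subst hmj
          -- (j, j)
          rw [if_neg (by omega), E_jj hj1, E_jj hj1,
            E_jnj hj1 hCjj hjm hjp, E_njj hj1 hCjj hjm hjp]
          rw [corr_zero (show (2 * eps j) * (-2 * eps j) ≤ 0 by
            rcases hpm with h | h <;> rw [h] <;> norm_num)]
          norm_num
        · -- (j, m)
          obtain ⟨n1, n2, n3, n4, n5, p1, p2, p3, p4, p5, s1, s2, e1, c1, c2⟩ :=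
            HH m hm1 hmr hmj
          rw [if_neg (by omega), E_jp hj1 hm1 hmj hjm' hjp' p1 p2 p3 p4 p5,
            s1, s2, hE, e1,
            E_jp hj1 hm1 hmj hjm hjp n1 n2 n3 n4 n5,
            E_jnj hj1 hCjj hjm hjp,
            E_np hj1 hm1 hmj hjm hjp n1 n2 n3 n4 n5]
          rw [corr_eq
            (show 0 ≤ (2 * eps j) * ((-(C j m : ℚ)) * eps j * (1 - dd (jm m < k ∧ k < jp m))) by
              rcases hpm with h | h <;> rw [h] <;>
                nlinarith [dd_le_one (jm m < k ∧ k < jp m), c1])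
            (show 0 ≤ eps j * (2 * eps j) by
              rcases hpm with h | h <;> rw [h] <;> norm_num)
            hpm]
          rcases hpm with h | h <;> rw [h] <;> ring
      · by_cases hmj : m = j
        · subst hmj
          -- (j, -j)
          rw [if_pos (Or.inr rfl), E_jnj hj1 hCjj hjm' hjp', E_jnj hj1 hCjj hjm hjp, hE]
          ring
        · -- (j, -m)
          obtain ⟨n1, n2, n3, n4, n5, p1, p2, p3, p4, p5, s1, s2, e1, c1, c2⟩ :=
            HH m hm1 hmr hmj
          rw [if_neg (by omega), E_jn hj1 hm1 hmj hjm' hjp' p1 p2 p3 p4 p5,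
            s1, s2, hE, e1,
            E_jn hj1 hm1 hmj hjm hjp n1 n2 n3 n4 n5,
            E_jnj hj1 hCjj hjm hjp,
            E_nn hj1 hm1 hmj hjm hjp n1 n2 n3 n4 n5]
          rw [corr_eq
            (show 0 ≤ (2 * eps j) * ((-(C j m : ℚ)) * eps j * dd (jm m < k ∧ k < jp m)) by
              rcases hpm with h | h <;> rw [h] <;>
                nlinarith [dd_nonneg (jm m < k ∧ k < jp m), c1])
            (show 0 ≤ eps j * (2 * eps j) by
              rcases hpm with h | h <;> rw [h] <;> norm_num)
            hpm]
          rcases hpm with h | h <;> rw [h] <;> ring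
    · obtain ⟨n1, n2, n3, n4, n5, p1, p2, p3, p4, p5, s1, s2, e1, c1, c2⟩ :=
        HH l hl1 hlr hlj
      rcases hbv with rfl | rfl
      · by_cases hmj : m = j
        · subst hmj
          -- (l, j)
          rw [if_neg (by omega), E_pj hj1 hl1 hlj hjm' hjp' p1 p2 p3 p4 p5,
            s1, s2, hE, e1,
            E_pj hj1 hl1 hlj hjm hjp n1 n2 n3 n4 n5,
            E_pn hj1 hl1 hlj hjm hjp n1 n2 n3 n4 n5,
            E_njj hj1 hCjj hjm hjp]
          rw [corr_eq
            (show 0 ≤ ((C l j : ℚ)) * eps j * (1 - dd (jm l < k ∧ k < jp l)) * (-2 * eps j) by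
              rcases hpm with h | h <;> rw [h] <;>
                nlinarith [dd_le_one (jm l < k ∧ k < jp l), c2])
            (show 0 ≤ (-eps j) * (((C l j : ℚ)) * eps j * (1 - dd (jm l < k ∧ k < jp l))) by
              rcases hpm with h | h <;> rw [h] <;>
                nlinarith [dd_le_one (jm l < k ∧ k < jp l), c2])
            (by rcases hpm with h | h <;> rw [h] <;> norm_num)]
          rcases hpm with h | h <;> rw [h] <;> ring
        · -- (l, m)
          obtain ⟨o1, o2, o3, o4, o5, q1, q2, q3, q4, q5, t1, t2, f1, d1, d2⟩ :=
            HH m hm1 hmr hmj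
          rw [if_neg (by omega),
            Btilde_congr (a := (l : ℤ)) (b := (m : ℤ)) (by simpa using s1) (by simpa using s2)
              (by simpa using e1) (by simpa using t1) (by simpa using t2) (by simpa using f1),
            E_pn hj1 hl1 hlj hjm hjp n1 n2 n3 n4 n5,
            E_np hj1 hm1 hmj hjm hjp o1 o2 o3 o4 o5]
          rw [corr_zero (show ((C l j : ℚ)) * eps j * (1 - dd (jm l < k ∧ k < jp l)) *
              ((-(C j m : ℚ)) * eps j * (1 - dd (jm m < k ∧ k < jp m))) ≤ 0 by
            have hP' : (0:ℚ) ≤ 1 - dd (jm l < k ∧ k < jp l) := by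
              linarith [dd_le_one (jm l < k ∧ k < jp l)]
            have hQ' : (0:ℚ) ≤ 1 - dd (jm m < k ∧ k < jp m) := by
              linarith [dd_le_one (jm m < k ∧ k < jp m)]
            have key : (0:ℚ) ≤ (-(C l j : ℚ)) * (1 - dd (jm l < k ∧ k < jp l)) *
                ((-(C j m : ℚ)) * (1 - dd (jm m < k ∧ k < jp m))) :=
              mul_nonneg (mul_nonneg (neg_nonneg.mpr c2) hP')
                (mul_nonneg (neg_nonneg.mpr d1) hQ')
            rcases hpm with h | h <;> rw [h] <;> nlinarith [key])]
          ring
      · by_cases hmj : m = j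
        · subst hmj
          -- (l, -j)
          rw [if_pos (Or.inr rfl), E_pn hj1 hl1 hlj hjm' hjp' p1 p2 p3 p4 p5,
            s1, s2, hE, E_pn hj1 hl1 hlj hjm hjp n1 n2 n3 n4 n5]
          ring
        · -- (l, -m)
          obtain ⟨o1, o2, o3, o4, o5, q1, q2, q3, q4, q5, t1, t2, f1, d1, d2⟩ :=
            HH m hm1 hmr hmj
          rw [if_neg (by omega),
            Btilde_congr (a := (l : ℤ)) (b := -(m : ℤ)) (by simpa using s1) (by simpa using s2)
              (by simpa using e1) (by simpa using t1) (by simpa using t2) (by simpa using f1),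
            E_pn hj1 hl1 hlj hjm hjp n1 n2 n3 n4 n5,
            E_nn hj1 hm1 hmj hjm hjp o1 o2 o3 o4 o5]
          rw [corr_zero (show ((C l j : ℚ)) * eps j * (1 - dd (jm l < k ∧ k < jp l)) *
              ((-(C j m : ℚ)) * eps j * dd (jm m < k ∧ k < jp m)) ≤ 0 by
            have hP' : (0:ℚ) ≤ 1 - dd (jm l < k ∧ k < jp l) := by
              linarith [dd_le_one (jm l < k ∧ k < jp l)]
            have key : (0:ℚ) ≤ (-(C l j : ℚ)) * (1 - dd (jm l < k ∧ k < jp l)) *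
                ((-(C j m : ℚ)) * dd (jm m < k ∧ k < jp m)) :=
              mul_nonneg (mul_nonneg (neg_nonneg.mpr c2) hP')
                (mul_nonneg (neg_nonneg.mpr d1) (dd_nonneg _))
            rcases hpm with h | h <;> rw [h] <;> nlinarith [key])]
          ring
  · -- a = -l < 0
    by_cases hlj : l = j
    · subst hlj
      rw [if_pos (Or.inl rfl)]
      rcases hbv with rfl | rfl
      · by_cases hmj : m = j
        · subst hmj
          -- (-j, j)
          rw [E_njj hj1 hCjj hjm' hjp', E_njj hj1 hCjj hjm hjp, hE]; ring
        · -- (-j, m)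
          obtain ⟨n1, n2, n3, n4, n5, p1, p2, p3, p4, p5, s1, s2, e1, c1, c2⟩ :=
            HH m hm1 hmr hmj
          rw [E_np hj1 hm1 hmj hjm' hjp' p1 p2 p3 p4 p5, s1, s2, hE,
            E_np hj1 hm1 hmj hjm hjp n1 n2 n3 n4 n5]
          ring
      · by_cases hmj : m = j
        · subst hmj
          -- (-j, -j)
          rw [E_njnj hj1, E_njnj hj1]; norm_num
        · -- (-j, -m)
          obtain ⟨n1, n2, n3, n4, n5, p1, p2, p3, p4, p5, s1, s2, e1, c1, c2⟩ :=
            HH m hm1 hmr hmj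
          rw [E_nn hj1 hm1 hmj hjm' hjp' p1 p2 p3 p4 p5, s1, s2, hE,
            E_nn hj1 hm1 hmj hjm hjp n1 n2 n3 n4 n5]
          ring
    · obtain ⟨n1, n2, n3, n4, n5, p1, p2, p3, p4, p5, s1, s2, e1, c1, c2⟩ :=
        HH l hl1 hlr hlj
      rcases hbv with rfl | rfl
      · by_cases hmj : m = j
        · subst hmj
          -- (-l, j)
          rw [if_neg (by omega), E_nj hj1 hl1 hlj hjm' hjp' p1 p2 p3 p4 p5,
            s1, s2, hE, e1,
            E_nj hj1 hl1 hlj hjm hjp n1 n2 n3 n4 n5,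
            E_nn2 hj1 hl1 hlj hjm hjp n1 n2 n3 n4 n5,
            E_njj hj1 hCjj hjm hjp]
          rw [corr_eq
            (show 0 ≤ ((C l j : ℚ)) * eps j * dd (jm l < k ∧ k < jp l) * (-2 * eps j) by
              rcases hpm with h | h <;> rw [h] <;>
                nlinarith [dd_nonneg (jm l < k ∧ k < jp l), c2])
            (show 0 ≤ (-eps j) * (((C l j : ℚ)) * eps j * dd (jm l < k ∧ k < jp l)) by
              rcases hpm with h | h <;> rw [h] <;>
                nlinarith [dd_nonneg (jm l < k ∧ k < jp l), c2])
            (by rcases hpm with h | h <;> rw [h] <;> norm_num)]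
          rcases hpm with h | h <;> rw [h] <;> ring
        · -- (-l, m)
          obtain ⟨o1, o2, o3, o4, o5, q1, q2, q3, q4, q5, t1, t2, f1, d1, d2⟩ :=
            HH m hm1 hmr hmj
          rw [if_neg (by omega),
            Btilde_congr (a := -(l : ℤ)) (b := (m : ℤ)) (by simpa using s1) (by simpa using s2)
              (by simpa using e1) (by simpa using t1) (by simpa using t2) (by simpa using f1),
            E_nn2 hj1 hl1 hlj hjm hjp n1 n2 n3 n4 n5,
            E_np hj1 hm1 hmj hjm hjp o1 o2 o3 o4 o5]
          rw [corr_zero (show ((C l j : ℚ)) * eps j * dd (jm l < k ∧ k < jp l) *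
              ((-(C j m : ℚ)) * eps j * (1 - dd (jm m < k ∧ k < jp m))) ≤ 0 by
            have hQ' : (0:ℚ) ≤ 1 - dd (jm m < k ∧ k < jp m) := by
              linarith [dd_le_one (jm m < k ∧ k < jp m)]
            have key : (0:ℚ) ≤ (-(C l j : ℚ)) * dd (jm l < k ∧ k < jp l) *
                ((-(C j m : ℚ)) * (1 - dd (jm m < k ∧ k < jp m))) :=
              mul_nonneg (mul_nonneg (neg_nonneg.mpr c2) (dd_nonneg _))
                (mul_nonneg (neg_nonneg.mpr d1) hQ')
            rcases hpm with h | h <;> rw [h] <;> nlinarith [key])]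
          ring
      · by_cases hmj : m = j
        · subst hmj
          -- (-l, -j)
          rw [if_pos (Or.inr rfl), E_nn2 hj1 hl1 hlj hjm' hjp' p1 p2 p3 p4 p5,
            s1, s2, hE, E_nn2 hj1 hl1 hlj hjm hjp n1 n2 n3 n4 n5]
          ring
        · -- (-l, -m)
          obtain ⟨o1, o2, o3, o4, o5, q1, q2, q3, q4, q5, t1, t2, f1, d1, d2⟩ :=
            HH m hm1 hmr hmj
          rw [if_neg (by omega),
            Btilde_congr (a := -(l : ℤ)) (b := -(m : ℤ)) (by simpa using s1) (by simpa using s2)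
              (by simpa using e1) (by simpa using t1) (by simpa using t2) (by simpa using f1),
            E_nn2 hj1 hl1 hlj hjm hjp n1 n2 n3 n4 n5,
            E_nn hj1 hm1 hmj hjm hjp o1 o2 o3 o4 o5]
          rw [corr_zero (show ((C l j : ℚ)) * eps j * dd (jm l < k ∧ k < jp l) *
              ((-(C j m : ℚ)) * eps j * dd (jm m < k ∧ k < jp m)) ≤ 0 by
            have key : (0:ℚ) ≤ (-(C l j : ℚ)) * dd (jm l < k ∧ k < jp l) *
                ((-(C j m : ℚ)) * dd (jm m < k ∧ k < jp m)) :=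
              mul_nonneg (mul_nonneg (neg_nonneg.mpr c2) (dd_nonneg _))
                (mul_nonneg (neg_nonneg.mpr d1) (dd_nonneg _))
            rcases hpm with h | h <;> rw [h] <;> nlinarith [key])]
          ring
end
end

section
/- Let 𝐢 be a Coxeter double word and let 𝐢′ be its cyclic shift: i′_m = i_{m+1} for 1 ≤ m ≤ 2r−1 and i′_{2r} = i_1; set j = |i_1| and let σ_j : Ĩ → Ĩ be the involution with σ_j(a) = −a if |a| = j and σ_j(a) = a otherwise. Then (B̃_{𝐢′})_{σ_j(a),σ_j(b)} = (B̃_𝐢)_{a,b} for all a, b ∈ Ĩ (Proposition 3.7). -/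
open Classical

noncomputable section

/-- The involution `σ_j` of `Ĩ`: `σ_j(a) = -a` if `|a| = j` and `σ_j(a) = a` otherwise. -/
def sigmaI (j : ℕ) (a : ℤ) : ℤ := if a.natAbs = j then -a else a

lemma dd_true : dd True = 1 := by simp [dd]

lemma dd_false : dd False = 0 := by simp [dd]

/-- The two positions `jm k < jp k` carry opposite letters `±k`, and they are the only
positions carrying a letter of absolute value `k`. -/
lemma coxPair {r : ℕ} {w : ℕ → ℤ} {jm jp : ℕ → ℕ} {eps : ℕ → ℚ}
    (hw : IsCoxWord r w) (hpos : PosData r w jm jp eps) (k : ℕ) (hk1 : 1 ≤ k) (hk2 : k ≤ r) :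
    w (jp k) = - w (jm k) ∧
      ∀ m, 1 ≤ m → m ≤ 2 * r → (w m).natAbs = k → m = jm k ∨ m = jp k := by
  obtain ⟨h1, h2, h3, h4, h5, -⟩ := hpos k hk1 hk2
  have hne : w (jm k) ≠ 0 := by
    intro h; rw [h] at h4; simp at h4; omega
  have huniq : ∀ x : ℤ, x ≠ 0 → x.natAbs ≤ r → ∀ m1 m2,
      (1 ≤ m1 ∧ m1 ≤ 2 * r ∧ w m1 = x) → (1 ≤ m2 ∧ m2 ≤ 2 * r ∧ w m2 = x) → m1 = m2 :=
    fun x hx hxr m1 m2 p1 p2 => (hw.2 x hx hxr).unique p1 p2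
  have hwr : (w (jm k)).natAbs ≤ r := by rw [h4]; exact hk2
  have hneg : w (jp k) = - w (jm k) := by
    have habs : (w (jp k)).natAbs = (w (jm k)).natAbs := by rw [h4, h5]
    rcases Int.natAbs_eq_natAbs_iff.mp habs with h | h
    · exfalso
      have := huniq (w (jm k)) hne hwr (jp k) (jm k)
        ⟨by omega, h3, h⟩ ⟨h1, by omega, rfl⟩
      omega
    · exact h
  refine ⟨hneg, fun m hm1 hm2 habs => ?_⟩
  have habs2 : (w m).natAbs = (w (jm k)).natAbs := by rw [habs, h4]
  rcases Int.natAbs_eq_natAbs_iff.mp habs2 with h | h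
  · left; exact huniq (w (jm k)) hne hwr m (jm k) ⟨hm1, hm2, h⟩ ⟨h1, by omega, rfl⟩
  · right
    refine huniq (w (jp k)) (by rw [hneg]; simpa using hne) (by rw [h5]; exact hk2)
      m (jp k) ⟨hm1, hm2, by rw [h, hneg]⟩ ⟨by omega, h3, rfl⟩

set_option maxHeartbeats 1000000 in
/-- Proposition 3.7: if `𝐢'` is the cyclic shift of the Coxeter double word `𝐢`
(`i'_m = i_{m+1}` for `1 ≤ m ≤ 2r-1`, `i'_{2r} = i_1`) and `j = |i_1|`, then
`(B̃_{𝐢'})_{σ_j(a),σ_j(b)} = (B̃_𝐢)_{a,b}` for all `a, b ∈ Ĩ`. -/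
theorem stmt_14 (r : ℕ) (hr : 1 ≤ r) (C : ℕ → ℕ → ℤ) (hC : IsGCM r C)
    (w w' : ℕ → ℤ) (hw : IsCoxWord r w) (hw' : IsCoxWord r w')
    (jm jp : ℕ → ℕ) (eps : ℕ → ℚ) (hpos : PosData r w jm jp eps)
    (jm' jp' : ℕ → ℕ) (eps' : ℕ → ℚ) (hpos' : PosData r w' jm' jp' eps')
    (hshift1 : ∀ m, 1 ≤ m → m ≤ 2 * r - 1 → w' m = w (m + 1))
    (hshift2 : w' (2 * r) = w 1) :
    ∀ a b : ℤ, a ≠ 0 → a.natAbs ≤ r → b ≠ 0 → b.natAbs ≤ r →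
      Btilde C jm' jp' eps' (sigmaI (w 1).natAbs a) (sigmaI (w 1).natAbs b)
        = Btilde C jm jp eps a b := by
  intro a b ha har hb hbr
  set j0 := (w 1).natAbs with hj0def
  have hw1mem := hw.1 1 le_rfl (by omega)
  have hj01 : 1 ≤ j0 := Int.natAbs_pos.mpr hw1mem.1
  have hj0r : j0 ≤ r := hw1mem.2
  have key := coxPair hw hpos
  have key' := coxPair hw' hpos'
  obtain ⟨P1, P2, P3, P4, P5, P6⟩ := hpos j0 hj01 hj0r
  obtain ⟨Q1, Q2, Q3, Q4, Q5, Q6⟩ := hpos' j0 hj01 hj0r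
  -- `jm j0 = 1`
  have h1jm : jm j0 = 1 := by
    have := (key j0 hj01 hj0r).2 1 le_rfl (by omega) hj0def.symm
    omega
  have hp2 : 2 ≤ jp j0 := by omega
  -- shifted value at `jp j0 - 1`
  have hwp : w' (jp j0 - 1) = w (jp j0) := by
    have h := hshift1 (jp j0 - 1) (by omega) (by omega)
    rw [h, show jp j0 - 1 + 1 = jp j0 by omega]
  -- the positions of `±j0` in `w'`
  have hmem1 := (key' j0 hj01 hj0r).2 (2 * r) (by omega) le_rfl
    (by rw [hshift2])
  have hmem2 := (key' j0 hj01 hj0r).2 (jp j0 - 1) (by omega) (by omega)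
    (by rw [hwp]; exact P5)
  have hjm' : jm' j0 = jp j0 - 1 ∧ jp' j0 = 2 * r := by omega
  -- the sign at `j0` flips
  have heps' : eps' j0 = - eps j0 := by
    have e1 := Q6
    rw [hjm'.1, hwp, (key j0 hj01 hj0r).1, h1jm] at e1
    rw [h1jm] at P6
    have hz := hw1mem.1
    rw [e1, P6]
    split_ifs <;> first | omega | norm_num
  -- data for letters `k ≠ j0`
  have fact3 : ∀ k, 1 ≤ k → k ≤ r → k ≠ j0 →
      jm' k = jm k - 1 ∧ jp' k = jp k - 1 ∧ eps' k = eps k ∧ 2 ≤ jm k := by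
    intro k hk1 hk2 hkj
    obtain ⟨b1, b2, b3, b4, b5, b6⟩ := hpos k hk1 hk2
    obtain ⟨c1, c2, c3, c4, c5, c6⟩ := hpos' k hk1 hk2
    have hne2r : jp' k ≠ 2 * r := by
      intro h
      rw [h, hshift2] at c5
      apply hkj; rw [hj0def]; exact c5.symm
    have s1 : w' (jm' k) = w (jm' k + 1) := hshift1 _ c1 (by omega)
    have s2 : w' (jp' k) = w (jp' k + 1) := hshift1 _ (by omega) (by omega)
    have m1 := (key k hk1 hk2).2 (jm' k + 1) (by omega) (by omega) (by rw [← s1]; exact c4)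
    have m2 := (key k hk1 hk2).2 (jp' k + 1) (by omega) (by omega) (by rw [← s2]; exact c5)
    have hjmk : jm' k = jm k - 1 ∧ jp' k = jp k - 1 := by omega
    have hjm1 : jm k ≠ 1 := by
      intro h; rw [h] at b4; rw [hj0def] at hkj; omega
    have heps : eps' k = eps k := by
      rw [c6, b6, s1, hjmk.1, show jm k - 1 + 1 = jm k by omega]
    exact ⟨hjmk.1, hjmk.2, heps, by omega⟩
  have ja1 : 1 ≤ a.natAbs := Int.natAbs_pos.mpr ha
  have jb1 : 1 ≤ b.natAbs := Int.natAbs_pos.mpr hb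
  by_cases hA : a.natAbs = j0 <;> by_cases hB : b.natAbs = j0
  · -- both indices equal `j0`
    rw [show sigmaI j0 a = -a by simp [sigmaI, hA],
        show sigmaI j0 b = -b by simp [sigmaI, hB]]
    simp only [Btilde, Int.natAbs_neg, hA, hB, heps',
      show (jm' j0 < jm' j0) = False from eq_false (by omega),
      show (jp' j0 < jm' j0) = False from eq_false (by omega),
      show (jm' j0 < jp' j0) = True from eq_true (by omega),
      show (jp' j0 < jp' j0) = False from eq_false (by omega),
      show (jm j0 < jm j0) = False from eq_false (by omega),
      show (jp j0 < jm j0) = False from eq_false (by omega),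
      show (jm j0 < jp j0) = True from eq_true (by omega),
      show (jp j0 < jp j0) = False from eq_false (by omega),
      show (j0 = j0) = True from eq_true rfl,
      true_and, and_true, false_and, and_false, dd_true, dd_false, if_true, if_false]
    clear * - ha hb
    split_ifs <;> first | omega | ring
  · -- `|a| = j0`, `|b| ≠ j0`
    obtain ⟨b1, b2, b3, b4⟩ := fact3 b.natAbs jb1 hbr hB
    obtain ⟨q1, q2, q3, q4, q5, q6⟩ := hpos b.natAbs jb1 hbr
    rw [show sigmaI j0 a = -a by simp [sigmaI, hA],
        show sigmaI j0 b = b by simp [sigmaI, hB]]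
    simp only [Btilde, Int.natAbs_neg, hA, b1, b2, b3, heps', hjm'.1, hjm'.2, h1jm,
      show (j0 = b.natAbs) = False from eq_false (Ne.symm hB),
      show (jp j0 - 1 < jm b.natAbs - 1) = (jp j0 < jm b.natAbs) from propext (by omega),
      show (jp j0 - 1 < jp b.natAbs - 1) = (jp j0 < jp b.natAbs) from propext (by omega),
      show (jm b.natAbs - 1 < jp j0 - 1) = (jm b.natAbs < jp j0) from propext (by omega),
      show (jp b.natAbs - 1 < jp j0 - 1) = (jp b.natAbs < jp j0) from propext (by omega),
      show (2 * r < jm b.natAbs - 1) = False from eq_false (by omega),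
      show (2 * r < jp b.natAbs - 1) = False from eq_false (by omega),
      show (jm b.natAbs - 1 < 2 * r) = True from eq_true (by omega),
      show (jp b.natAbs - 1 < 2 * r) = True from eq_true (by omega),
      show (1 < jm b.natAbs) = True from eq_true (by omega),
      show (1 < jp b.natAbs) = True from eq_true (by omega),
      show (jm b.natAbs < 1) = False from eq_false (by omega),
      show (jp b.natAbs < 1) = False from eq_false (by omega),
      true_and, and_true, false_and, and_false, dd_true, dd_false, if_true, if_false]
    clear * - ha hb
    split_ifs <;> first | omega | ring
  · -- `|a| ≠ j0`, `|b| = j0`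
    obtain ⟨a1, a2, a3, a4⟩ := fact3 a.natAbs ja1 har hA
    obtain ⟨q1, q2, q3, q4, q5, q6⟩ := hpos a.natAbs ja1 har
    rw [show sigmaI j0 a = a by simp [sigmaI, hA],
        show sigmaI j0 b = -b by simp [sigmaI, hB]]
    simp only [Btilde, Int.natAbs_neg, hB, a1, a2, a3, heps', hjm'.1, hjm'.2, h1jm,
      show (a.natAbs = j0) = False from eq_false hA,
      show (jp j0 - 1 < jm a.natAbs - 1) = (jp j0 < jm a.natAbs) from propext (by omega),
      show (jp j0 - 1 < jp a.natAbs - 1) = (jp j0 < jp a.natAbs) from propext (by omega),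
      show (jm a.natAbs - 1 < jp j0 - 1) = (jm a.natAbs < jp j0) from propext (by omega),
      show (jp a.natAbs - 1 < jp j0 - 1) = (jp a.natAbs < jp j0) from propext (by omega),
      show (2 * r < jm a.natAbs - 1) = False from eq_false (by omega),
      show (2 * r < jp a.natAbs - 1) = False from eq_false (by omega),
      show (jm a.natAbs - 1 < 2 * r) = True from eq_true (by omega),
      show (jp a.natAbs - 1 < 2 * r) = True from eq_true (by omega),
      show (1 < jm a.natAbs) = True from eq_true (by omega),
      show (1 < jp a.natAbs) = True from eq_true (by omega),
      show (jm a.natAbs < 1) = False from eq_false (by omega),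
      show (jp a.natAbs < 1) = False from eq_false (by omega),
      true_and, and_true, false_and, and_false, dd_true, dd_false, if_true, if_false]
    clear * - ha hb
    split_ifs <;> first | omega | ring
  · -- both indices different from `j0`
    obtain ⟨a1, a2, a3, a4⟩ := fact3 a.natAbs ja1 har hA
    obtain ⟨b1, b2, b3, b4⟩ := fact3 b.natAbs jb1 hbr hB
    obtain ⟨p1, p2, p3, -⟩ := hpos a.natAbs ja1 har
    obtain ⟨q1, q2, q3, -⟩ := hpos b.natAbs jb1 hbr
    rw [show sigmaI j0 a = a by simp [sigmaI, hA],
        show sigmaI j0 b = b by simp [sigmaI, hB]]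
    simp only [Btilde, a1, a2, a3, b1, b2, b3,
      show (jm a.natAbs - 1 < jm b.natAbs - 1) = (jm a.natAbs < jm b.natAbs) from
        propext (by omega),
      show (jm a.natAbs - 1 < jp b.natAbs - 1) = (jm a.natAbs < jp b.natAbs) from
        propext (by omega),
      show (jp a.natAbs - 1 < jm b.natAbs - 1) = (jp a.natAbs < jm b.natAbs) from
        propext (by omega),
      show (jp a.natAbs - 1 < jp b.natAbs - 1) = (jp a.natAbs < jp b.natAbs) from
        propext (by omega),
      show (jm b.natAbs - 1 < jm a.natAbs - 1) = (jm b.natAbs < jm a.natAbs) from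
        propext (by omega),
      show (jm b.natAbs - 1 < jp a.natAbs - 1) = (jm b.natAbs < jp a.natAbs) from
        propext (by omega),
      show (jp b.natAbs - 1 < jm a.natAbs - 1) = (jp b.natAbs < jm a.natAbs) from
        propext (by omega),
      show (jp b.natAbs - 1 < jp a.natAbs - 1) = (jp b.natAbs < jp a.natAbs) from
        propext (by omega)]
end
end

section
/- Let 𝐢 be an unmixed Coxeter double word, i.e. i_1,…,i_r are all negative and i_{r+1},…,i_{2r} are all positive, and let 𝐢′ = (i_{r+1},…,i_{2r},i_1,…,i_r). Then (B̃_{𝐢′})_{a,b} = (B̃_𝐢)_{−a,−b} for all a, b ∈ Ĩ; that is, B̃_{𝐢′} is obtained from B̃_𝐢 by the relabeling a ↦ −a of the index set (Lemma 4.7). -/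
open Classical

noncomputable section

lemma dd_congr {P Q : Prop} (h : P ↔ Q) : dd P = dd Q := by
  simp only [dd]
  exact if_congr h rfl rfl

lemma dd_of_false {P : Prop} (h : ¬P) : dd P = 0 := by
  simp [dd, h]

/-- Lemma 4.7: if `𝐢` is unmixed (`i_1,…,i_r < 0 < i_{r+1},…,i_{2r}`) and
`𝐢' = (i_{r+1},…,i_{2r},i_1,…,i_r)`, then `(B̃_{𝐢'})_{a,b} = (B̃_𝐢)_{-a,-b}` for all
`a, b ∈ Ĩ`; that is, `B̃_{𝐢'}` is obtained from `B̃_𝐢` by the relabeling `a ↦ -a`. -/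
theorem stmt_16 (r : ℕ) (hr : 1 ≤ r) (C : ℕ → ℕ → ℤ) (hC : IsGCM r C)
    (w w' : ℕ → ℤ) (hw : IsCoxWord r w) (hw' : IsCoxWord r w')
    (jm jp : ℕ → ℕ) (eps : ℕ → ℚ) (hpos : PosData r w jm jp eps)
    (jm' jp' : ℕ → ℕ) (eps' : ℕ → ℚ) (hpos' : PosData r w' jm' jp' eps')
    (hunmixed1 : ∀ m, 1 ≤ m → m ≤ r → w m < 0)
    (hunmixed2 : ∀ m, r + 1 ≤ m → m ≤ 2 * r → 0 < w m)
    (hshift1 : ∀ m, 1 ≤ m → m ≤ r → w' m = w (m + r))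
    (hshift2 : ∀ m, r + 1 ≤ m → m ≤ 2 * r → w' m = w (m - r)) :
    ∀ a b : ℤ, a ≠ 0 → a.natAbs ≤ r → b ≠ 0 → b.natAbs ≤ r →
      Btilde C jm' jp' eps' a b = Btilde C jm jp eps (-a) (-b) := by
  have inj : ∀ v : ℕ → ℤ, IsCoxWord r v → ∀ m n, 1 ≤ m → m ≤ 2*r → 1 ≤ n → n ≤ 2*r →
      v m = v n → m = n := by
    intro v hv m n hm1 hm2 hn1 hn2 hmn
    obtain ⟨hne, hle⟩ := hv.1 m hm1 hm2
    obtain ⟨u, hu, huniq⟩ := hv.2 (v m) hne hle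
    have h1 := huniq m ⟨hm1, hm2, rfl⟩
    have h2 := huniq n ⟨hn1, hn2, hmn.symm⟩
    omega
  have factsW : ∀ j, 1 ≤ j → j ≤ r →
      1 ≤ jm j ∧ jm j ≤ r ∧ r + 1 ≤ jp j ∧ jp j ≤ 2*r ∧ eps j = -1 ∧
        w (jm j) = -(j:ℤ) ∧ w (jp j) = (j:ℤ) := by
    intro j h1 h2
    obtain ⟨a1, a2, a3, a4, a5, a6⟩ := hpos j h1 h2
    have hmle : jm j ≤ r := by
      by_contra hcon
      push_neg at hcon
      have p1 : 0 < w (jm j) := hunmixed2 _ (by omega) (by omega)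
      have p2 : 0 < w (jp j) := hunmixed2 _ (by omega) a3
      have heq : w (jm j) = w (jp j) := by omega
      have := inj w hw (jm j) (jp j) a1 (by omega) (by omega) a3 heq
      omega
    have hple : r + 1 ≤ jp j := by
      by_contra hcon
      push_neg at hcon
      have p1 : w (jm j) < 0 := hunmixed1 _ a1 hmle
      have p2 : w (jp j) < 0 := hunmixed1 _ (by omega) (by omega)
      have heq : w (jm j) = w (jp j) := by omega
      have := inj w hw (jm j) (jp j) a1 (by omega) (by omega) a3 heq
      omega
    have hneg : w (jm j) < 0 := hunmixed1 _ a1 hmle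
    have hposv : 0 < w (jp j) := hunmixed2 _ hple a3
    refine ⟨a1, hmle, hple, a3, ?_, by omega, by omega⟩
    rw [a6, if_neg (by omega)]
  have hu1' : ∀ m, 1 ≤ m → m ≤ r → 0 < w' m := by
    intro m h1 h2
    rw [hshift1 m h1 h2]; exact hunmixed2 _ (by omega) (by omega)
  have hu2' : ∀ m, r + 1 ≤ m → m ≤ 2*r → w' m < 0 := by
    intro m h1 h2
    rw [hshift2 m h1 h2]; exact hunmixed1 _ (by omega) (by omega)
  have factsW' : ∀ j, 1 ≤ j → j ≤ r →
      1 ≤ jm' j ∧ jm' j ≤ r ∧ r + 1 ≤ jp' j ∧ jp' j ≤ 2*r ∧ eps' j = 1 ∧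
        jm' j + r = jp j ∧ jp' j = jm j + r := by
    intro j h1 h2
    obtain ⟨a1, a2, a3, a4, a5, a6⟩ := hpos' j h1 h2
    obtain ⟨b1, b2, b3, b4, b5, b6, b7⟩ := factsW j h1 h2
    have hmle : jm' j ≤ r := by
      by_contra hcon
      push_neg at hcon
      have p1 : w' (jm' j) < 0 := hu2' _ (by omega) (by omega)
      have p2 : w' (jp' j) < 0 := hu2' _ (by omega) a3
      have heq : w' (jm' j) = w' (jp' j) := by omega
      have := inj w' hw' (jm' j) (jp' j) a1 (by omega) (by omega) a3 heq
      omega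
    have hple : r + 1 ≤ jp' j := by
      by_contra hcon
      push_neg at hcon
      have p1 : 0 < w' (jm' j) := hu1' _ a1 hmle
      have p2 : 0 < w' (jp' j) := hu1' _ (by omega) (by omega)
      have heq : w' (jm' j) = w' (jp' j) := by omega
      have := inj w' hw' (jm' j) (jp' j) a1 (by omega) (by omega) a3 heq
      omega
    have hp1 : 0 < w' (jm' j) := hu1' _ a1 hmle
    have hv1 : w' (jm' j) = (j:ℤ) := by omega
    have hn1 : w' (jp' j) < 0 := hu2' _ hple a3
    have hv3 : w' (jp' j) = -(j:ℤ) := by omega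
    have e1 : w (jm' j + r) = (j:ℤ) := (hshift1 (jm' j) a1 hmle).symm.trans hv1
    have key1 : jm' j + r = jp j :=
      inj w hw (jm' j + r) (jp j) (by omega) (by omega) (by omega) b4
        (e1.trans b7.symm)
    have e2 : w' (jm j + r) = w (jm j) := by
      rw [hshift2 (jm j + r) (by omega) (by omega)]
      congr 1
      omega
    have key2 : jp' j = jm j + r :=
      inj w' hw' (jp' j) (jm j + r) (by omega) a3 (by omega) (by omega)
        (hv3.trans (e2.trans b6).symm)
    exact ⟨a1, hmle, hple, a3, by rw [a6, if_pos hp1], key1, key2⟩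
  intro a b ha haR hb hbR
  simp only [Btilde, Int.natAbs_neg]
  set j := a.natAbs with hj
  set k := b.natAbs with hk
  have hj1 : 1 ≤ j := by omega
  have hk1 : 1 ≤ k := by omega
  obtain ⟨mj1, mjr, pjr, pj2, ej, wmj, wpj⟩ := factsW j hj1 haR
  obtain ⟨mk1, mkr, pkr, pk2, ek, wmk, wpk⟩ := factsW k hk1 hbR
  obtain ⟨mj1', mjr', pjr', pj2', ej', keyj1, keyj2⟩ := factsW' j hj1 haR
  obtain ⟨mk1', mkr', pkr', pk2', ek', keyk1, keyk2⟩ := factsW' k hk1 hbR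
  have E1 : dd (jm' j < jm' k ∧ jm' k < jp' j) = dd (jp j < jp k) := dd_congr (by omega)
  have E2 : dd (jm' j < jp' k ∧ jp' k < jp' j) = dd (jm k < jm j) := dd_congr (by omega)
  have E3 : dd (jm' k < jm' j ∧ jm' j < jp' k) = dd (jp k < jp j) := dd_congr (by omega)
  have E4 : dd (jm' k < jp' j ∧ jp' j < jp' k) = dd (jm j < jm k) := dd_congr (by omega)
  have E5 : dd (jm' j < jm' k) = dd (jp j < jp k) := dd_congr (by omega)
  have E6 : dd (jp' j < jm' k) = 0 := dd_of_false (by omega)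
  have E7 : dd (jp' k < jm' j) = 0 := dd_of_false (by omega)
  have E8 : dd (jp' k < jp' j) = dd (jm k < jm j) := dd_congr (by omega)
  have E9 : dd (jm' k < jm' j) = dd (jp k < jp j) := dd_congr (by omega)
  have E10 : dd (jp' j < jp' k) = dd (jm j < jm k) := dd_congr (by omega)
  have F1 : dd (jp j < jm k) = 0 := dd_of_false (by omega)
  have F2 : dd (jp k < jm j) = 0 := dd_of_false (by omega)
  have F3 : dd (jm k < jm j ∧ jm j < jp k) = dd (jm k < jm j) := dd_congr (by omega)
  have F4 : dd (jm k < jp j ∧ jp j < jp k) = dd (jp j < jp k) := dd_congr (by omega)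
  have F5 : dd (jm j < jm k ∧ jm k < jp j) = dd (jm j < jm k) := dd_congr (by omega)
  have F6 : dd (jm j < jp k ∧ jp k < jp j) = dd (jp k < jp j) := dd_congr (by omega)
  rcases ha.lt_or_gt with hA | hA <;> rcases hb.lt_or_gt with hB | hB
  · rw [if_pos hA, if_neg (show ¬(-a < 0) by omega), if_pos hB,
      if_neg (show ¬(-b < 0) by omega)]
    simp only [E1, E2, E3, E4, E5, E6, E7, E8, E9, E10, F1, F2, F3, F4, F5, F6,
      ej, ek, ej', ek']
    ring
  · rw [if_pos hA, if_neg (show ¬(-a < 0) by omega), if_neg (show ¬(b < 0) by omega),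
      if_pos (show (-b : ℤ) < 0 by omega)]
    simp only [E1, E2, E3, E4, E5, E6, E7, E8, E9, E10, F1, F2, F3, F4, F5, F6,
      ej, ek, ej', ek']
    ring
  · rw [if_neg (show ¬(a < 0) by omega), if_pos (show (-a : ℤ) < 0 by omega), if_pos hB,
      if_neg (show ¬(-b < 0) by omega)]
    simp only [E1, E2, E3, E4, E5, E6, E7, E8, E9, E10, F1, F2, F3, F4, F5, F6,
      ej, ek, ej', ek']
    ring
  · rw [if_neg (show ¬(a < 0) by omega), if_pos (show (-a : ℤ) < 0 by omega),
      if_neg (show ¬(b < 0) by omega), if_pos (show (-b : ℤ) < 0 by omega)]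
    simp only [E1, E2, E3, E4, E5, E6, E7, E8, E9, E10, F1, F2, F3, F4, F5, F6,
      ej, ek, ej', ek']
    ring
end
end

section
/- Assume that C is invertible over ℚ and that the Coxeter graph of C (the graph on {1,…,r} with an edge {j,k} whenever j ≠ k and C_{jk} ≠ 0) is a forest. Then for every Coxeter double word 𝐢, the 2r×2r exchange matrix B̃_𝐢 has full rank, i.e. is invertible over ℚ (Corollary 3.11(2)). -/
/-!
Split `B̃` into `2 × 2` blocks indexed by the pairs `{-j, j}`: the `(j, k)` block is `C j k`
times a block `F j k` that depends only on the word, and a case check over the ways the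
positions of two letters interleave gives `F k l * (F l l)⁻¹ * F l k = F k k` for `k ≠ l`.
Now remove a leaf `l` of the Coxeter forest. If `C l l ≠ 0`, the block Schur complement of `B̃`
at `l` has the same shape, with `C` replaced by its Schur complement at `l` (which only changes
the diagonal entry of the neighbour of `l`); that matrix is again invertible with a forest as
graph. If `C l l = 0`, then `l` has a neighbour `k` with `C k l * C l k ≠ 0`, the rows of `l` and
`k` force a kernel vector to vanish at `k` and `l`, and `C` stays invertible on the remaining
indices. Induction on the number of indices shows that `B̃` has trivial kernel.
-/

open Classical

noncomputable section

/-- The Coxeter graph of `C`: the (simple) graph on `{1,…,r}` with an edge `{j,k}`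
whenever `j ≠ k` and `C_{jk} ≠ 0` (equivalently, by the GCM axioms, `C_{kj} ≠ 0`). -/
def coxGraph (r : ℕ) (C : ℕ → ℕ → ℤ) : SimpleGraph ℕ where
  Adj j k := j ≠ k ∧ 1 ≤ j ∧ j ≤ r ∧ 1 ≤ k ∧ k ≤ r ∧ (C j k ≠ 0 ∨ C k j ≠ 0)
  symm := by
    constructor
    rintro j k ⟨h1, h2, h3, h4, h5, h6⟩
    exact ⟨h1.symm, h4, h5, h2, h3, h6.symm⟩
  loopless := by
    constructor
    intro j h
    exact h.1 rfl

/-- The enumeration `Fin (2r) → Ĩ`, `m ↦ -(m+1)` for `m < r` and `m ↦ m - r + 1` for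
`m ≥ r`. -/
def iotaI (r : ℕ) (m : Fin (2 * r)) : ℤ :=
  if (m : ℕ) < r then -(((m : ℕ) : ℤ) + 1) else (((m : ℕ) - r : ℕ) : ℤ) + 1

namespace SimpleGraph

variable {V : Type*} {G : SimpleGraph V}

/-- The start of a longest path is a leaf or an isolated vertex. -/
theorem IsAcyclic.exists_neighborSet_subsingleton [Finite V] [Nonempty V] (hG : G.IsAcyclic) :
    ∃ u, (G.neighborSet u).Subsingleton := by
  obtain ⟨u, v, p, hp, hmax⟩ := Walk.exists_isPath_forall_isPath_length_le_length G
  refine ⟨u, fun w₁ hw₁ w₂ hw₂ => ?_⟩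
  have mem_support : ∀ w, G.Adj u w → w ∈ p.support := fun w hw => by
    by_contra hnot
    have := hmax w v (.cons hw.symm p) (hp.cons hnot)
    simp at this
  rw [hG.eq_snd_of_adj_start hp hw₁ (mem_support w₁ hw₁),
    hG.eq_snd_of_adj_start hp hw₂ (mem_support w₂ hw₂)]

end SimpleGraph

open Finset Matrix

section ForestMatrix

variable {K α : Type*} [Field K]

def supportGraph (S : Finset α) (C : α → α → K) : SimpleGraph α where
  Adj j k := j ≠ k ∧ j ∈ S ∧ k ∈ S ∧ (C j k ≠ 0 ∨ C k j ≠ 0)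
  symm := ⟨fun _ _ ⟨h, hj, hk, hC⟩ => ⟨h.symm, hk, hj, hC.symm⟩⟩
  loopless := ⟨fun _ h => h.1 rfl⟩

@[simp]
theorem supportGraph_adj {S : Finset α} {C : α → α → K} {j k : α} :
    (supportGraph S C).Adj j k ↔ j ≠ k ∧ j ∈ S ∧ k ∈ S ∧ (C j k ≠ 0 ∨ C k j ≠ 0) :=
  Iff.rfl

theorem supportGraph_le {S T : Finset α} {C D : α → α → K} (hST : S ⊆ T)
    (hCD : ∀ i ∈ S, ∀ j ∈ S, i ≠ j → C i j = D i j) : supportGraph S C ≤ supportGraph T D :=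
  fun i j ⟨hij, hi, hj, hC⟩ => supportGraph_adj.2 ⟨hij, hST hi, hST hj, by
    rwa [← hCD i hi j hj hij, ← hCD j hj i hi hij.symm]⟩

theorem exists_mem_neighborSet_supportGraph_subsingleton {S : Finset α} {C : α → α → K}
    (hS : S.Nonempty) (hacyc : (supportGraph S C).IsAcyclic) :
    ∃ l ∈ S, ((supportGraph S C).neighborSet l).Subsingleton := by
  have : Nonempty (S : Set α) := hS.to_subtype
  obtain ⟨⟨l, hl⟩, hsub⟩ := (hacyc.induce S).exists_neighborSet_subsingleton
  refine ⟨l, hl, fun k₁ hk₁ k₂ hk₂ => ?_⟩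
  rw [SimpleGraph.mem_neighborSet, supportGraph_adj] at hk₁ hk₂
  exact congrArg Subtype.val (@hsub ⟨k₁, hk₁.2.2.1⟩ hk₁ ⟨k₂, hk₂.2.2.1⟩ hk₂)

def HasTrivialKerOn (S : Finset α) (C : α → α → K) : Prop :=
  ∀ u : α → K, (∀ i ∈ S, ∑ j ∈ S, C i j * u j = 0) → ∀ j ∈ S, u j = 0

structure IsInvertibleForestOn (S : Finset α) (C : α → α → K) : Prop where
  zero_iff : ∀ i ∈ S, ∀ j ∈ S, C i j = 0 ↔ C j i = 0
  isAcyclic : (supportGraph S C).IsAcyclic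
  trivialKer : HasTrivialKerOn S C

def schurCompl (C : α → α → K) (l i j : α) : K := C i j - C i l * C l j / C l l

theorem schurCompl_of_mul_eq_zero {C : α → α → K} {l i j : α} (h : C i l * C l j = 0) :
    schurCompl C l i j = C i j := by
  simp [schurCompl, h]

theorem eq_of_mul_ne_zero_of_neighborSet_subsingleton {S : Finset α} {C : α → α → K}
    {l i j : α} (hleaf : ((supportGraph S C).neighborSet l).Subsingleton) (hl : l ∈ S)
    (hi : i ∈ S) (hil : i ≠ l) (hj : j ∈ S) (hjl : j ≠ l) (h : C i l * C l j ≠ 0) : i = j :=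
  hleaf (⟨hil.symm, hl, hi, .inr (left_ne_zero_of_mul h)⟩ : (supportGraph S C).Adj l i)
    (⟨hjl.symm, hl, hj, .inl (right_ne_zero_of_mul h)⟩ : (supportGraph S C).Adj l j)

variable [DecidableEq α]

theorem schurCompl_eq_of_neighborSet_subsingleton {S : Finset α} {C : α → α → K} {l : α}
    (hleaf : ((supportGraph S C).neighborSet l).Subsingleton) (hl : l ∈ S)
    {i j : α} (hi : i ∈ S.erase l) (hj : j ∈ S.erase l) (hij : i ≠ j) :
    schurCompl C l i j = C i j :=
  schurCompl_of_mul_eq_zero <| not_not.1 <| mt (eq_of_mul_ne_zero_of_neighborSet_subsingleton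
    hleaf hl (mem_of_mem_erase hi) (ne_of_mem_erase hi) (mem_of_mem_erase hj)
    (ne_of_mem_erase hj)) hij

theorem HasTrivialKerOn.schurCompl {S : Finset α} {C : α → α → K} {l : α}
    (hC : HasTrivialKerOn S C) (hl : l ∈ S) (hll : C l l ≠ 0) :
    HasTrivialKerOn (S.erase l) (schurCompl C l) := by
  intro u hu
  set u' := Function.update u l (-(∑ j ∈ S.erase l, C l j * u j) / C l l)
  have hu' : ∀ i, ∑ j ∈ S.erase l, C i j * u' j = ∑ j ∈ S.erase l, C i j * u j := fun i =>
    sum_congr rfl fun j hj => by simp only [u', Function.update_of_ne (ne_of_mem_erase hj)]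
  have hrows : ∀ i ∈ S, ∑ j ∈ S, C i j * u' j = 0 := by
    intro i hi
    rw [← add_sum_erase S _ hl, hu']
    simp only [u', Function.update_self]
    by_cases hil : i = l
    · subst hil
      field_simp
      ring
    · have h := hu i (mem_erase.2 ⟨hil, hi⟩)
      simp only [_root_.schurCompl, sub_mul, sum_sub_distrib, div_mul_eq_mul_div,
        mul_assoc, ← mul_sum, ← sum_div] at h
      field_simp at h ⊢
      linear_combination h
  intro j hj
  simpa [u', Function.update_of_ne (ne_of_mem_erase hj)] using
    hC u' hrows j (mem_of_mem_erase hj)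

theorem HasTrivialKerOn.erase_erase {S : Finset α} {C : α → α → K} {k l : α}
    (hC : HasTrivialKerOn S C) (hl : l ∈ S) (hk : k ∈ S) (hkl : k ≠ l) (hll : C l l = 0)
    (hCkl : C k l ≠ 0) (hzero : ∀ j ∈ S, j ≠ l → j ≠ k → C l j = 0 ∧ C j l = 0) :
    HasTrivialKerOn ((S.erase l).erase k) C := by
  intro u hu
  set T := (S.erase l).erase k
  have hT : ∀ {j}, j ∈ T ↔ j ≠ k ∧ j ≠ l ∧ j ∈ S := by simp [T]
  set u' := Function.update (Function.update u k 0) l (-(∑ j ∈ T, C k j * u j) / C k l)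
  have hu'T : ∀ j ∈ T, u' j = u j := fun j hj => by
    simp [u', Function.update_of_ne (hT.1 hj).1, Function.update_of_ne (hT.1 hj).2.1]
  have hu'k : u' k = 0 := by simp [u', Function.update_of_ne hkl]
  have hsplit : ∀ i, ∑ j ∈ S, C i j * u' j = C i l * u' l + ∑ j ∈ T, C i j * u j := by
    intro i
    rw [← add_sum_erase S _ hl, ← add_sum_erase _ _ (mem_erase.2 ⟨hkl, hk⟩), hu'k, mul_zero,
      zero_add, sum_congr rfl fun j hj => by rw [hu'T j hj]]
  have hrows : ∀ i ∈ S, ∑ j ∈ S, C i j * u' j = 0 := by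
    intro i hi
    rw [hsplit]
    by_cases hil : i = l
    · subst hil
      rw [hll, zero_mul, zero_add]
      exact sum_eq_zero fun j hj => by
        rw [(hzero j (hT.1 hj).2.2 (hT.1 hj).2.1 (hT.1 hj).1).1, zero_mul]
    by_cases hik : i = k
    · subst hik
      simp only [u', Function.update_self]
      field_simp
      ring
    · rw [(hzero i hi hil hik).2, zero_mul, zero_add]
      exact hu i (hT.2 ⟨hik, hil, hi⟩)
  intro j hj
  rw [← hu'T j hj]
  exact hC u' hrows j (hT.1 hj).2.2

theorem IsInvertibleForestOn.schurCompl {S : Finset α} {C : α → α → K} {l : α}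
    (h : IsInvertibleForestOn S C) (hl : l ∈ S)
    (hleaf : ((supportGraph S C).neighborSet l).Subsingleton) (hll : C l l ≠ 0) :
    IsInvertibleForestOn (S.erase l) (schurCompl C l) where
  zero_iff i hi j hj := by
    rcases eq_or_ne i j with rfl | hij
    · rfl
    rw [schurCompl_eq_of_neighborSet_subsingleton hleaf hl hi hj hij,
      schurCompl_eq_of_neighborSet_subsingleton hleaf hl hj hi hij.symm]
    exact h.zero_iff i (mem_of_mem_erase hi) j (mem_of_mem_erase hj)
  isAcyclic := h.isAcyclic.anti <| supportGraph_le (erase_subset l S) fun _ hi _ hj hij =>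
    schurCompl_eq_of_neighborSet_subsingleton hleaf hl hi hj hij
  trivialKer := h.trivialKer.schurCompl hl hll

theorem IsInvertibleForestOn.erase_erase {S : Finset α} {C : α → α → K} {k l : α}
    (h : IsInvertibleForestOn S C) (hl : l ∈ S) (hk : k ∈ S) (hkl : k ≠ l) (hll : C l l = 0)
    (hCkl : C k l ≠ 0) (hzero : ∀ j ∈ S, j ≠ l → j ≠ k → C l j = 0 ∧ C j l = 0) :
    IsInvertibleForestOn ((S.erase l).erase k) C where
  zero_iff i hi j hj :=
    h.zero_iff i (mem_of_mem_erase (mem_of_mem_erase hi)) j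
      (mem_of_mem_erase (mem_of_mem_erase hj))
  isAcyclic := h.isAcyclic.anti <|
    supportGraph_le ((erase_subset _ _).trans (erase_subset _ _)) fun _ _ _ _ _ => rfl
  trivialKer := h.trivialKer.erase_erase hl hk hkl hll hCkl hzero

theorem IsInvertibleForestOn.exists_neighbor_of_diag_eq_zero {S : Finset α} {C : α → α → K}
    {l : α} (h : IsInvertibleForestOn S C) (hl : l ∈ S)
    (hleaf : ((supportGraph S C).neighborSet l).Subsingleton) (hll : C l l = 0) :
    ∃ k ∈ S, k ≠ l ∧ C k l ≠ 0 ∧ C l k ≠ 0 ∧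
      ∀ j ∈ S, j ≠ l → j ≠ k → C l j = 0 ∧ C j l = 0 := by
  obtain ⟨k, hlk, -, hk, hCk⟩ : ∃ k, (supportGraph S C).Adj l k := by
    by_contra! hcol
    simp only [supportGraph_adj, not_and, not_or, not_not, ne_eq, hl, true_implies] at hcol
    have hcol_zero : ∀ i ∈ S, ∑ j ∈ S, C i j * Pi.single (M := fun _ => K) l 1 j = 0 := by
      intro i hi
      rw [sum_eq_single_of_mem l hl fun j _ hjl => by simp [hjl]]
      rcases eq_or_ne i l with rfl | hil
      · simp [hll]
      · simp [(hcol i (Ne.symm hil) hi).2]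
    simpa using h.trivialKer _ hcol_zero l hl
  have hCkl : C k l ≠ 0 := hCk.elim (fun h' h0 => h' ((h.zero_iff k hk l hl).1 h0)) id
  refine ⟨k, hk, Ne.symm hlk, hCkl, fun h0 => hCkl ((h.zero_iff l hl k hk).1 h0),
    fun j hj hjl hjk => ?_⟩
  have : ¬(C l j ≠ 0 ∨ C j l ≠ 0) := fun hj' =>
    hjk (hleaf (⟨Ne.symm hjl, hl, hj, hj'⟩ : (supportGraph S C).Adj l j) ⟨hlk, hl, hk, hCk⟩)
  simpa only [not_or, not_not] using this

theorem forall_sum_smul_mulVec_erase_erase_eq_zero {n : Type*} [Fintype n]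
    {F : α → α → Matrix n n K} {S : Finset α} {C : α → α → K} {v : α → n → K} {k l : α}
    (hvk : v k = 0) (hCl : ∀ i ∈ (S.erase l).erase k, C i l = 0)
    (hv : ∀ i ∈ S, ∑ j ∈ S, (C i j • F i j) *ᵥ v j = 0) :
    ∀ i ∈ (S.erase l).erase k, ∑ j ∈ (S.erase l).erase k, (C i j • F i j) *ᵥ v j = 0 := by
  intro i hi
  have hTS : (S.erase l).erase k ⊆ S := (erase_subset _ _).trans (erase_subset _ _)
  rw [sum_subset hTS fun j hj hjT => ?_]
  · exact hv i (hTS hi)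
  rcases eq_or_ne j k with rfl | hjk
  · rw [hvk, mulVec_zero]
  obtain rfl : j = l := by by_contra hjl; exact hjT (mem_erase.2 ⟨hjk, mem_erase.2 ⟨hjl, hj⟩⟩)
  rw [hCl i hi, zero_smul, zero_mulVec]

end ForestMatrix

section BlockElimination

variable {K α n : Type*} [Field K] [Fintype n] [DecidableEq n]

theorem det_ne_zero_of_mul_mul_eq {A M D E : Matrix n n K} (h : A * M * D = E)
    (hE : E.det ≠ 0) : A.det ≠ 0 ∧ D.det ≠ 0 := by
  have := congrArg det h
  rw [det_mul, det_mul] at this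
  constructor <;> intro h0 <;> simp [h0] at this <;> exact hE this.symm

theorem det_smul_ne_zero {c : K} {A : Matrix n n K} (hc : c ≠ 0) (hA : A.det ≠ 0) :
    (c • A).det ≠ 0 := by
  rw [det_smul]
  exact mul_ne_zero (pow_ne_zero _ hc) hA

theorem eq_zero_of_sum_mulVec_eq_zero {B : α → Matrix n n K} {v : α → n → K} {S : Finset α}
    {a : α} (ha : a ∈ S) (hBa : (B a).det ≠ 0) (hsum : ∑ j ∈ S, B j *ᵥ v j = 0)
    (hrest : ∀ j ∈ S, j ≠ a → B j *ᵥ v j = 0) : v a = 0 :=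
  eq_zero_of_mulVec_eq_zero hBa ((sum_eq_single_of_mem a ha hrest).symm.trans hsum)

theorem schurCompl_smul {C : α → α → K} {F : α → α → Matrix n n K} {l i j : α}
    (hll : C l l ≠ 0) (hFll : IsUnit (F l l).det)
    (hF : C i l * C l j ≠ 0 → F i l * (F l l)⁻¹ * F l j = F i j) :
    schurCompl C l i j • F i j =
      C i j • F i j - (C i l • F i l) * (C l l • F l l)⁻¹ * (C l j • F l j) := by
  have hinv : (C l l • F l l)⁻¹ = (C l l)⁻¹ • (F l l)⁻¹ := inv_eq_right_inv <| by
    rw [Matrix.smul_mul, Matrix.mul_smul, smul_smul, mul_nonsing_inv _ hFll, mul_inv_cancel₀ hll,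
      one_smul]
  simp only [hinv, Matrix.smul_mul, Matrix.mul_smul, smul_smul]
  by_cases h : C i l * C l j = 0
  · rw [schurCompl_of_mul_eq_zero h]
    rcases mul_eq_zero.1 h with h | h <;> simp [h]
  · rw [hF h, schurCompl, sub_smul]
    congr 2
    field_simp

variable [DecidableEq α]

theorem sum_schur_mulVec_eq_zero {B : α → α → Matrix n n K} {S : Finset α} {l : α} (hl : l ∈ S)
    (hB : IsUnit (B l l).det) {v : α → n → K} (hv : ∀ i ∈ S, ∑ j ∈ S, B i j *ᵥ v j = 0)
    {i : α} (hi : i ∈ S) :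
    ∑ j ∈ S.erase l, (B i j - B i l * (B l l)⁻¹ * B l j) *ᵥ v j = 0 := by
  have hrow_l : ∑ j ∈ S.erase l, B l j *ᵥ v j = -(B l l *ᵥ v l) :=
    eq_neg_of_add_eq_zero_right ((add_sum_erase S _ hl).trans (hv l hl))
  have hcorr : ∑ j ∈ S.erase l, (B i l * (B l l)⁻¹ * B l j) *ᵥ v j = -(B i l *ᵥ v l) :=
    calc ∑ j ∈ S.erase l, (B i l * (B l l)⁻¹ * B l j) *ᵥ v j
        = (B i l * (B l l)⁻¹) *ᵥ ∑ j ∈ S.erase l, B l j *ᵥ v j := by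
          simp only [mulVec_sum, mulVec_mulVec]
      _ = -(B i l *ᵥ v l) := by
          rw [hrow_l, mulVec_neg, mulVec_mulVec, Matrix.mul_assoc, nonsing_inv_mul _ hB,
            Matrix.mul_one]
  rw [sum_congr rfl fun j _ => sub_mulVec _ _ _, sum_sub_distrib, hcorr, sub_neg_eq_add, add_comm]
  exact (add_sum_erase S (fun j => B i j *ᵥ v j) hl).trans (hv i hi)

theorem forall_sum_schurCompl_smul_mulVec_eq_zero {F : α → α → Matrix n n K}
    (hF : ∀ j, (F j j).det ≠ 0) (hschur : ∀ k l, k ≠ l → F k l * (F l l)⁻¹ * F l k = F k k)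
    {S : Finset α} {C : α → α → K} {l : α} (hl : l ∈ S)
    (hleaf : ((supportGraph S C).neighborSet l).Subsingleton) (hll : C l l ≠ 0)
    {v : α → n → K} (hv : ∀ i ∈ S, ∑ j ∈ S, (C i j • F i j) *ᵥ v j = 0) :
    ∀ i ∈ S.erase l, ∑ j ∈ S.erase l, (schurCompl C l i j • F i j) *ᵥ v j = 0 := by
  intro i hi
  rw [← sum_schur_mulVec_eq_zero (B := fun i j => C i j • F i j) hl
    (det_smul_ne_zero hll (hF l)).isUnit hv (mem_of_mem_erase hi)]
  refine sum_congr rfl fun j hj => ?_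
  rw [schurCompl_smul hll (hF l).isUnit fun h => ?_]
  obtain rfl := eq_of_mul_ne_zero_of_neighborSet_subsingleton hleaf hl (mem_of_mem_erase hi)
    (ne_of_mem_erase hi) (mem_of_mem_erase hj) (ne_of_mem_erase hj) h
  exact hschur i l (ne_of_mem_erase hi)

theorem eq_zero_of_forall_sum_smul_mulVec_eq_zero {F : α → α → Matrix n n K}
    (hF : ∀ j, (F j j).det ≠ 0) (hschur : ∀ k l, k ≠ l → F k l * (F l l)⁻¹ * F l k = F k k)
    {S : Finset α} {C : α → α → K} (hC : IsInvertibleForestOn S C) {v : α → n → K}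
    (hv : ∀ i ∈ S, ∑ j ∈ S, (C i j • F i j) *ᵥ v j = 0) : ∀ j ∈ S, v j = 0 := by
  induction S using Finset.strongInduction generalizing C with
  | H S ih =>
  rcases S.eq_empty_or_nonempty with rfl | hS
  · simp
  obtain ⟨l, hl, hleaf⟩ := exists_mem_neighborSet_supportGraph_subsingleton hS hC.isAcyclic
  by_cases hll : C l l = 0
  · obtain ⟨k, hk, hkl, hCkl, hClk, hnon⟩ := hC.exists_neighbor_of_diag_eq_zero hl hleaf hll
    obtain ⟨hFkl, hFlk⟩ := det_ne_zero_of_mul_mul_eq (hschur k l hkl) (hF k)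
    have hvk : v k = 0 := by
      refine eq_zero_of_sum_mulVec_eq_zero hk (det_smul_ne_zero hClk hFlk) (hv l hl)
        fun j hj hjk => ?_
      rcases eq_or_ne j l with rfl | hjl
      · rw [hll, zero_smul, zero_mulVec]
      · rw [(hnon j hj hjl hjk).1, zero_smul, zero_mulVec]
    have hT : ∀ {j}, j ∈ (S.erase l).erase k ↔ j ≠ k ∧ j ≠ l ∧ j ∈ S := by simp
    have hzero := ih _ ((ssubset_iff_of_subset fun j hj => (hT.1 hj).2.2).2
        ⟨l, hl, fun h => (hT.1 h).2.1 rfl⟩) (hC.erase_erase hl hk hkl hll hCkl hnon)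
      (forall_sum_smul_mulVec_erase_erase_eq_zero hvk
        (fun i hi => (hnon i (hT.1 hi).2.2 (hT.1 hi).2.1 (hT.1 hi).1).2) hv)
    have hvl : v l = 0 := by
      refine eq_zero_of_sum_mulVec_eq_zero hl (det_smul_ne_zero hCkl hFkl) (hv k hk)
        fun j hj hjl => ?_
      rcases eq_or_ne j k with rfl | hjk
      · rw [hvk, mulVec_zero]
      · rw [hzero j (hT.2 ⟨hjk, hjl, hj⟩), mulVec_zero]
    intro j hj
    rcases eq_or_ne j l with rfl | hjl
    · exact hvl
    rcases eq_or_ne j k with rfl | hjk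
    · exact hvk
    exact hzero j (hT.2 ⟨hjk, hjl, hj⟩)
  · have hzero := ih _ (erase_ssubset hl) (hC.schurCompl hl hleaf hll)
      (forall_sum_schurCompl_smul_mulVec_eq_zero hF hschur hl hleaf hll hv)
    intro j hj
    rcases eq_or_ne j l with rfl | hjl
    · refine eq_zero_of_sum_mulVec_eq_zero hj (det_smul_ne_zero hll (hF j)) (hv j hj)
        fun i hi hij => ?_
      rw [hzero i (mem_erase.2 ⟨hij, hi⟩), mulVec_zero]
    · exact hzero j (mem_erase.2 ⟨hjl, hj⟩)

def blockHadamard (C : Matrix α α K) (F : α → α → Matrix n n K) : Matrix (n × α) (n × α) K :=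
  Matrix.of fun p q => C p.2 q.2 * F p.2 q.2 p.1 q.1

theorem isUnit_blockHadamard [Fintype α] {C : Matrix α α K} {F : α → α → Matrix n n K}
    (hC : IsUnit C) (hzero : ∀ i j, C i j = 0 ↔ C j i = 0)
    (hacyc : (supportGraph univ C).IsAcyclic) (hF : ∀ j, (F j j).det ≠ 0)
    (hschur : ∀ k l, k ≠ l → F k l * (F l l)⁻¹ * F l k = F k k) :
    IsUnit (blockHadamard C F) := by
  rw [isUnit_iff_isUnit_det, isUnit_iff_ne_zero]
  intro hdet
  obtain ⟨V, hV0, hV⟩ := exists_mulVec_eq_zero_iff.2 hdet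
  have hforest : IsInvertibleForestOn univ C :=
    ⟨fun i _ j _ => hzero i j, hacyc, fun u hu j _ =>
      congrFun (mulVec_injective_iff_isUnit.2 hC (a₂ := 0)
        (funext fun i => by simpa [mulVec, dotProduct] using hu i (mem_univ i))) j⟩
  have hv : ∀ i ∈ univ, ∑ j, (C i j • F i j) *ᵥ (fun t => V (t, j)) = 0 := by
    intro i _
    funext s
    have hrow := congrFun hV (s, i)
    simp only [blockHadamard, Finset.sum_apply, mulVec, dotProduct, Matrix.of_apply,
      Matrix.smul_apply, smul_eq_mul, Fintype.sum_prod_type, Pi.zero_apply, mul_assoc]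
      at hrow ⊢
    rw [Finset.sum_comm, hrow]
  exact hV0 (funext fun p => congrFun (eq_zero_of_forall_sum_smul_mulVec_eq_zero hF hschur
    hforest hv p.2 (mem_univ _)) p.1)

end BlockElimination

section CoxeterWord

def signOf : Fin 2 → ℤ := ![-1, 1]

def wordBlock (jm jp : ℕ → ℕ) (eps : ℕ → ℚ) (j k : ℕ) : Matrix (Fin 2) (Fin 2) ℚ :=
  Matrix.of fun s t => Btilde (fun _ _ => 1) jm jp eps (signOf s * j) (signOf t * k)

def nestCount (jm jp : ℕ → ℕ) (j k : ℕ) : ℚ :=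
  dd (jm j < jm k ∧ jm k < jp j) + dd (jm j < jp k ∧ jp k < jp j)

def precCount (jm jp : ℕ → ℕ) (j k : ℕ) : ℚ :=
  dd (jm j < jm k) + dd (jp j < jm k) + dd (jp k < jm j) + dd (jp k < jp j)

variable {jm jp : ℕ → ℕ} {eps : ℕ → ℚ}

theorem Btilde_eq_mul_Btilde_one (C : ℕ → ℕ → ℤ) (a b : ℤ) :
    Btilde C jm jp eps a b = C a.natAbs b.natAbs * Btilde (fun _ _ => 1) jm jp eps a b := by
  unfold Btilde
  push_cast
  ring

theorem natAbs_signOf_mul (s : Fin 2) (j : ℕ) : (signOf s * j).natAbs = j := by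
  fin_cases s <;> simp [signOf]

theorem iotaI_finProdFinEquiv {r : ℕ} (s : Fin 2) (i : Fin r) :
    iotaI r (finProdFinEquiv (s, i)) = signOf s * ((i + 1 : ℕ) : ℤ) := by
  fin_cases s <;> simp [iotaI, signOf]

theorem wordBlock_self {l : ℕ} (hl : 0 < l) (h : jm l < jp l) :
    wordBlock jm jp eps l l = eps l • !![0, -1; 1, 0] := by
  have h2 : ¬ (jp l < jm l) := by omega
  have hpos : ¬ ((l : ℤ) < 0) := by omega
  ext s t
  fin_cases s <;> fin_cases t <;> simp [wordBlock, signOf, Btilde, dd, h2, hpos, hl] <;> ring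

theorem det_wordBlock_self {l : ℕ} (hl : 0 < l) (h : jm l < jp l) :
    (wordBlock jm jp eps l l).det = eps l ^ 2 := by
  rw [wordBlock_self hl h, det_smul, det_fin_two_of]
  simp

theorem wordBlock_of_ne {j k : ℕ} (hj : 0 < j) (hk : 0 < k) (hjk : j ≠ k) :
    wordBlock jm jp eps j k = (1 / 2 : ℚ) • !![
      eps k * nestCount jm jp j k - eps j * nestCount jm jp k j,
        -(eps j * precCount jm jp j k + eps k * nestCount jm jp j k);
      eps k * precCount jm jp k j + eps j * nestCount jm jp k j,
        eps j * precCount jm jp j k - eps k * precCount jm jp k j] := by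
  have hjp : ¬ ((j : ℤ) < 0) := by omega
  have hkp : ¬ ((k : ℤ) < 0) := by omega
  ext s t
  fin_cases s <;> fin_cases t <;>
    simp [wordBlock, signOf, Btilde, nestCount, precCount, hj, hk, hjp, hkp, hjk,
      show dd False = 0 from if_neg id]

/-- The four tuples correspond to: disjoint position intervals, `l` nested in `k`, `k` nested in
`l`, crossing intervals. -/
theorem nestCount_precCount_mem {k l : ℕ} (hk : jm k < jp k) (hl : jm l < jp l)
    (d1 : jm l ≠ jm k) (d2 : jm l ≠ jp k) (d3 : jp l ≠ jm k) (d4 : jp l ≠ jp k) :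
    (nestCount jm jp k l, nestCount jm jp l k, precCount jm jp k l, precCount jm jp l k) ∈
      ({(0, 0, 2, 2), (2, 0, 2, 0), (0, 2, 0, 2), (1, 1, 1, 1)} : Set (ℚ × ℚ × ℚ × ℚ)) := by
  simp only [nestCount, precCount, dd]
  rcases lt_or_gt_of_ne d1 with h1 | h1 <;> rcases lt_or_gt_of_ne d2 with h2 | h2 <;>
    rcases lt_or_gt_of_ne d3 with h3 | h3 <;> rcases lt_or_gt_of_ne d4 with h4 | h4 <;>
    first
    | omega
    | simp [h1, h2, h3, h4, not_lt_of_gt h1, not_lt_of_gt h2, not_lt_of_gt h3, not_lt_of_gt h4]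
      <;> norm_num

theorem wordBlock_mul_inv_mul {k l : ℕ} (hk0 : 0 < k) (hl0 : 0 < l) (hkl : k ≠ l)
    (hk : jm k < jp k) (hl : jm l < jp l)
    (d1 : jm l ≠ jm k) (d2 : jm l ≠ jp k) (d3 : jp l ≠ jm k) (d4 : jp l ≠ jp k)
    (hek : eps k = 1 ∨ eps k = -1) (hel : eps l = 1 ∨ eps l = -1) :
    wordBlock jm jp eps k l * (wordBlock jm jp eps l l)⁻¹ * wordBlock jm jp eps l k =
      wordBlock jm jp eps k k := by
  have hinv : (wordBlock jm jp eps l l)⁻¹ = eps l • !![0, 1; -1, 0] := by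
    rw [wordBlock_self hl0 hl]
    refine inv_eq_right_inv ?_
    rw [Matrix.smul_mul, Matrix.mul_smul, smul_smul]
    rcases hel with h | h <;> rw [h] <;> ext i j <;> fin_cases i <;> fin_cases j <;> simp
  rw [hinv, wordBlock_self hk0 hk, wordBlock_of_ne hk0 hl0 hkl, wordBlock_of_ne hl0 hk0 hkl.symm]
  have hcounts := nestCount_precCount_mem hk hl d1 d2 d3 d4
  generalize nestCount jm jp k l = a, nestCount jm jp l k = b, precCount jm jp k l = p,
    precCount jm jp l k = q at hcounts
  simp only [Set.mem_insert_iff, Set.mem_singleton_iff, Prod.mk.injEq] at hcounts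
  rcases hcounts with ⟨rfl, rfl, rfl, rfl⟩ | ⟨rfl, rfl, rfl, rfl⟩ | ⟨rfl, rfl, rfl, rfl⟩ |
    ⟨rfl, rfl, rfl, rfl⟩ <;>
  rcases hek with h | h <;> rcases hel with h' | h' <;> rw [h, h'] <;>
  ext i j <;> fin_cases i <;> fin_cases j <;> simp [Matrix.mul_apply, Fin.sum_univ_two] <;> norm_num

theorem PosData.eps_eq_one_or_neg_one {r : ℕ} {w : ℕ → ℤ} (h : PosData r w jm jp eps) {j : ℕ}
    (hj : 1 ≤ j) (hjr : j ≤ r) : eps j = 1 ∨ eps j = -1 := by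
  rw [(h j hj hjr).2.2.2.2.2]
  split_ifs <;> simp

theorem PosData.wordBlock_mul_inv_mul {r : ℕ} {w : ℕ → ℤ} (h : PosData r w jm jp eps)
    {k l : ℕ} (hk : 1 ≤ k) (hkr : k ≤ r) (hl : 1 ≤ l) (hlr : l ≤ r) (hkl : k ≠ l) :
    wordBlock jm jp eps k l * (wordBlock jm jp eps l l)⁻¹ * wordBlock jm jp eps l k =
      wordBlock jm jp eps k k := by
  obtain ⟨-, hk', -, hwkm, hwkp, -⟩ := h k hk hkr
  obtain ⟨-, hl', -, hwlm, hwlp, -⟩ := h l hl hlr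
  exact _root_.wordBlock_mul_inv_mul hk hl hkl hk' hl'
    (fun he => hkl (hwkm.symm.trans (he ▸ hwlm))) (fun he => hkl (hwkp.symm.trans (he ▸ hwlm)))
    (fun he => hkl (hwkm.symm.trans (he ▸ hwlp))) (fun he => hkl (hwkp.symm.trans (he ▸ hwlp)))
    (h.eps_eq_one_or_neg_one hk hkr) (h.eps_eq_one_or_neg_one hl hlr)

theorem PosData.det_wordBlock_self_ne_zero {r : ℕ} {w : ℕ → ℤ}
    (h : PosData r w jm jp eps) {j : ℕ} (hj : 1 ≤ j) (hjr : j ≤ r) :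
    (wordBlock jm jp eps j j).det ≠ 0 := by
  rw [det_wordBlock_self hj (h j hj hjr).2.1]
  rcases h.eps_eq_one_or_neg_one hj hjr with h | h <;> simp [h]

end CoxeterWord

def cartanMatrix (r : ℕ) (C : ℕ → ℕ → ℤ) : Matrix (Fin r) (Fin r) ℚ :=
  Matrix.of fun p q => (C ((p : ℕ) + 1) ((q : ℕ) + 1) : ℚ)

theorem IsGCM.cartanMatrix_eq_zero_iff {r : ℕ} {C : ℕ → ℕ → ℤ} (hC : IsGCM r C) (i j : Fin r) :
    cartanMatrix r C i j = 0 ↔ cartanMatrix r C j i = 0 := by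
  simpa [cartanMatrix] using hC.2.2 _ _ (by omega) (by omega) (by omega) (by omega)

theorem isAcyclic_supportGraph_cartanMatrix {r : ℕ} {C : ℕ → ℕ → ℤ}
    (h : (coxGraph r C).IsAcyclic) : (supportGraph univ (cartanMatrix r C)).IsAcyclic :=
  let shift : supportGraph univ (cartanMatrix r C) →g coxGraph r C :=
    ⟨fun i => (i : ℕ) + 1, fun {i j} ⟨hij, _, _, hCij⟩ =>
      ⟨by simpa [Fin.val_inj] using hij, by omega, by omega, by omega, by omega,
        by simpa [cartanMatrix] using hCij⟩⟩
  h.comap shift fun i j h => Fin.ext (by simpa [shift] using h)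

theorem stmt_18_general (r : ℕ) (C : ℕ → ℕ → ℤ) (hC : IsGCM r C)
    (hCinv : IsUnit (Matrix.of fun p q : Fin r => (C ((p : ℕ) + 1) ((q : ℕ) + 1) : ℚ)))
    (hforest : (coxGraph r C).IsAcyclic)
    (w : ℕ → ℤ)
    (jm jp : ℕ → ℕ) (eps : ℕ → ℚ) (hpos : PosData r w jm jp eps) :
    IsUnit (Matrix.of fun p q : Fin (2 * r) =>
      Btilde C jm jp eps (iotaI r p) (iotaI r q)) := by
  rw [← isUnit_submatrix_equiv finProdFinEquiv finProdFinEquiv]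
  convert isUnit_blockHadamard (C := cartanMatrix r C)
    (F := fun i j : Fin r => wordBlock jm jp eps (i + 1) (j + 1)) hCinv
    hC.cartanMatrix_eq_zero_iff (isAcyclic_supportGraph_cartanMatrix hforest)
    (fun j => hpos.det_wordBlock_self_ne_zero (by omega) (by omega))
    (fun k l hkl => hpos.wordBlock_mul_inv_mul (by omega) (by omega) (by omega) (by omega)
      (fun h => hkl (Fin.ext (by omega)))) using 1
  ext ⟨s, i⟩ ⟨t, j⟩
  simp only [submatrix_apply, of_apply, iotaI_finProdFinEquiv, Btilde_eq_mul_Btilde_one C,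
    natAbs_signOf_mul, blockHadamard, wordBlock, cartanMatrix]

/-- Corollary 3.11(2): if `C` is invertible over `ℚ` and its Coxeter graph is a forest,
then the `2r × 2r` exchange matrix `B̃_𝐢` of every Coxeter double word has full rank,
i.e. is invertible over `ℚ`. -/
theorem stmt_18 (r : ℕ) (hr : 1 ≤ r) (C : ℕ → ℕ → ℤ) (hC : IsGCM r C)
    (hCinv : IsUnit (Matrix.of fun p q : Fin r => (C ((p : ℕ) + 1) ((q : ℕ) + 1) : ℚ)))
    (hforest : (coxGraph r C).IsAcyclic)
    (w : ℕ → ℤ) (hw : IsCoxWord r w)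
    (jm jp : ℕ → ℕ) (eps : ℕ → ℚ) (hpos : PosData r w jm jp eps) :
    IsUnit (Matrix.of fun p q : Fin (2 * r) =>
      Btilde C jm jp eps (iotaI r p) (iotaI r q)) :=
  stmt_18_general r C hC hCinv hforest w jm jp eps hpos
end
end
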